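/- arXiv:1512.05223 — 3 statements merged into one kernel-verified Lean document; each statement's English description precedes it below -/
import Mathlib

section
/- Let d ≥ 1 be an integer and k a positive integer. If G is a connected signed d*-split graph with n vertices and m edges such that n ≥ 4(d+1)k, then G contains a balanced subgraph with at least m/2 + (n−1)/4 + k/4 edges (this is the combinatorial core of the linear kernel for Signed Max Cut ATLB on d*-split graphs: instances with at least 4(d+1)k vertices are Yes-instances). -/
open SimpleGraph

/-- A signed graph `(G, sign)` is balanced: there is a bipartition (given by `f`)
such that an edge is positive (`sign = true`) iff its endpoints lie in the same part. -/
def IsBalancedSigned {V : Type*} (G : SimpleGraph V) (sign : V → V → Bool) : Prop :=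
  ∃ f : V → Bool, ∀ u v, G.Adj u v → sign u v = (f u == f v)

/-- `beta G sign` : the maximum number of edges of a balanced subgraph of `G`
(subgraphs inherit the signs). -/
noncomputable def beta {V : Type*} (G : SimpleGraph V) (sign : V → V → Bool) : ℕ :=
  sSup {m | ∃ H : SimpleGraph V, H ≤ G ∧ IsBalancedSigned H sign ∧ H.edgeSet.ncard = m}

open Finset
open scoped Classical
set_option linter.unusedSectionVars false
set_option linter.unusedVariables false
set_option linter.unusedTactic false

section Dev
variable {V : Type*} [Fintype V]

private lemma beq_comm' (a b : Bool) : (a == b) = (b == a) := by cases a <;> cases b <;> rfl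

/-- subgraph of edges agreeing with the bipartition f -/
def agG (G : SimpleGraph V) (sign : V → V → Bool) (hsym : ∀ u v, sign u v = sign v u)
    (f : V → Bool) : SimpleGraph V where
  Adj u v := G.Adj u v ∧ sign u v = (f u == f v)
  symm := ⟨fun u v (h : G.Adj u v ∧ sign u v = (f u == f v)) =>
    (⟨h.1.symm, by rw [← hsym u v, h.2, beq_comm']⟩ : G.Adj v u ∧ sign v u = (f v == f u))⟩
  loopless := ⟨fun u (h : G.Adj u u ∧ sign u u = (f u == f u)) => G.irrefl h.1⟩

lemma le_beta (G : SimpleGraph V) (sign : V → V → Bool) (hsym : ∀ u v, sign u v = sign v u)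
    (f : V → Bool) : (agG G sign hsym f).edgeSet.ncard ≤ beta G sign := by
  apply le_csSup
  · refine ⟨Fintype.card (Sym2 V), ?_⟩
    rintro x ⟨H, hle, hbal, rfl⟩
    calc H.edgeSet.ncard ≤ (Set.univ : Set (Sym2 V)).ncard :=
          Set.ncard_le_ncard (Set.subset_univ _) Set.finite_univ
      _ = Fintype.card (Sym2 V) := by rw [Set.ncard_univ, Nat.card_eq_fintype_card]
  · exact ⟨agG G sign hsym f, fun u v h => (show G.Adj u v ∧ _ from h).1,
    ⟨f, fun u v h => (show G.Adj u v ∧ _ from h).2⟩, rfl⟩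

/-- number of ordered agreeing adjacent pairs -/
noncomputable def TT (G : SimpleGraph V) (sign : V → V → Bool) (f : V → Bool) : ℕ :=
  ∑ u : V, ∑ v : V, if G.Adj u v ∧ sign u v = (f u == f v) then 1 else 0

lemma TT_eq (G : SimpleGraph V) (sign : V → V → Bool) (hsym : ∀ u v, sign u v = sign v u)
    (f : V → Bool) : TT G sign f = 2 * (agG G sign hsym f).edgeSet.ncard := by
  have h1 : TT G sign f = ∑ u : V, (agG G sign hsym f).degree u := by
    refine Finset.sum_congr rfl fun u _ => ?_
    rw [SimpleGraph.degree, neighborFinset_eq_filter, Finset.card_filter]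
    exact Finset.sum_congr rfl fun v _ => if_congr (by exact Iff.rfl) rfl rfl
  rw [h1, SimpleGraph.sum_degrees_eq_twice_card_edges]
  congr 1
  rw [Set.ncard_eq_toFinset_card']
  rfl

lemma TT_le_twice_beta (G : SimpleGraph V) (sign : V → V → Bool)
    (hsym : ∀ u v, sign u v = sign v u) (f : V → Bool) :
    TT G sign f ≤ 2 * beta G sign := by
  rw [TT_eq G sign hsym f]
  exact Nat.mul_le_mul_left 2 (le_beta G sign hsym f)

end Dev


set_option linter.unusedSectionVars false
section Dev2
variable {V : Type*} [Fintype V]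

noncomputable def flipg (r : V) (g : V → Bool) : V → Bool := Function.update g r (!g r)

lemma flipg_self (r : V) (g : V → Bool) : flipg r g r = !g r := by
  simp [flipg]

lemma flipg_ne (r x : V) (g : V → Bool) (h : x ≠ r) : flipg r g x = g x := by
  simp [flipg, Function.update_of_ne h]

lemma flipg_invol (r : V) : Function.Involutive (flipg r : (V → Bool) → (V → Bool)) := by
  intro g
  funext x
  by_cases h : x = r
  · subst h; simp [flipg]
  · simp [flipg, Function.update_of_ne h]

lemma sum_flip_ge (t : (V → Bool) → ℤ) (r : V) (c : ℤ)
    (h : ∀ g, c ≤ t (flipg r g) + t g) :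
    (2 ^ Fintype.card V : ℤ) * c ≤ 2 * ∑ g : V → Bool, t g := by
  have h1 : ∑ g : V → Bool, t (flipg r g) = ∑ g : V → Bool, t g :=
    Fintype.sum_bijective _ (flipg_invol r).bijective _ _ (fun g => rfl)
  have h2 : 2 * ∑ g : V → Bool, t g = ∑ g : V → Bool, (t (flipg r g) + t g) := by
    rw [Finset.sum_add_distrib, h1]; ring
  rw [h2]
  calc (2 ^ Fintype.card V : ℤ) * c = ∑ _g : V → Bool, c := by
        rw [Finset.sum_const, nsmul_eq_mul]
        norm_num [Fintype.card_fun]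
    _ ≤ ∑ g : V → Bool, (t (flipg r g) + t g) := Finset.sum_le_sum fun g _ => h g

structure IsMatching (K : Set V) (P : Finset (V × V)) : Prop where
  mem : ∀ p ∈ P, p.1 ∈ K ∧ p.2 ∈ K ∧ p.1 ≠ p.2
  disj : ∀ p ∈ P, ∀ q ∈ P, p ≠ q → p.1 ≠ q.1 ∧ p.1 ≠ q.2 ∧ p.2 ≠ q.1 ∧ p.2 ≠ q.2

namespace IsMatching

variable {K : Set V} {P : Finset (V × V)}

lemma snd_unique (hM : IsMatching K P) {p q : V × V} (hp : p ∈ P) (hq : q ∈ P) (h : p.2 = q.2) : p = q := by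
  by_contra hne
  exact (hM.disj p hp q hq hne).2.2.2 h

lemma fst_unique (hM : IsMatching K P) {p q : V × V} (hp : p ∈ P) (hq : q ∈ P) (h : p.1 = q.1) : p = q := by
  by_contra hne
  exact (hM.disj p hp q hq hne).1 h

lemma fst_ne_snd (hM : IsMatching K P) {p q : V × V} (hp : p ∈ P) (hq : q ∈ P) : p.1 ≠ q.2 := by
  by_cases hne : p = q
  · subst hne; exact (hM.mem p hp).2.2
  · exact (hM.disj p hp q hq hne).2.1

lemma fst_not_snd (hM : IsMatching K P) {p : V × V} (hp : p ∈ P) : ¬∃ q ∈ P, q.2 = p.1 := by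
  rintro ⟨q, hq, hq2⟩
  exact hM.fst_ne_snd hp hq hq2.symm

end IsMatching

def matchedP (P : Finset (V × V)) (x : V) : Prop := ∃ p ∈ P, x = p.1 ∨ x = p.2

noncomputable def fK (sign : V → V → Bool) (P : Finset (V × V)) (g : V → Bool) (x : V) : Bool :=
  if h : ∃ p ∈ P, p.2 = x then
    (if sign h.choose.1 x then g h.choose.1 else !(g h.choose.1))
  else g x

lemma fK_not_snd (sign : V → V → Bool) (P : Finset (V × V)) (g : V → Bool) (x : V)
    (h : ¬∃ p ∈ P, p.2 = x) : fK sign P g x = g x := by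
  simp [fK, h]

lemma fK_snd {K : Set V} {P : Finset (V × V)} (hM : IsMatching K P) (sign : V → V → Bool)
    (g : V → Bool) {a b : V} (hp : (a, b) ∈ P) :
    fK sign P g b = if sign a b then g a else !(g a) := by
  have h : ∃ p ∈ P, p.2 = b := ⟨(a, b), hp, rfl⟩
  have hspec := h.choose_spec
  have : h.choose = (a, b) := hM.snd_unique hspec.1 hp hspec.2
  rw [fK, dif_pos h, this]

lemma fK_flip {K : Set V} {P : Finset (V × V)} (hM : IsMatching K P) (sign : V → V → Bool)
    (g : V → Bool) {r : V} (hr : ¬∃ p ∈ P, p.2 = r) (x : V) :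
    fK sign P (flipg r g) x =
      if (x = r ∨ ∃ p ∈ P, p.1 = r ∧ p.2 = x) then !(fK sign P g x) else fK sign P g x := by
  by_cases hx : ∃ p ∈ P, p.2 = x
  · obtain ⟨q, hq, hq2⟩ := hx
    obtain ⟨a, b⟩ := q
    simp only at hq2
    subst hq2
    have hxr : b ≠ r := fun hh => hr ⟨(a, b), hq, hh⟩
    rw [fK_snd hM sign _ hq, fK_snd hM sign _ hq]
    by_cases har : a = r
    · have hcond : (b = r ∨ ∃ p ∈ P, p.1 = r ∧ p.2 = b) := Or.inr ⟨(a, b), hq, har, rfl⟩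
      rw [if_pos hcond]
      have hfa : flipg r g a = !(g a) := by rw [har]; exact flipg_self r g
      rw [hfa]
      cases hab : sign a b <;> simp
    · have hcond : ¬(b = r ∨ ∃ p ∈ P, p.1 = r ∧ p.2 = b) := by
        rintro (h1 | ⟨p, hpP, hp1, hp2⟩)
        · exact hxr h1
        · have : p = (a, b) := hM.snd_unique hpP hq hp2
          rw [this] at hp1
          exact har hp1
      rw [if_neg hcond, flipg_ne r a g har]
  · rw [fK_not_snd sign P _ x hx, fK_not_snd sign P g x hx]
    by_cases hxr : x = r
    · subst hxr
      rw [if_pos (Or.inl rfl), flipg_self]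
    · have hcond : ¬(x = r ∨ ∃ p ∈ P, p.1 = r ∧ p.2 = x) := by
        rintro (h1 | ⟨p, hpP, hp1, hp2⟩)
        · exact hxr h1
        · exact hx ⟨p, hpP, hp2⟩
      rw [if_neg hcond, flipg_ne r x g hxr]

end Dev2

section Dev3
variable {V : Type*} [Fintype V]

noncomputable def Sv (G : SimpleGraph V) (sign : V → V → Bool) (v : V) (f : V → Bool) : ℤ :=
  ∑ a ∈ G.neighborFinset v, (if sign v a = f a then (1 : ℤ) else -1)

def noncancel (sign : V → V → Bool) (v a b : V) : Prop := ((sign v a == sign v b) = sign a b)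

def Good (G : SimpleGraph V) (sign : V → V → Bool) (P : Finset (V × V)) (v : V) : Prop :=
  (∃ a ∈ G.neighborFinset v, ¬ matchedP P a) ∨
  (∃ p ∈ P, ((p.1 ∈ G.neighborFinset v ∧ p.2 ∉ G.neighborFinset v) ∨
             (p.1 ∉ G.neighborFinset v ∧ p.2 ∈ G.neighborFinset v))) ∨
  (∃ p ∈ P, p.1 ∈ G.neighborFinset v ∧ p.2 ∈ G.neighborFinset v ∧ noncancel sign v p.1 p.2)

private lemma bool_flip_iff (s b : Bool) : (s = !b) ↔ ¬ (s = b) := by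
  cases s <;> cases b <;> simp

private lemma abs_ite_one (c : Prop) [Decidable c] : |(if c then (1:ℤ) else -1)| = 1 := by
  split_ifs <;> simp

lemma Sv_sub (G : SimpleGraph V) (sign : V → V → Bool) (v : V) (f f' : V → Bool) (D : Finset V)
    (h1 : ∀ x ∈ G.neighborFinset v, x ∉ D → f' x = f x)
    (h2 : ∀ x ∈ G.neighborFinset v, x ∈ D → f' x = !(f x)) :
    Sv G sign v f' - Sv G sign v f
      = -2 * ∑ x ∈ G.neighborFinset v ∩ D, (if sign v x = f x then (1:ℤ) else -1) := by
  rw [Sv, Sv, ← Finset.sum_sub_distrib]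
  have key : ∀ x ∈ G.neighborFinset v,
      ((if sign v x = f' x then (1:ℤ) else -1) - (if sign v x = f x then 1 else -1))
      = if x ∈ D then -2 * (if sign v x = f x then (1:ℤ) else -1) else 0 := by
    intro x hx
    by_cases hxD : x ∈ D
    · rw [if_pos hxD, h2 x hx hxD]
      by_cases hc : sign v x = f x
      · rw [if_neg (fun h => ((bool_flip_iff _ _).mp h) hc), if_pos hc]; ring
      · rw [if_pos ((bool_flip_iff _ _).mpr hc), if_neg hc]; ring
    · rw [if_neg hxD, h1 x hx hxD, sub_self]
  rw [Finset.sum_congr rfl key]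
  rw [Finset.sum_ite, Finset.sum_const, smul_zero, add_zero]
  rw [Finset.mul_sum, Finset.filter_mem_eq_inter]

lemma good_sum {K : Set V} {P : Finset (V × V)} (G : SimpleGraph V) (sign : V → V → Bool)
    (hM : IsMatching K P) (v : V) (hGood : Good G sign P v) :
    (2 ^ Fintype.card V : ℤ) * 2 ≤ 2 * ∑ g : V → Bool, |Sv G sign v (fK sign P g)| := by
  suffices hrep : ∃ r, (¬∃ p ∈ P, p.2 = r) ∧
      ∀ g, 2 ≤ |Sv G sign v (fK sign P (flipg r g)) - Sv G sign v (fK sign P g)| by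
    obtain ⟨r, hr, hΔ⟩ := hrep
    apply sum_flip_ge (fun g => |Sv G sign v (fK sign P g)|) r 2
    intro g
    calc (2:ℤ) ≤ |Sv G sign v (fK sign P (flipg r g)) - Sv G sign v (fK sign P g)| := hΔ g
      _ ≤ |Sv G sign v (fK sign P (flipg r g))| + |Sv G sign v (fK sign P g)| := abs_sub _ _
  -- produce the rep r with the flip bound
  rcases hGood with ⟨a, ha, hau⟩ | ⟨p, hp, hcase⟩ | ⟨p, hp, h1, h2, hnc⟩
  · -- clause 1 : unmatched neighbor
    refine ⟨a, ?_, ?_⟩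
    · rintro ⟨p, hpP, hp2⟩; exact hau ⟨p, hpP, Or.inr hp2.symm⟩
    intro g
    have hfirst : ¬∃ p ∈ P, p.1 = a := by
      rintro ⟨p, hpP, hp1⟩; exact hau ⟨p, hpP, Or.inl hp1.symm⟩
    have hrep : ¬∃ p ∈ P, p.2 = a := by
      rintro ⟨p, hpP, hp2⟩; exact hau ⟨p, hpP, Or.inr hp2.symm⟩
    have hD := Sv_sub G sign v (fK sign P g) (fK sign P (flipg a g)) {a}
      (fun x hx hxD => by
        rw [fK_flip hM sign g hrep x, if_neg]
        rintro (h | ⟨p, hpP, hp1, _⟩)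
        · exact hxD (by simp [h])
        · exact hfirst ⟨p, hpP, hp1⟩)
      (fun x hx hxD => by
        have : x = a := by simpa using hxD
        rw [fK_flip hM sign g hrep x, if_pos (Or.inl this)])
    rw [hD]
    have : G.neighborFinset v ∩ {a} = {a} := by
      rw [Finset.inter_eq_right.mpr]; simpa using ha
    rw [this, Finset.sum_singleton, abs_mul, abs_ite_one]
    norm_num
  · -- clause 2 : half pair
    obtain ⟨a, b⟩ := p
    simp only at hcase
    have hrep : ¬∃ q ∈ P, q.2 = a := hM.fst_not_snd hp
    have habne : a ≠ b := (hM.mem _ hp).2.2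
    have hcond : ∀ x, (x = a ∨ ∃ q ∈ P, q.1 = a ∧ q.2 = x) ↔ x ∈ ({a, b} : Finset V) := by
      intro x
      constructor
      · rintro (h | ⟨q, hqP, hq1, hq2⟩)
        · simp [h]
        · have : q = (a, b) := hM.fst_unique hqP hp hq1
          rw [this] at hq2; simp [← hq2]
      · intro hx
        rcases Finset.mem_insert.mp hx with h | h
        · exact Or.inl h
        · exact Or.inr ⟨(a, b), hp, rfl, (Finset.mem_singleton.mp h).symm⟩
    refine ⟨a, hrep, fun g => ?_⟩
    have hD := Sv_sub G sign v (fK sign P g) (fK sign P (flipg a g)) {a, b}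
      (fun x hx hxD => by
        rw [fK_flip hM sign g hrep x, if_neg (fun hc => hxD ((hcond x).mp hc))])
      (fun x hx hxD => by
        rw [fK_flip hM sign g hrep x, if_pos ((hcond x).mpr hxD)])
    rw [hD]
    rcases hcase with ⟨hin, hout⟩ | ⟨hout, hin⟩
    · have : G.neighborFinset v ∩ {a, b} = {a} := by
        ext x; simp only [Finset.mem_inter, Finset.mem_insert, Finset.mem_singleton]
        constructor
        · rintro ⟨hx1, (rfl | rfl)⟩
          · rfl
          · exact absurd hx1 hout
        · rintro rfl; exact ⟨hin, Or.inl rfl⟩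
      rw [this, Finset.sum_singleton, abs_mul, abs_ite_one]; norm_num
    · have : G.neighborFinset v ∩ {a, b} = {b} := by
        ext x; simp only [Finset.mem_inter, Finset.mem_insert, Finset.mem_singleton]
        constructor
        · rintro ⟨hx1, (rfl | rfl)⟩
          · exact absurd hx1 hout
          · rfl
        · rintro rfl; exact ⟨hin, Or.inr rfl⟩
      rw [this, Finset.sum_singleton, abs_mul, abs_ite_one]; norm_num
  · -- clause 3 : full pair, noncancelling
    obtain ⟨a, b⟩ := p
    simp only at h1 h2
    have hrep : ¬∃ q ∈ P, q.2 = a := hM.fst_not_snd hp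
    have habne : a ≠ b := (hM.mem _ hp).2.2
    have hcond : ∀ x, (x = a ∨ ∃ q ∈ P, q.1 = a ∧ q.2 = x) ↔ x ∈ ({a, b} : Finset V) := by
      intro x
      constructor
      · rintro (h | ⟨q, hqP, hq1, hq2⟩)
        · simp [h]
        · have : q = (a, b) := hM.fst_unique hqP hp hq1
          rw [this] at hq2; simp [← hq2]
      · intro hx
        rcases Finset.mem_insert.mp hx with h | h
        · exact Or.inl h
        · exact Or.inr ⟨(a, b), hp, rfl, (Finset.mem_singleton.mp h).symm⟩
    refine ⟨a, hrep, fun g => ?_⟩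
    have hD := Sv_sub G sign v (fK sign P g) (fK sign P (flipg a g)) {a, b}
      (fun x hx hxD => by
        rw [fK_flip hM sign g hrep x, if_neg (fun hc => hxD ((hcond x).mp hc))])
      (fun x hx hxD => by
        rw [fK_flip hM sign g hrep x, if_pos ((hcond x).mpr hxD)])
    rw [hD]
    have hsub : G.neighborFinset v ∩ {a, b} = {a, b} := by
      rw [Finset.inter_eq_right]
      intro x hx
      rcases Finset.mem_insert.mp hx with rfl | hxx
      · exact h1
      · rw [Finset.mem_singleton.mp hxx]; exact h2
    rw [hsub, Finset.sum_pair habne]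
    have heq : (if sign v a = fK sign P g a then (1:ℤ) else -1)
        = (if sign v b = fK sign P g b then (1:ℤ) else -1) := by
      rw [fK_not_snd sign P g a hrep, fK_snd hM sign g hp]
      revert hnc
      unfold noncancel
      cases hsab : sign a b <;> cases hga : g a <;>
        cases hva : sign v a <;> cases hvb : sign v b <;> simp
    rw [← heq]
    rw [abs_mul]
    have : |(if sign v a = fK sign P g a then (1:ℤ) else -1)
        + (if sign v a = fK sign P g a then (1:ℤ) else -1)| = 2 := by
      split_ifs <;> norm_num
    rw [this]
    norm_num
end Dev3


section Dev4
variable {V : Type*} [Fintype V]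

lemma matchedP_insert {P : Finset (V × V)} {a b c : V} (h : matchedP (insert (a, b) P) c) :
    matchedP P c ∨ c = a ∨ c = b := by
  obtain ⟨p, hp, hc⟩ := h
  rcases Finset.mem_insert.mp hp with rfl | hpP
  · rcases hc with h | h
    · exact Or.inr (Or.inl h)
    · exact Or.inr (Or.inr h)
  · exact Or.inl ⟨p, hpP, hc⟩

lemma blocking {K : Set V} {P : Finset (V × V)} (G : SimpleGraph V) (sign : V → V → Bool)
    (hM : IsMatching K P) {a b v : V}
    (hgood : Good G sign P v) (hbad : ¬ Good G sign (insert (a, b) P) v) :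
    a ∈ G.neighborFinset v ∧ b ∈ G.neighborFinset v ∧
      (∀ c ∈ G.neighborFinset v, ¬ matchedP P c → (c = a ∨ c = b)) := by
  have hcl1 : ∀ c ∈ G.neighborFinset v, ¬ matchedP P c → (c = a ∨ c = b) := by
    intro c hc hcu
    by_cases hm' : matchedP (insert (a, b) P) c
    · rcases matchedP_insert hm' with h | h
      · exact absurd h hcu
      · exact h
    · exact absurd (Or.inl ⟨c, hc, hm'⟩) hbad
  have hor : a ∈ G.neighborFinset v ∨ b ∈ G.neighborFinset v := by
    rcases hgood with ⟨c, hc, hcu⟩ | ⟨p, hp, hcase⟩ | ⟨p, hp, h1, h2, hnc⟩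
    · rcases hcl1 c hc hcu with rfl | rfl
      · exact Or.inl hc
      · exact Or.inr hc
    · exact absurd (Or.inr (Or.inl ⟨p, Finset.mem_insert_of_mem hp, hcase⟩)) hbad
    · exact absurd (Or.inr (Or.inr ⟨p, Finset.mem_insert_of_mem hp, h1, h2, hnc⟩)) hbad
  have hnot2 : ¬ ((a ∈ G.neighborFinset v ∧ b ∉ G.neighborFinset v) ∨
      (a ∉ G.neighborFinset v ∧ b ∈ G.neighborFinset v)) := by
    intro hcase
    exact hbad (Or.inr (Or.inl ⟨(a, b), Finset.mem_insert_self _ _, hcase⟩))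
  constructor
  · by_cases ha : a ∈ G.neighborFinset v
    · exact ha
    · rcases hor with h | h
      · exact absurd h ha
      · exact absurd (Or.inr ⟨ha, h⟩) hnot2
  constructor
  · by_cases hb : b ∈ G.neighborFinset v
    · exact hb
    · rcases hor with h | h
      · exact absurd (Or.inl ⟨h, hb⟩) hnot2
      · exact absurd h hb
  · exact hcl1

lemma exists_good_matching (G : SimpleGraph V) (sign : V → V → Bool) (K I : Set V)
    (hnbr : ∀ v ∈ I.toFinset, (G.neighborFinset v).Nonempty)
    (k : ℕ) (hk : 1 ≤ k) (hik : 4 * k ≤ I.toFinset.card) :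
    ∃ P : Finset (V × V), IsMatching K P ∧ (∀ v ∈ I.toFinset, Good G sign P v) ∧
      (K.toFinset.card : ℤ) ≤ 2 * P.card + ((I.toFinset.card : ℤ) - k + 1) := by
  set Kf := K.toFinset
  set If := I.toFinset
  set 𝒮 : Finset (Finset (V × V)) :=
    Finset.univ.filter (fun P => IsMatching K P ∧ ∀ v ∈ If, Good G sign P v) with h𝒮
  have hmemS : ∀ P, P ∈ 𝒮 ↔ (IsMatching K P ∧ ∀ v ∈ If, Good G sign P v) := by
    intro P; simp [h𝒮]
  have hS0 : (∅ : Finset (V × V)) ∈ 𝒮 := by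
    rw [hmemS]
    refine ⟨⟨fun p hp => absurd hp (Finset.notMem_empty p),
            fun p hp => absurd hp (Finset.notMem_empty p)⟩, fun v hv => ?_⟩
    obtain ⟨a, ha⟩ := hnbr v hv
    exact Or.inl ⟨a, ha, fun ⟨p, hp, _⟩ => absurd hp (Finset.notMem_empty p)⟩
  obtain ⟨P, hPS, hPmax⟩ := Finset.exists_max_image 𝒮 Finset.card ⟨∅, hS0⟩
  rw [hmemS] at hPS
  obtain ⟨hM, hGood⟩ := hPS
  refine ⟨P, hM, hGood, ?_⟩
  set Uf := Kf.filter (fun x => ¬ matchedP P x) with hUf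
  -- card identity : Kf.card = 2 * P.card + Uf.card
  have hcardid : Kf.card = 2 * P.card + Uf.card := by
    have hsplit : (Kf.filter (fun x => matchedP P x)).card + Uf.card = Kf.card :=
      Finset.card_filter_add_card_filter_not (fun x => matchedP P x)
    have hMf : Kf.filter (fun x => matchedP P x) = P.image Prod.fst ∪ P.image Prod.snd := by
      ext x
      simp only [Finset.mem_filter, Finset.mem_union, Finset.mem_image]
      constructor
      · rintro ⟨hxK, p, hp, rfl | rfl⟩
        · exact Or.inl ⟨p, hp, rfl⟩
        · exact Or.inr ⟨p, hp, rfl⟩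
      · rintro (⟨p, hp, rfl⟩ | ⟨p, hp, rfl⟩)
        · exact ⟨Set.mem_toFinset.mpr (hM.mem p hp).1, p, hp, Or.inl rfl⟩
        · exact ⟨Set.mem_toFinset.mpr (hM.mem p hp).2.1, p, hp, Or.inr rfl⟩
    have hdisjim : Disjoint (P.image Prod.fst) (P.image Prod.snd) := by
      rw [Finset.disjoint_left]
      rintro x hx1 hx2
      obtain ⟨p, hp, rfl⟩ := Finset.mem_image.mp hx1
      obtain ⟨q, hq, hq2⟩ := Finset.mem_image.mp hx2
      exact hM.fst_ne_snd hp hq hq2.symm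
    have hc1 : (P.image Prod.fst).card = P.card :=
      Finset.card_image_of_injOn (fun p hp q hq h => hM.fst_unique hp hq h)
    have hc2 : (P.image Prod.snd).card = P.card :=
      Finset.card_image_of_injOn (fun p hp q hq h => hM.snd_unique hp hq h)
    rw [hMf, Finset.card_union_of_disjoint hdisjim, hc1, hc2] at hsplit
    omega
  -- main bound : Uf.card ≤ If.card - k + 1
  have hmain : (Uf.card : ℤ) ≤ (If.card : ℤ) - k + 1 := by
    by_contra hcon
    push_neg at hcon
    have hUcard : If.card - k + 2 ≤ Uf.card := by omega
    -- every pair of distinct unmatched vertices is blocked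
    have hblock : ∀ q ∈ Uf.offDiag, ∃ v ∈ If,
        q.1 ∈ G.neighborFinset v ∧ q.2 ∈ G.neighborFinset v ∧
        (∀ c ∈ G.neighborFinset v, c ∈ Uf → (c = q.1 ∨ c = q.2)) := by
      rintro ⟨a, b⟩ hq
      rw [Finset.mem_offDiag] at hq
      obtain ⟨haU, hbU, hab⟩ := hq
      rw [hUf, Finset.mem_filter] at haU hbU
      have hanotP : (a, b) ∉ P := fun h => haU.2 ⟨(a, b), h, Or.inl rfl⟩
      have hM' : IsMatching K (insert (a, b) P) := by
        constructor
        · rintro p hp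
          rcases Finset.mem_insert.mp hp with rfl | hpP
          · exact ⟨Set.mem_toFinset.mp haU.1, Set.mem_toFinset.mp hbU.1, hab⟩
          · exact hM.mem p hpP
        · rintro p hp q hq hne
          rcases Finset.mem_insert.mp hp with rfl | hpP <;>
            rcases Finset.mem_insert.mp hq with rfl | hqP
          · exact absurd rfl hne
          · refine ⟨?_, ?_, ?_, ?_⟩ <;> rintro rfl
            · exact haU.2 ⟨q, hqP, Or.inl rfl⟩
            · exact haU.2 ⟨q, hqP, Or.inr rfl⟩
            · exact hbU.2 ⟨q, hqP, Or.inl rfl⟩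
            · exact hbU.2 ⟨q, hqP, Or.inr rfl⟩
          · refine ⟨?_, ?_, ?_, ?_⟩ <;> rintro rfl
            · exact haU.2 ⟨p, hpP, Or.inl rfl⟩
            · exact hbU.2 ⟨p, hpP, Or.inl rfl⟩
            · exact haU.2 ⟨p, hpP, Or.inr rfl⟩
            · exact hbU.2 ⟨p, hpP, Or.inr rfl⟩
          · exact hM.disj p hpP q hqP hne
      have hP'S : insert (a, b) P ∉ 𝒮 := by
        intro hmem
        have := hPmax _ hmem
        rw [Finset.card_insert_of_notMem hanotP] at this
        omega
      have hbadex : ∃ v ∈ If, ¬ Good G sign (insert (a, b) P) v := by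
        by_contra hall
        push_neg at hall
        exact hP'S ((hmemS _).mpr ⟨hM', hall⟩)
      obtain ⟨v, hvI, hbad⟩ := hbadex
      obtain ⟨h1, h2, h3⟩ := blocking G sign hM (hGood v hvI) hbad
      refine ⟨v, hvI, h1, h2, fun c hc hcU => ?_⟩
      exact h3 c hc (by rw [hUf, Finset.mem_filter] at hcU; exact hcU.2)
    -- choose blockers, get injection with fibers ≤ 2
    set φ : V × V → V := fun q =>
      if h : q ∈ Uf.offDiag then (hblock q h).choose else q.1 with hφ
    have hφspec : ∀ q ∈ Uf.offDiag, φ q ∈ If ∧ q.1 ∈ G.neighborFinset (φ q) ∧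
        q.2 ∈ G.neighborFinset (φ q) ∧
        (∀ c ∈ G.neighborFinset (φ q), c ∈ Uf → (c = q.1 ∨ c = q.2)) := by
      intro q hq
      have hv : φ q = (hblock q hq).choose := by rw [hφ]; exact dif_pos hq
      rw [hv]
      obtain ⟨h1, h2, h3, h4⟩ := (hblock q hq).choose_spec
      exact ⟨h1, h2, h3, h4⟩
    have hfib : ∀ v ∈ Uf.offDiag.image φ, (Uf.offDiag.filter (fun q => φ q = v)).card ≤ 2 := by
      intro v hv
      obtain ⟨q0, hq0mem, hq0v⟩ := Finset.mem_image.mp hv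
      have hsub : Uf.offDiag.filter (fun q => φ q = v) ⊆ {q0, q0.swap} := by
        intro q hq
        rw [Finset.mem_filter] at hq
        obtain ⟨hqmem, hqv⟩ := hq
        obtain ⟨_, hq1, hq2, _⟩ := hφspec q hqmem
        obtain ⟨_, _, _, hq0all⟩ := hφspec q0 hq0mem
        have hU1 : q.1 ∈ Uf := (Finset.mem_offDiag.mp hqmem).1
        have hU2 : q.2 ∈ Uf := (Finset.mem_offDiag.mp hqmem).2.1
        have hne : q.1 ≠ q.2 := (Finset.mem_offDiag.mp hqmem).2.2
        rw [hqv, ← hq0v] at hq1 hq2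
        have e1 := hq0all q.1 hq1 hU1
        have e2 := hq0all q.2 hq2 hU2
        simp only [Finset.mem_insert, Finset.mem_singleton]
        rcases e1 with e1 | e1 <;> rcases e2 with e2 | e2
        · exact absurd (e1.trans e2.symm) hne
        · left; exact Prod.ext e1 e2
        · right; rw [Prod.ext_iff]; exact ⟨e1, e2⟩
        · exact absurd (e1.trans e2.symm) hne
      calc (Uf.offDiag.filter (fun q => φ q = v)).card ≤ ({q0, q0.swap} : Finset (V × V)).card :=
            Finset.card_le_card hsub
        _ ≤ 2 := by
            apply le_trans (Finset.card_insert_le _ _)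
            simp
    have himsub : Uf.offDiag.image φ ⊆ If := by
      intro v hv
      obtain ⟨q, hq, rfl⟩ := Finset.mem_image.mp hv
      exact (hφspec q hq).1
    have hcount : Uf.offDiag.card ≤ 2 * If.card := by
      calc Uf.offDiag.card ≤ 2 * (Uf.offDiag.image φ).card :=
            Finset.card_le_mul_card_image _ 2 hfib
        _ ≤ 2 * If.card := by
            exact Nat.mul_le_mul_left 2 (Finset.card_le_card himsub)
    rw [Finset.offDiag_card] at hcount
    have hU1 : 1 ≤ Uf.card := by omega
    have hq : (Uf.card : ℤ) * Uf.card - Uf.card ≤ 2 * If.card := by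
      have hle : Uf.card ≤ Uf.card * Uf.card := Nat.le_mul_of_pos_left _ (by omega)
      zify [hle] at hcount
      exact hcount
    have hu2 : (If.card : ℤ) - k + 2 ≤ Uf.card := by omega
    have hik' : (4 : ℤ) * k ≤ If.card := by exact_mod_cast hik
    have hk' : (1 : ℤ) ≤ k := by exact_mod_cast hk
    nlinarith [hq, hu2, hik', hk', sq_nonneg ((Uf.card : ℤ) - If.card + k)]
  calc (Kf.card : ℤ) = 2 * P.card + Uf.card := by exact_mod_cast hcardid
    _ ≤ 2 * P.card + ((If.card : ℤ) - k + 1) := by linarith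

end Dev4

section Dev5
variable {V : Type*} [Fintype V]

private lemma beq_not_left (a b : Bool) : ((!a) == b) = !(a == b) := by
  cases a <;> cases b <;> rfl

noncomputable def fixA (G : SimpleGraph V) (sign : V → V → Bool) (I : Set V)
    (P : Finset (V × V)) (g : V → Bool) (x : V) : Bool :=
  if x ∈ I then decide (0 ≤ Sv G sign x (fK sign P g)) else fK sign P g x

lemma fixA_not_I (G : SimpleGraph V) (sign : V → V → Bool) {I : Set V}
    (P : Finset (V × V)) (g : V → Bool) {x : V} (hx : x ∉ I) :
    fixA G sign I P g x = fK sign P g x := if_neg hx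

lemma twice_agreeI (G : SimpleGraph V) (sign : V → V → Bool) (I : Set V)
    (P : Finset (V × V)) (g : V → Bool) (v : V) (hv : v ∈ I)
    (hnbrI : ∀ a ∈ G.neighborFinset v, a ∉ I) :
    2 * (∑ a ∈ G.neighborFinset v,
        (if sign v a = (fixA G sign I P g v == fixA G sign I P g a) then (1:ℤ) else 0))
      = (G.neighborFinset v).card + |Sv G sign v (fK sign P g)| := by
  have hval : fixA G sign I P g v = decide (0 ≤ Sv G sign v (fK sign P g)) := if_pos hv
  rw [Finset.mul_sum]
  by_cases h0 : 0 ≤ Sv G sign v (fK sign P g)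
  · rw [abs_of_nonneg h0]
    have key : ∀ a ∈ G.neighborFinset v,
        2 * (if sign v a = (fixA G sign I P g v == fixA G sign I P g a) then (1:ℤ) else 0)
        = 1 + (if sign v a = fK sign P g a then (1:ℤ) else -1) := by
      intro a ha
      rw [hval, decide_eq_true h0, fixA_not_I G sign P g (hnbrI a ha)]
      have : (true == fK sign P g a) = fK sign P g a := by cases fK sign P g a <;> rfl
      rw [this]
      split_ifs <;> norm_num
    rw [Finset.sum_congr rfl key, Finset.sum_add_distrib, Finset.sum_const, nsmul_eq_mul,
      mul_one, Sv]
  · rw [abs_of_neg (lt_of_not_ge h0)]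
    have key : ∀ a ∈ G.neighborFinset v,
        2 * (if sign v a = (fixA G sign I P g v == fixA G sign I P g a) then (1:ℤ) else 0)
        = 1 - (if sign v a = fK sign P g a then (1:ℤ) else -1) := by
      intro a ha
      rw [hval, decide_eq_false h0, fixA_not_I G sign P g (hnbrI a ha)]
      have : (false == fK sign P g a) = !(fK sign P g a) := by cases fK sign P g a <;> rfl
      rw [this]
      by_cases hc : sign v a = fK sign P g a
      · rw [if_neg (fun h => ((bool_flip_iff _ _).mp h) hc), if_pos hc]; ring
      · rw [if_pos ((bool_flip_iff _ _).mpr hc), if_neg hc]; ring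
    rw [Finset.sum_congr rfl key, Finset.sum_sub_distrib, Finset.sum_const, nsmul_eq_mul,
      mul_one, Sv]
    ring

noncomputable def ctrl (P : Finset (V × V)) (x : V) : V :=
  if h : ∃ p ∈ P, p.2 = x then h.choose.1 else x

lemma ctrl_rep {K : Set V} {P : Finset (V × V)} (hM : IsMatching K P) (x : V) :
    ¬∃ p ∈ P, p.2 = ctrl P x := by
  by_cases h : ∃ p ∈ P, p.2 = x
  · rw [ctrl, dif_pos h]
    exact hM.fst_not_snd h.choose_spec.1
  · rw [ctrl, dif_neg h]; exact h

lemma fK_flip_ctrl_self {K : Set V} {P : Finset (V × V)} (hM : IsMatching K P)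
    (sign : V → V → Bool) (g : V → Bool) (u : V) :
    fK sign P (flipg (ctrl P u) g) u = !(fK sign P g u) := by
  rw [fK_flip hM sign g (ctrl_rep hM u) u, if_pos]
  by_cases h : ∃ p ∈ P, p.2 = u
  · exact Or.inr ⟨h.choose, h.choose_spec.1, by rw [ctrl, dif_pos h], h.choose_spec.2⟩
  · exact Or.inl (by rw [ctrl, dif_neg h])

lemma fK_flip_ctrl_other {K : Set V} {P : Finset (V × V)} (hM : IsMatching K P)
    (sign : V → V → Bool) (g : V → Bool) {u v : V} (huv : u ≠ v)
    (hnp : ¬((u, v) ∈ P ∨ (v, u) ∈ P)) :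
    fK sign P (flipg (ctrl P u) g) v = fK sign P g v := by
  rw [fK_flip hM sign g (ctrl_rep hM u) v, if_neg]
  rintro (hvr | ⟨p, hp, hp1, hp2⟩)
  · by_cases h : ∃ q ∈ P, q.2 = u
    · rw [ctrl, dif_pos h] at hvr
      have hq := h.choose_spec
      have : h.choose = (v, u) := Prod.ext hvr.symm hq.2
      exact hnp (Or.inr (this ▸ hq.1))
    · rw [ctrl, dif_neg h] at hvr
      exact huv hvr.symm
  · by_cases h : ∃ q ∈ P, q.2 = u
    · rw [ctrl, dif_pos h] at hp1
      have hq := h.choose_spec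
      have hpq : p = h.choose := hM.fst_unique hp hq.1 hp1
      rw [hpq] at hp2
      rw [hq.2] at hp2
      exact huv hp2
    · rw [ctrl, dif_neg h] at hp1
      have : p = (u, v) := Prod.ext hp1 hp2
      exact hnp (Or.inl (this ▸ hp))

lemma pair_agree {K : Set V} {P : Finset (V × V)} (hM : IsMatching K P)
    (sign : V → V → Bool) (g : V → Bool) {a b : V} (hp : (a, b) ∈ P) :
    sign a b = (fK sign P g a == fK sign P g b) := by
  rw [fK_not_snd sign P g a (hM.fst_not_snd hp), fK_snd hM sign g hp]
  cases hs : sign a b <;> cases g a <;> rfl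

lemma sum_split (G : SimpleGraph V) (K I : Set V) (hcover : K ∪ I = Set.univ)
    (hdisj : Disjoint K I)
    (hnbrK : ∀ v ∈ I, ∀ a ∈ G.neighborFinset v, a ∈ K)
    (w : V → V → ℤ) (hw0 : ∀ u v, ¬ G.Adj u v → w u v = 0)
    (hwsym : ∀ u v, w u v = w v u) :
    ∑ u : V, ∑ v : V, w u v
      = (∑ q ∈ K.toFinset ×ˢ K.toFinset, w q.1 q.2)
        + 2 * ∑ v ∈ I.toFinset, ∑ a ∈ G.neighborFinset v, w v a := by
  have huniv : K.toFinset ∪ I.toFinset = Finset.univ := by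
    ext x
    have hx : x ∈ K ∪ I := by rw [hcover]; trivial
    simp only [Finset.mem_union, Set.mem_toFinset, Finset.mem_univ, iff_true]
    exact hx
  have hdisjF : Disjoint K.toFinset I.toFinset := by
    rwa [Set.disjoint_toFinset]
  have hinner : ∀ u : V, ∑ v : V, w u v = (∑ v ∈ K.toFinset, w u v) + ∑ v ∈ I.toFinset, w u v := by
    intro u
    rw [← Finset.sum_union hdisjF, huniv]
  have houter : ∑ u : V, ∑ v : V, w u v
      = ((∑ u ∈ K.toFinset, ∑ v ∈ K.toFinset, w u v) + ∑ u ∈ K.toFinset, ∑ v ∈ I.toFinset, w u v)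
        + ((∑ u ∈ I.toFinset, ∑ v ∈ K.toFinset, w u v) + ∑ u ∈ I.toFinset, ∑ v ∈ I.toFinset, w u v) := by
    rw [← Finset.sum_add_distrib, ← Finset.sum_add_distrib, ← Finset.sum_union hdisjF, huniv]
    exact Finset.sum_congr rfl fun u _ => hinner u
  rw [houter]
  have hII : ∑ u ∈ I.toFinset, ∑ v ∈ I.toFinset, w u v = 0 := by
    apply Finset.sum_eq_zero
    intro u hu
    apply Finset.sum_eq_zero
    intro v hv
    apply hw0
    intro hadj
    have : v ∈ K := hnbrK u (Set.mem_toFinset.mp hu) v ((G.mem_neighborFinset u v).mpr hadj)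
    exact (Set.disjoint_left.mp hdisj this) (Set.mem_toFinset.mp hv)
  have hIK : ∀ u ∈ I.toFinset, ∑ v ∈ K.toFinset, w u v = ∑ a ∈ G.neighborFinset u, w u a := by
    intro u hu
    symm
    apply Finset.sum_subset
    · intro a ha
      exact Set.mem_toFinset.mpr (hnbrK u (Set.mem_toFinset.mp hu) a ha)
    · intro a _ ha
      exact hw0 u a (fun hadj => ha ((G.mem_neighborFinset u a).mpr hadj))
  have hKI : ∑ u ∈ K.toFinset, ∑ v ∈ I.toFinset, w u v
      = ∑ u ∈ I.toFinset, ∑ v ∈ K.toFinset, w u v := by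
    rw [Finset.sum_comm]
    exact Finset.sum_congr rfl fun u _ => Finset.sum_congr rfl fun v _ => hwsym v u
  rw [hII, hKI, Finset.sum_product, Finset.sum_congr rfl hIK]
  ring

lemma ordered_count (G : SimpleGraph V) :
    ∑ u : V, ∑ v : V, (if G.Adj u v then (1:ℤ) else 0) = 2 * (G.edgeSet.ncard : ℤ) := by
  have h1 : ∀ u : V, ∑ v : V, (if G.Adj u v then (1:ℤ) else 0) = (G.degree u : ℤ) := by
    intro u
    rw [Finset.sum_boole, SimpleGraph.degree, neighborFinset_eq_filter]
  rw [Finset.sum_congr rfl fun u _ => h1 u]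
  rw [← Nat.cast_sum, SimpleGraph.sum_degrees_eq_twice_card_edges]
  rw [Set.ncard_eq_toFinset_card']
  have h2 : G.edgeSet.toFinset = G.edgeFinset := rfl
  rw [h2]
  push_cast
  ring

end Dev5

section Dev6
variable {V : Type*} [Fintype V]

lemma card_fun_bool : (Finset.univ : Finset (V → Bool)).card = 2 ^ Fintype.card V := by
  rw [Finset.card_univ, Fintype.card_fun, Fintype.card_bool]

lemma master (G : SimpleGraph V) (sign : V → V → Bool) (hsym : ∀ u v, sign u v = sign v u)
    (K I : Set V) (hcover : K ∪ I = Set.univ) (hdisj : Disjoint K I)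
    (hK : G.IsClique K)
    (hnbrK : ∀ v ∈ I, ∀ a ∈ G.neighborFinset v, a ∈ K)
    (P : Finset (V × V)) (hM : IsMatching K P)
    (hGood : ∀ v ∈ I.toFinset, Good G sign P v) :
    ∃ f : V → Bool,
      2 * (G.edgeSet.ncard : ℤ) + 2 * P.card + 2 * I.toFinset.card
        ≤ 2 * ∑ u : V, ∑ v : V,
            (if G.Adj u v ∧ sign u v = (f u == f v) then (1:ℤ) else 0) := by
  set n := Fintype.card V with hn
  set Kf := K.toFinset with hKf
  set If := I.toFinset with hIf
  set W : (V → Bool) → ℤ := fun g => ∑ u : V, ∑ v : V,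
      (if G.Adj u v ∧ sign u v = (fixA G sign I P g u == fixA G sign I P g v) then (1:ℤ) else 0)
    with hW
  have hnotI : ∀ x ∈ K, x ∉ I := fun x hx => Set.disjoint_left.mp hdisj hx
  have hnbrI : ∀ v ∈ I, ∀ a ∈ G.neighborFinset v, a ∉ I :=
    fun v hv a ha => hnotI a (hnbrK v hv a ha)
  -- Step A : decomposition of W g
  have hsplitW : ∀ g, W g
      = (∑ q ∈ Kf ×ˢ Kf, (if G.Adj q.1 q.2 ∧ sign q.1 q.2
            = (fK sign P g q.1 == fK sign P g q.2) then (1:ℤ) else 0))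
        + 2 * ∑ v ∈ If, ∑ a ∈ G.neighborFinset v,
            (if sign v a = (fixA G sign I P g v == fixA G sign I P g a) then (1:ℤ) else 0) := by
    intro g
    have hwsym : ∀ u v : V,
        (if G.Adj u v ∧ sign u v = (fixA G sign I P g u == fixA G sign I P g v) then (1:ℤ) else 0)
        = (if G.Adj v u ∧ sign v u = (fixA G sign I P g v == fixA G sign I P g u) then (1:ℤ) else 0) := by
      intro u v
      have hiff : (G.Adj u v ∧ sign u v = (fixA G sign I P g u == fixA G sign I P g v))
          ↔ (G.Adj v u ∧ sign v u = (fixA G sign I P g v == fixA G sign I P g u)) := by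
        rw [hsym u v, beq_comm' (fixA G sign I P g u) (fixA G sign I P g v), G.adj_comm]
      exact if_congr hiff rfl rfl
    simp only [hW]
    rw [sum_split G K I hcover hdisj hnbrK _
      (fun u v h => if_neg (fun hc => h hc.1)) hwsym]
    congr 1
    · apply Finset.sum_congr rfl
      rintro ⟨u, v⟩ hq
      rw [Finset.mem_product] at hq
      rw [fixA_not_I G sign P g (hnotI u (Set.mem_toFinset.mp hq.1)),
        fixA_not_I G sign P g (hnotI v (Set.mem_toFinset.mp hq.2))]
    · congr 1
      apply Finset.sum_congr rfl
      intro v _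
      apply Finset.sum_congr rfl
      intro a ha
      have hadj : G.Adj v a := (G.mem_neighborFinset v a).mp ha
      simp only [hadj, true_and]
  -- Step B : clique sum bound
  set PP : Finset (V × V) := P ∪ P.image Prod.swap with hPP
  set mA : ℕ := ((Kf ×ˢ Kf).filter (fun q => G.Adj q.1 q.2)).card with hmA
  have hPPsub : PP ⊆ (Kf ×ˢ Kf).filter (fun q => G.Adj q.1 q.2) := by
    intro q hq
    rw [hPP, Finset.mem_union] at hq
    rw [Finset.mem_filter, Finset.mem_product]
    rcases hq with hq | hq
    · obtain ⟨h1, h2, h3⟩ := hM.mem q hq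
      exact ⟨⟨Set.mem_toFinset.mpr h1, Set.mem_toFinset.mpr h2⟩, hK h1 h2 h3⟩
    · obtain ⟨p, hp, rfl⟩ := Finset.mem_image.mp hq
      obtain ⟨h1, h2, h3⟩ := hM.mem p hp
      exact ⟨⟨Set.mem_toFinset.mpr h2, Set.mem_toFinset.mpr h1⟩, (hK h1 h2 h3).symm⟩
  have hPPcard : PP.card = 2 * P.card := by
    rw [hPP, Finset.card_union_of_disjoint, Finset.card_image_of_injective _ Prod.swap_injective]
    · ring
    · rw [Finset.disjoint_left]
      rintro q hq1 hq2
      obtain ⟨p, hp, hps⟩ := Finset.mem_image.mp hq2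
      have : q.1 = p.2 := by rw [← hps, Prod.fst_swap]
      exact hM.fst_ne_snd hq1 hp this
  have hBstep : (2:ℤ) ^ n * (mA + 2 * P.card)
      ≤ 2 * ∑ g : V → Bool, ∑ q ∈ Kf ×ˢ Kf, (if G.Adj q.1 q.2 ∧ sign q.1 q.2
          = (fK sign P g q.1 == fK sign P g q.2) then (1:ℤ) else 0) := by
    rw [Finset.sum_comm, Finset.mul_sum]
    have hlb : ∀ q ∈ Kf ×ˢ Kf,
        ((if G.Adj q.1 q.2 then ((2:ℤ) ^ n) else 0) + (if q ∈ PP then ((2:ℤ) ^ n) else 0))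
        ≤ 2 * ∑ g : V → Bool, (if G.Adj q.1 q.2 ∧ sign q.1 q.2
            = (fK sign P g q.1 == fK sign P g q.2) then (1:ℤ) else 0) := by
      rintro ⟨u, v⟩ _
      by_cases hqPP : (u, v) ∈ PP
      · have hadj : G.Adj u v := (Finset.mem_filter.mp (hPPsub hqPP)).2
        have hone : ∀ g : V → Bool, (if G.Adj u v ∧ sign u v
            = (fK sign P g u == fK sign P g v) then (1:ℤ) else 0) = 1 := by
          intro g
          rw [if_pos]
          refine ⟨hadj, ?_⟩
          rw [hPP, Finset.mem_union] at hqPP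
          rcases hqPP with hq | hq
          · exact pair_agree hM sign g hq
          · obtain ⟨p, hp, hps⟩ := Finset.mem_image.mp hq
            obtain ⟨a, b⟩ := p
            rw [Prod.swap_prod_mk] at hps
            injection hps with h1 h2
            subst h1; subst h2
            rw [hsym b a, beq_comm']
            exact pair_agree hM sign g hp
        rw [Finset.sum_congr rfl (fun g _ => hone g), Finset.sum_const, card_fun_bool,
          nsmul_eq_mul, mul_one, if_pos hadj, if_pos ((hPP ▸ hqPP))]
        push_cast
        ring_nf
        rfl
      · rw [if_neg hqPP, add_zero]
        by_cases hadj : G.Adj u v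
        · rw [if_pos hadj]
          have := sum_flip_ge (fun g => (if G.Adj u v ∧ sign u v
              = (fK sign P g u == fK sign P g v) then (1:ℤ) else 0)) (ctrl P u) 1 ?_
          · calc ((2:ℤ) ^ n) = 2 ^ n * 1 := by ring
              _ ≤ _ := this
          intro g
          show (1:ℤ) ≤ (if G.Adj u v ∧ sign u v = (fK sign P (flipg (ctrl P u) g) u
              == fK sign P (flipg (ctrl P u) g) v) then (1:ℤ) else 0)
            + (if G.Adj u v ∧ sign u v = (fK sign P g u == fK sign P g v) then (1:ℤ) else 0)
          have hnp : ¬((u, v) ∈ P ∨ (v, u) ∈ P) := by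
            rintro (h | h)
            · exact hqPP (hPP ▸ Finset.mem_union_left _ h)
            · refine hqPP (hPP ▸ Finset.mem_union_right _ ?_)
              exact Finset.mem_image.mpr ⟨(v, u), h, rfl⟩
          have h1 : fK sign P (flipg (ctrl P u) g) u = !(fK sign P g u) :=
            fK_flip_ctrl_self hM sign g u
          have h2 : fK sign P (flipg (ctrl P u) g) v = fK sign P g v :=
            fK_flip_ctrl_other hM sign g hadj.ne hnp
          rw [h1, h2, beq_not_left]
          by_cases hc : sign u v = (fK sign P g u == fK sign P g v)
          · rw [if_neg (fun hcc => ((bool_flip_iff _ _).mp hcc.2) hc), if_pos ⟨hadj, hc⟩]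
            norm_num
          · rw [if_pos ⟨hadj, (bool_flip_iff _ _).mpr hc⟩, if_neg (fun hcc => hc hcc.2)]
            norm_num
        · rw [if_neg hadj]
          have : ∀ g : V → Bool, (if G.Adj u v ∧ sign u v
              = (fK sign P g u == fK sign P g v) then (1:ℤ) else 0) = 0 :=
            fun g => if_neg (fun hc => hadj hc.1)
          rw [Finset.sum_congr rfl fun g _ => this g, Finset.sum_const, smul_zero]
          norm_num
    calc ((2:ℤ) ^ n) * (mA + 2 * P.card)
        = ∑ q ∈ Kf ×ˢ Kf, ((if G.Adj q.1 q.2 then ((2:ℤ) ^ n) else 0)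
            + (if q ∈ PP then ((2:ℤ) ^ n) else 0)) := by
          rw [Finset.sum_add_distrib]
          rw [← Finset.sum_filter, ← Finset.sum_filter]
          rw [Finset.sum_const, Finset.sum_const]
          rw [Finset.filter_mem_eq_inter, Finset.inter_eq_right.mpr
            (hPPsub.trans (Finset.filter_subset _ _))]
          rw [hPPcard]
          push_cast
          ring
      _ ≤ _ := Finset.sum_le_sum hlb
  -- Step C : independent-side bound
  have hCstep : ∀ v ∈ If, (2:ℤ) ^ n * ((G.neighborFinset v).card + 1)
      ≤ 2 * ∑ g : V → Bool, ∑ a ∈ G.neighborFinset v,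
          (if sign v a = (fixA G sign I P g v == fixA G sign I P g a) then (1:ℤ) else 0) := by
    intro v hv
    have hvI : v ∈ I := Set.mem_toFinset.mp hv
    have h1 : ∀ g : V → Bool, 2 * ∑ a ∈ G.neighborFinset v,
        (if sign v a = (fixA G sign I P g v == fixA G sign I P g a) then (1:ℤ) else 0)
        = (G.neighborFinset v).card + |Sv G sign v (fK sign P g)| :=
      fun g => twice_agreeI G sign I P g v hvI (hnbrI v hvI)
    have h2 : (2:ℤ) ^ n ≤ ∑ g : V → Bool, |Sv G sign v (fK sign P g)| := by
      have := good_sum G sign hM v (hGood v hv)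
      linarith
    calc (2:ℤ) ^ n * ((G.neighborFinset v).card + 1)
        = (2:ℤ) ^ n * (G.neighborFinset v).card + 2 ^ n * 1 := by ring
      _ ≤ ∑ _g : V → Bool, ((G.neighborFinset v).card : ℤ)
          + ∑ g : V → Bool, |Sv G sign v (fK sign P g)| := by
          rw [Finset.sum_const, card_fun_bool, nsmul_eq_mul]
          push_cast
          linarith
      _ = ∑ g : V → Bool, (((G.neighborFinset v).card : ℤ)
          + |Sv G sign v (fK sign P g)|) := by rw [Finset.sum_add_distrib]
      _ = 2 * ∑ g : V → Bool, ∑ a ∈ G.neighborFinset v,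
          (if sign v a = (fixA G sign I P g v == fixA G sign I P g a) then (1:ℤ) else 0) := by
          rw [Finset.mul_sum]
          exact (Finset.sum_congr rfl fun g _ => (h1 g)).symm
  -- Step E : edge count decomposition
  have hEstep : 2 * (G.edgeSet.ncard : ℤ)
      = (mA : ℤ) + 2 * ∑ v ∈ If, ((G.neighborFinset v).card : ℤ) := by
    rw [← ordered_count G]
    rw [sum_split G K I hcover hdisj hnbrK _
      (fun u v h => if_neg h)
      (fun u v => if_congr (G.adj_comm u v) rfl rfl)]
    congr 1
    · rw [hmA]
      rw [← Finset.sum_filter]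
      rw [Finset.sum_const, nsmul_eq_mul, mul_one]
    · congr 1
      apply Finset.sum_congr rfl
      intro v _
      rw [Finset.sum_congr rfl (fun a ha => if_pos ((G.mem_neighborFinset v a).mp ha)),
        Finset.sum_const, nsmul_eq_mul, mul_one]
  -- Step F : averaging
  set c : ℤ := 2 * (G.edgeSet.ncard : ℤ) + 2 * P.card + 2 * If.card with hc
  have htotal : (2:ℤ) ^ n * c ≤ ∑ g : V → Bool, 2 * W g := by
    have hWsum : ∑ g : V → Bool, 2 * W g
        = (2 * ∑ g : V → Bool, ∑ q ∈ Kf ×ˢ Kf, (if G.Adj q.1 q.2 ∧ sign q.1 q.2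
            = (fK sign P g q.1 == fK sign P g q.2) then (1:ℤ) else 0))
          + 2 * ∑ v ∈ If, (2 * ∑ g : V → Bool, ∑ a ∈ G.neighborFinset v,
            (if sign v a = (fixA G sign I P g v == fixA G sign I P g a) then (1:ℤ) else 0)) := by
      rw [Finset.sum_congr rfl (fun g _ => by rw [hsplitW g, mul_add])]
      rw [Finset.sum_add_distrib, ← Finset.mul_sum, ← Finset.mul_sum]
      congr 1
      rw [← Finset.mul_sum, ← Finset.mul_sum, Finset.sum_comm]
    rw [hWsum]
    have hCsum : (2:ℤ) ^ n * (∑ v ∈ If, (((G.neighborFinset v).card : ℤ) + 1))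
        ≤ ∑ v ∈ If, (2 * ∑ g : V → Bool, ∑ a ∈ G.neighborFinset v,
            (if sign v a = (fixA G sign I P g v == fixA G sign I P g a) then (1:ℤ) else 0)) := by
      rw [Finset.mul_sum]
      exact Finset.sum_le_sum hCstep
    have hexp : c = (mA + 2 * P.card) + 2 * (∑ v ∈ If, (((G.neighborFinset v).card : ℤ) + 1)) := by
      rw [hc, hEstep]
      rw [Finset.sum_add_distrib, Finset.sum_const, nsmul_eq_mul, mul_one]
      push_cast
      ring
    rw [hexp]
    calc (2:ℤ) ^ n * ((mA + 2 * P.card) + 2 * (∑ v ∈ If, (((G.neighborFinset v).card : ℤ) + 1)))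
        = (2:ℤ) ^ n * (mA + 2 * P.card)
          + 2 * ((2:ℤ) ^ n * (∑ v ∈ If, (((G.neighborFinset v).card : ℤ) + 1))) := by ring
      _ ≤ _ := by
          apply add_le_add hBstep
          linarith
  have hnonempty : (Finset.univ : Finset (V → Bool)).Nonempty := ⟨fun _ => true, Finset.mem_univ _⟩
  have hsum_const : ∑ _g : V → Bool, c = (2:ℤ) ^ n * c := by
    rw [Finset.sum_const, card_fun_bool, nsmul_eq_mul]
    push_cast
    ring
  obtain ⟨g₀, _, hg₀⟩ := Finset.exists_le_of_sum_le (f := fun _ => c)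
    (g := fun g => 2 * W g) hnonempty (by rw [hsum_const]; exact htotal)
  exact ⟨fixA G sign I P g₀, hg₀⟩

end Dev6


/-- If `G` is a connected signed `d*`-split graph (witnessed by a clique `K`
and an independent set `I`) with `n ≥ 4(d+1)k` vertices, where `d ≥ 1` and `k ≥ 1`,
then `G` has a balanced subgraph with at least `m/2 + (n-1)/4 + k/4` edges. -/
theorem stmt0 {V : Type*} [Fintype V] (G : SimpleGraph V) (sign : V → V → Bool)
    (hsym : ∀ u v, sign u v = sign v u)
    (d k : ℕ) (hd : 1 ≤ d) (hk : 1 ≤ k)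
    (hconn : G.Connected)
    (K I : Set V) (hcover : K ∪ I = Set.univ) (hdisj : Disjoint K I)
    (hK : G.IsClique K)
    (hI : ∀ u ∈ I, ∀ v ∈ I, ¬ G.Adj u v)
    (hKnbr : ∀ v ∈ K, ∃ u ∈ I, G.Adj v u)
    (hIdeg : ∀ v ∈ I, (G.neighborSet v).ncard ≤ d)
    (hn : 4 * (d + 1) * k ≤ Fintype.card V) :
    (G.edgeSet.ncard : ℚ) / 2 + ((Fintype.card V : ℚ) - 1) / 4 + (k : ℚ) / 4
      ≤ (beta G sign : ℚ) := by
  classical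
  have hn8 : 8 ≤ Fintype.card V := by
    have : 8 ≤ 4 * (d + 1) * k := by nlinarith
    omega
  have hnbrK : ∀ v ∈ I, ∀ a ∈ G.neighborFinset v, a ∈ K := by
    intro v hv a ha
    have hadj : G.Adj v a := (G.mem_neighborFinset v a).mp ha
    have haKI : a ∈ K ∪ I := by rw [hcover]; trivial
    rcases haKI with h | h
    · exact h
    · exact absurd hadj (hI v hv a h)
  have hnbrNe : ∀ v ∈ I.toFinset, (G.neighborFinset v).Nonempty := by
    intro v _
    have h2 : 1 < Fintype.card V := by omega
    obtain ⟨w, hw⟩ := Fintype.exists_ne_of_one_lt_card h2 v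
    obtain ⟨p⟩ := hconn.preconnected v w
    cases p with
    | nil => exact absurd rfl hw
    | cons h _ => exact ⟨_, (G.mem_neighborFinset _ _).mpr h⟩
  have hdeg : ∀ v ∈ I, (G.neighborFinset v).card ≤ d := by
    intro v hv
    have := hIdeg v hv
    rwa [Set.ncard_eq_toFinset_card'] at this
  have hKI : K.toFinset.card ≤ d * I.toFinset.card := by
    set ψ : V → V := fun a => if h : ∃ u, u ∈ I ∧ G.Adj a u then h.choose else a with hψ
    have hψspec : ∀ a ∈ K.toFinset, ψ a ∈ I ∧ G.Adj a (ψ a) := by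
      intro a ha
      have h : ∃ u, u ∈ I ∧ G.Adj a u := by
        obtain ⟨u, hu1, hu2⟩ := hKnbr a (Set.mem_toFinset.mp ha)
        exact ⟨u, hu1, hu2⟩
      rw [hψ]
      simp only [dif_pos h]
      exact h.choose_spec
    have hfib : ∀ b ∈ K.toFinset.image ψ, (K.toFinset.filter (fun a => ψ a = b)).card ≤ d := by
      intro b hb
      obtain ⟨a0, ha0, rfl⟩ := Finset.mem_image.mp hb
      have hbI : ψ a0 ∈ I := (hψspec a0 ha0).1
      have hsub : K.toFinset.filter (fun a => ψ a = ψ a0) ⊆ G.neighborFinset (ψ a0) := by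
        intro a ha
        rw [Finset.mem_filter] at ha
        have := (hψspec a ha.1).2
        rw [ha.2] at this
        exact (G.mem_neighborFinset _ _).mpr this.symm
      exact le_trans (Finset.card_le_card hsub) (hdeg _ hbI)
    calc K.toFinset.card ≤ d * (K.toFinset.image ψ).card :=
          Finset.card_le_mul_card_image _ d hfib
      _ ≤ d * I.toFinset.card := by
          apply Nat.mul_le_mul_left
          apply Finset.card_le_card
          intro b hb
          obtain ⟨a, ha, rfl⟩ := Finset.mem_image.mp hb
          exact Set.mem_toFinset.mpr (hψspec a ha).1
  have hcardsum : K.toFinset.card + I.toFinset.card = Fintype.card V := by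
    have huniv : K.toFinset ∪ I.toFinset = Finset.univ := by
      ext x
      have hx : x ∈ K ∪ I := by rw [hcover]; trivial
      simp only [Finset.mem_union, Set.mem_toFinset, Finset.mem_univ, iff_true]
      exact hx
    rw [← Finset.card_union_of_disjoint (Set.disjoint_toFinset.mpr hdisj), huniv,
      Finset.card_univ]
  have hι : 4 * k ≤ I.toFinset.card := by
    have h1 : (d + 1) * (4 * k) ≤ (d + 1) * I.toFinset.card := by nlinarith
    exact Nat.le_of_mul_le_mul_left h1 (by omega)
  obtain ⟨P, hM, hGoodAll, hPbound⟩ := exists_good_matching G sign K I hnbrNe k hk hι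
  obtain ⟨f, hf⟩ := master G sign hsym K I hcover hdisj hK hnbrK P hM hGoodAll
  have hTT : TT G sign f ≤ 2 * beta G sign := TT_le_twice_beta G sign hsym f
  have hcast : ∑ u : V, ∑ v : V, (if G.Adj u v ∧ sign u v = (f u == f v) then (1:ℤ) else 0)
      = (TT G sign f : ℤ) := by
    rw [TT]
    push_cast
    apply Finset.sum_congr rfl
    intro u _
    apply Finset.sum_congr rfl
    intro v _
    split_ifs <;> norm_num
  have hfinal : 2 * (G.edgeSet.ncard : ℤ) + (Fintype.card V : ℤ) + k - 1
      ≤ 4 * (beta G sign : ℤ) := by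
    rw [hcast] at hf
    have h2 : (TT G sign f : ℤ) ≤ 2 * (beta G sign : ℤ) := by exact_mod_cast hTT
    have h4 : (K.toFinset.card : ℤ) + I.toFinset.card = Fintype.card V := by
      exact_mod_cast hcardsum
    linarith [hPbound, hf, h2, h4]
  have hQ : 2 * (G.edgeSet.ncard : ℚ) + (Fintype.card V : ℚ) + k - 1
      ≤ 4 * (beta G sign : ℚ) := by exact_mod_cast hfinal
  linarith
end

section
/- Let d ≥ 1 and k ≥ 1 be integers, and let G be a connected signed d*-split graph with n vertices and m edges, with a partition of V(G) into a clique K and an independent set I witnessing the d*-split property. If |K| ≥ (d+1)k, then G contains a balanced subgraph with at least m/2 + (n−1)/4 + k/4 edges. -/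
set_option linter.unusedSectionVars false

open Finset

section Infra

variable {V : Type*} [Fintype V] [DecidableEq V]

def cpairs (p : V → V → Prop) [DecidableRel p] (S : Finset V) : ℕ :=
  ∑ a ∈ S, (S.filter fun y => p a y).card

theorem cpairs_insert (p : V → V → Prop) [DecidableRel p]
    (hsymm : ∀ a b, p a b → p b a) (S : Finset V) (x : V) (hx : x ∉ S) (hxx : ¬ p x x) :
    cpairs p (insert x S) = cpairs p S + 2 * (S.filter fun y => p x y).card := by
  classical
  unfold cpairs
  rw [Finset.sum_insert hx]
  have h1 : ((insert x S).filter fun y => p x y) = S.filter fun y => p x y := by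
    rw [Finset.filter_insert]
    simp [hxx]
  have h2 : ∀ a ∈ S, ((insert x S).filter fun y => p a y).card
      = (S.filter fun y => p a y).card + (if p a x then 1 else 0) := by
    intro a ha
    rw [Finset.filter_insert]
    by_cases h : p a x
    · simp only [h, if_true]
      rw [Finset.card_insert_of_notMem (by simp [hx])]
    · simp [h]
  rw [Finset.sum_congr rfl h2, Finset.sum_add_distrib, h1]
  have h3 : (∑ a ∈ S, if p a x then 1 else 0) = (S.filter fun y => p x y).card := by
    rw [Finset.card_filter]
    apply Finset.sum_congr rfl
    intro a _
    by_cases h : p a x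
    · simp [h, hsymm a x h]
    · have h' : ¬ p x a := fun hh => h (hsymm x a hh)
      simp [h, h']
  omega

theorem cpairs_congr (p q : V → V → Prop) [DecidableRel p] [DecidableRel q] (S : Finset V)
    (h : ∀ a ∈ S, ∀ b ∈ S, (p a b ↔ q a b)) : cpairs p S = cpairs q S := by
  unfold cpairs
  apply Finset.sum_congr rfl
  intro a ha
  congr 1
  apply Finset.filter_congr
  intro b hb
  simpa using h a ha b hb

lemma cpairs_univ_eq (p : V → V → Prop) [DecidableRel p] :
    cpairs p (univ : Finset V) = ((univ : Finset (V × V)).filter fun q => p q.1 q.2).card := by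
  classical
  rw [Finset.card_eq_sum_card_fiberwise (f := Prod.fst) (t := univ) (fun q _ => mem_univ _)]
  unfold cpairs
  apply Finset.sum_congr rfl
  intro a _
  rw [eq_comm]
  apply Finset.card_bij (fun q _ => q.2)
  · intro q hq
    simp only [Finset.mem_filter] at hq ⊢
    exact ⟨mem_univ _, by rw [← hq.2]; exact hq.1.2⟩
  · intro q1 h1 q2 h2 h
    simp only [Finset.mem_filter] at h1 h2
    exact Prod.ext (h1.2.trans h2.2.symm) h
  · intro b hb
    simp only [Finset.mem_filter] at hb
    exact ⟨(a, b), by simp [hb.2], rfl⟩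

variable (G : SimpleGraph V) [DecidableRel G.Adj] (sign : V → V → Bool)

def satp (f : V → Bool) (a b : V) : Prop := G.Adj a b ∧ sign a b = (f a == f b)

instance (f : V → Bool) : DecidableRel (satp G sign f) := by
  intro a b; unfold satp; infer_instance

def PS (f : V → Bool) (S : Finset V) : ℕ := cpairs (satp G sign f) S

def ES (S : Finset V) : ℕ := cpairs G.Adj S

theorem satp_symm (hsym : ∀ u v, sign u v = sign v u) (f : V → Bool) :
    ∀ a b, satp G sign f a b → satp G sign f b a := by
  intro a b ⟨hadj, hs⟩
  refine ⟨hadj.symm, ?_⟩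
  rw [hsym b a, hs]
  cases f a <;> cases f b <;> rfl

theorem ES_insert (S : Finset V) (x : V) (hx : x ∉ S) :
    ES G (insert x S) = ES G S + 2 * (S.filter (G.Adj x)).card :=
  cpairs_insert _ (fun a b h => h.symm) S x hx (G.loopless.irrefl x)

theorem exists_step (hsym : ∀ u v, sign u v = sign v u) (f : V → Bool) (S : Finset V) (x : V)
    (hx : x ∉ S) :
    ∃ g : V → Bool, (∀ y ∈ S, g y = f y) ∧
      2 * PS G sign g (insert x S) ≥ 2 * PS G sign f S
        + 2 * (S.filter (G.Adj x)).card + 2 * ((S.filter (G.Adj x)).card % 2) := by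
  classical
  set A := S.filter (fun y => G.Adj x y ∧ sign x y = (true == f y)) with hA
  set B := S.filter (fun y => G.Adj x y ∧ sign x y = (false == f y)) with hB
  have hdisj : Disjoint A B := by
    rw [Finset.disjoint_filter]
    rintro y _ ⟨_, h1⟩ ⟨_, h2⟩
    rw [h1] at h2
    cases f y <;> simp at h2
  have hunion : A ∪ B = S.filter (G.Adj x) := by
    ext y
    simp only [hA, hB, Finset.mem_union, Finset.mem_filter]
    constructor
    · rintro (⟨h1, h2, _⟩ | ⟨h1, h2, _⟩) <;> exact ⟨h1, h2⟩
    · rintro ⟨h1, h2⟩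
      by_cases h : sign x y = f y
      · left; exact ⟨h1, h2, by simpa using h⟩
      · right
        refine ⟨h1, h2, ?_⟩
        cases hf : f y <;> cases hs : sign x y <;> simp_all
  have hcards : A.card + B.card = (S.filter (G.Adj x)).card := by
    rw [← hunion, Finset.card_union_of_disjoint hdisj]
  -- pick the better bit
  obtain ⟨b, hb⟩ : ∃ b : Bool, 2 * (S.filter (fun y => G.Adj x y ∧ sign x y = (b == f y))).card
      ≥ (S.filter (G.Adj x)).card + (S.filter (G.Adj x)).card % 2 := by
    rcases le_total A.card B.card with h | h
    · exact ⟨false, by rw [← hB] at *; omega⟩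
    · exact ⟨true, by rw [← hA] at *; omega⟩
  refine ⟨Function.update f x b, fun y hy => Function.update_of_ne (by rintro rfl; exact hx hy) _ _, ?_⟩
  have h1 : PS G sign (Function.update f x b) (insert x S)
      = PS G sign f S + 2 * (S.filter (fun y => G.Adj x y ∧ sign x y = (b == f y))).card := by
    rw [PS, cpairs_insert _ (satp_symm G sign hsym _) S x hx
      (by simp [satp, G.loopless.irrefl x])]
    have e1 : cpairs (satp G sign (Function.update f x b)) S = PS G sign f S := by
      apply cpairs_congr
      intro a ha c hc
      unfold satp
      rw [Function.update_of_ne (by rintro rfl; exact hx ha),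
        Function.update_of_ne (by rintro rfl; exact hx hc)]
    have e2 : (S.filter fun y => satp G sign (Function.update f x b) x y)
        = S.filter (fun y => G.Adj x y ∧ sign x y = (b == f y)) := by
      apply Finset.filter_congr
      intro y hy
      unfold satp
      rw [Function.update_self, Function.update_of_ne (by rintro rfl; exact hx hy)]
    rw [e1, e2]
  rw [h1]
  omega

-- potential
variable (K : Finset V) (d : ℕ)

def KD (S : Finset V) : Finset V :=
  (S ∩ K).filter fun u => (((S \ K)).filter (G.Adj u)).Nonempty

def XP (S : Finset V) : ℕ := (KD G K S).card / (d + 1)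

theorem XP_step (S S' : Finset V) (h : (KD G K S).card ≤ (KD G K S').card + (d + 1)) :
    XP G K d S ≤ XP G K d S' + 1 := by
  unfold XP
  calc (KD G K S).card / (d+1) ≤ ((KD G K S').card + (d+1)) / (d+1) := Nat.div_le_div_right h
    _ = (KD G K S').card / (d+1) + 1 := Nat.add_div_right _ (by omega)

theorem XP_mono (S S' : Finset V) (h : (KD G K S).card ≤ (KD G K S').card) :
    XP G K d S ≤ XP G K d S' := Nat.div_le_div_right h

theorem XP_zero (S : Finset V) (h : (KD G K S).card ≤ d) : XP G K d S = 0 :=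
  Nat.div_eq_of_lt (by omega)

-- structural helpers
theorem Ifilter (hI : ∀ x, x ∉ K → ∀ y, y ∉ K → ¬ G.Adj x y)
    (x : V) (hx : x ∉ K) (T : Finset V) :
    T.filter (G.Adj x) = (T ∩ K).filter (G.Adj x) := by
  ext y
  simp only [Finset.mem_filter, Finset.mem_inter]
  constructor
  · rintro ⟨hyT, hadj⟩
    by_cases hyK : y ∈ K
    · exact ⟨⟨hyT, hyK⟩, hadj⟩
    · exact absurd hadj (hI x hx y hyK)
  · rintro ⟨⟨hyT, _⟩, hadj⟩
    exact ⟨hyT, hadj⟩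

theorem Kdeg (hK : ∀ u ∈ K, ∀ w ∈ K, u ≠ w → G.Adj u w)
    (S : Finset V) (u : V) (hu : u ∈ S ∩ K) :
    (S.filter (G.Adj u)).card + 1 = (S ∩ K).card + ((S \ K).filter (G.Adj u)).card := by
  have huS : u ∈ S := (Finset.mem_inter.mp hu).1
  have huK : u ∈ K := (Finset.mem_inter.mp hu).2
  have hsplit : S.filter (G.Adj u) = ((S ∩ K).erase u) ∪ ((S \ K).filter (G.Adj u)) := by
    ext y
    simp only [Finset.mem_filter, Finset.mem_union, Finset.mem_erase, Finset.mem_inter,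
      Finset.mem_sdiff]
    constructor
    · rintro ⟨hyS, hadj⟩
      by_cases hyK : y ∈ K
      · exact Or.inl ⟨by rintro rfl; exact G.loopless.irrefl _ hadj, hyS, hyK⟩
      · exact Or.inr ⟨⟨hyS, hyK⟩, hadj⟩
    · rintro (⟨hne, hyS, hyK⟩ | ⟨⟨hyS, _⟩, hadj⟩)
      · exact ⟨hyS, hK u huK y hyK (Ne.symm hne)⟩
      · exact ⟨hyS, hadj⟩
  have hdisj : Disjoint ((S ∩ K).erase u) ((S \ K).filter (G.Adj u)) := by
    rw [Finset.disjoint_left]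
    intro y hy hy'
    have h1 : y ∈ K := (Finset.mem_inter.mp (Finset.mem_of_mem_erase hy)).2
    have h2 : y ∉ K := (Finset.mem_sdiff.mp (Finset.mem_filter.mp hy').1).2
    exact h2 h1
  have hcard1 : ((S ∩ K).erase u).card = (S ∩ K).card - 1 := Finset.card_erase_of_mem hu
  have hpos : 1 ≤ (S ∩ K).card := Finset.card_pos.mpr ⟨u, hu⟩
  rw [hsplit, Finset.card_union_of_disjoint hdisj, hcard1]
  omega

theorem ES_small (S : Finset V) (h : S.card ≤ 1) : ES G S = 0 := by
  unfold ES cpairs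
  apply Finset.sum_eq_zero
  intro a ha
  rw [Finset.card_eq_zero, Finset.eq_empty_iff_forall_notMem]
  intro y hy
  rw [Finset.mem_filter] at hy
  have : a = y := by
    rcases Finset.card_le_one.mp h a ha y hy.1 with h'
    exact h'
  exact G.loopless.irrefl a (this ▸ hy.2)

theorem KD_card_le (S : Finset V) : (KD G K S).card ≤ (S ∩ K).card :=
  Finset.card_le_card (Finset.filter_subset _ _)


theorem mem_KD (S : Finset V) (u : V) :
    u ∈ KD G K S ↔ u ∈ S ∩ K ∧ ((S \ K).filter (G.Adj u)).Nonempty := by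
  rw [KD, Finset.mem_filter]

theorem main_ind (hsym : ∀ u v, sign u v = sign v u) (hd : 1 ≤ d)
    (hK : ∀ u ∈ K, ∀ w ∈ K, u ≠ w → G.Adj u w)
    (hI : ∀ x, x ∉ K → ∀ y, y ∉ K → ¬ G.Adj x y)
    (hIdeg : ∀ x, x ∉ K → ((Finset.univ : Finset V).filter (G.Adj x)).card ≤ d) :
    ∀ (n : ℕ) (S : Finset V), S.card ≤ n →
      (∀ x ∈ S, x ∉ K → ((S ∩ K).filter (G.Adj x)).Nonempty) →
      ((S ∩ K).Nonempty ∨ S.card ≤ 1) →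
      ∃ f : V → Bool, 2 * PS G sign f S + 1 ≥ ES G S + S.card + XP G K d S := by
  intro n
  induction n with
  | zero =>
    intro S hcard _ _
    refine ⟨fun _ => true, ?_⟩
    have hES : ES G S = 0 := ES_small G S (by omega)
    have hXP : XP G K d S = 0 := XP_zero G K d S (by
      have := KD_card_le G K S
      have h2 : (S ∩ K).card ≤ S.card := Finset.card_le_card Finset.inter_subset_left
      omega)
    omega
  | succ n IH =>
    intro S hcard hInv1 hInv2
    by_cases hS1 : S.card ≤ 1
    · refine ⟨fun _ => true, ?_⟩
      have hES : ES G S = 0 := ES_small G S hS1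
      have hXP : XP G K d S = 0 := XP_zero G K d S (by
        have := KD_card_le G K S
        have h2 : (S ∩ K).card ≤ S.card := Finset.card_le_card Finset.inter_subset_left
        omega)
      omega
    push_neg at hS1
    have hSK : (S ∩ K).Nonempty := hInv2.resolve_right (by omega)
    by_cases hC1 : ∃ v ∈ S, v ∉ K ∧ (S.filter (G.Adj v)).card % 2 = 1
    · -- CASE 1: some I-vertex with odd degree in S
      obtain ⟨v, hvS, hvK, hodd⟩ := hC1
      set S' := S.erase v with hS'
      have hvS' : v ∉ S' := Finset.notMem_erase v S
      have hins : insert v S' = S := Finset.insert_erase hvS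
      have hcard' : S'.card + 1 = S.card := by
        rw [hS', Finset.card_erase_of_mem hvS]
        omega
      have hInv1' : ∀ x ∈ S', x ∉ K → ((S' ∩ K).filter (G.Adj x)).Nonempty := by
        intro x hxS' hxK
        obtain ⟨y, hy⟩ := hInv1 x (Finset.mem_of_mem_erase hxS') hxK
        rw [Finset.mem_filter, Finset.mem_inter] at hy
        refine ⟨y, ?_⟩
        rw [Finset.mem_filter, Finset.mem_inter, hS']
        exact ⟨⟨Finset.mem_erase.mpr ⟨by rintro rfl; exact hvK hy.1.2, hy.1.1⟩, hy.1.2⟩, hy.2⟩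
      have hInv2' : (S' ∩ K).Nonempty := by
        obtain ⟨y, hy⟩ := hSK
        rw [Finset.mem_inter] at hy
        refine ⟨y, ?_⟩
        rw [Finset.mem_inter, hS']
        exact ⟨Finset.mem_erase.mpr ⟨by rintro rfl; exact hvK hy.2, hy.1⟩, hy.2⟩
      obtain ⟨f0, hIH⟩ := IH S' (by omega) hInv1' (Or.inl hInv2')
      obtain ⟨g, hgagree, hstep⟩ := exists_step G sign hsym f0 S' v hvS'
      have hbd : S'.filter (G.Adj v) = S.filter (G.Adj v) := by
        rw [hS', Finset.filter_erase, Finset.erase_eq_of_notMem]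
        intro h
        exact G.loopless.irrefl v (Finset.mem_filter.mp h).2
      have hb1 : (S'.filter (G.Adj v)).card % 2 = 1 := by rw [hbd]; exact hodd
      have hES : ES G S = ES G S' + 2 * (S'.filter (G.Adj v)).card := by
        rw [← hins]; exact ES_insert G S' v hvS'
      have hXP : XP G K d S ≤ XP G K d S' + 1 := by
        apply XP_step
        have hsub : KD G K S ⊆ KD G K S' ∪ ((S ∩ K).filter (G.Adj v)) := by
          intro u' hu'
          rw [mem_KD] at hu'
          obtain ⟨hu'SK, y, hy⟩ := hu'
          rw [Finset.mem_filter, Finset.mem_sdiff] at hy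
          rw [Finset.mem_union]
          by_cases hyv : y = v
          · right
            rw [Finset.mem_filter]
            exact ⟨hu'SK, ((hyv ▸ hy.2 : G.Adj u' v)).symm⟩
          · left
            rw [mem_KD]
            have hu'v : u' ≠ v := by rintro rfl; exact hvK (Finset.mem_inter.mp hu'SK).2
            refine ⟨?_, ⟨y, ?_⟩⟩
            · rw [Finset.mem_inter] at hu'SK ⊢
              exact ⟨Finset.mem_erase.mpr ⟨hu'v, hu'SK.1⟩, hu'SK.2⟩
            · rw [Finset.mem_filter, Finset.mem_sdiff]
              exact ⟨⟨Finset.mem_erase.mpr ⟨hyv, hy.1.1⟩, hy.1.2⟩, hy.2⟩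
        have hBnd : ((S ∩ K).filter (G.Adj v)).card ≤ d := by
          refine le_trans (Finset.card_le_card ?_) (hIdeg v hvK)
          intro y hy
          rw [Finset.mem_filter] at hy ⊢
          exact ⟨Finset.mem_univ y, hy.2⟩
        calc (KD G K S).card ≤ (KD G K S' ∪ ((S ∩ K).filter (G.Adj v))).card :=
              Finset.card_le_card hsub
          _ ≤ (KD G K S').card + ((S ∩ K).filter (G.Adj v)).card := Finset.card_union_le _ _
          _ ≤ (KD G K S').card + (d+1) := by omega
      rw [hins] at hstep
      exact ⟨g, by omega⟩
    · push_neg at hC1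
      by_cases hC2 : ∃ u ∈ S ∩ K, (S.filter (G.Adj u)).card % 2 = 1
      · obtain ⟨u, huSK, huodd⟩ := hC2
        by_cases hc : ((S \ K).filter (G.Adj u)).Nonempty
        · -- CASE 2a: u ∈ K odd degree, has I-neighbor v; remove {v,u}, order v,u
          obtain ⟨v, hv⟩ := hc
          rw [Finset.mem_filter, Finset.mem_sdiff] at hv
          obtain ⟨⟨hvS, hvK⟩, hadjuv⟩ := hv
          have huS : u ∈ S := (Finset.mem_inter.mp huSK).1
          have huK : u ∈ K := (Finset.mem_inter.mp huSK).2
          have hvu : v ≠ u := by rintro rfl; exact hvK huK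
          set S'' := (S.erase u).erase v with hS''
          have hvSe : v ∈ S.erase u := Finset.mem_erase.mpr ⟨hvu, hvS⟩
          have hins1 : insert v S'' = S.erase u := Finset.insert_erase hvSe
          have hins2 : insert u (S.erase u) = S := Finset.insert_erase huS
          have hvS'' : v ∉ S'' := Finset.notMem_erase _ _
          have huSe : u ∉ S.erase u := Finset.notMem_erase _ _
          have hcard'' : S''.card + 2 = S.card := by
            rw [hS'', Finset.card_erase_of_mem hvSe, Finset.card_erase_of_mem huS]
            have : 1 ≤ (S.erase u).card := Finset.card_pos.mpr ⟨v, hvSe⟩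
            have : (S.erase u).card = S.card - 1 := Finset.card_erase_of_mem huS
            omega
          -- tv facts
          have htvK : S.filter (G.Adj v) = (S ∩ K).filter (G.Adj v) := Ifilter G K hI v hvK S
          have htv_even : (S.filter (G.Adj v)).card % 2 = 0 := by
            have := hC1 v hvS hvK
            omega
          have hufilt : u ∈ S.filter (G.Adj v) := Finset.mem_filter.mpr ⟨huS, hadjuv.symm⟩
          have htv_pos : 2 ≤ (S.filter (G.Adj v)).card := by
            have h1 : 1 ≤ (S.filter (G.Adj v)).card := Finset.card_pos.mpr ⟨u, hufilt⟩
            omega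
          -- bd1
          have hbd1 : (S''.filter (G.Adj v)).card + 1 = (S.filter (G.Adj v)).card := by
            have e1 : S''.filter (G.Adj v) = ((S.filter (G.Adj v)).erase u).erase v := by
              rw [hS'', Finset.filter_erase, Finset.filter_erase]
            have e2 : ((S.filter (G.Adj v)).erase u).erase v = (S.filter (G.Adj v)).erase u := by
              apply Finset.erase_eq_of_notMem
              intro h
              exact G.loopless.irrefl v (Finset.mem_filter.mp (Finset.mem_of_mem_erase h)).2
            rw [e1, e2, Finset.card_erase_of_mem hufilt]
            omega
          have hb1 : (S''.filter (G.Adj v)).card % 2 = 1 := by omega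
          -- bd2
          have hbd2 : (S.erase u).filter (G.Adj u) = S.filter (G.Adj u) := by
            rw [Finset.filter_erase, Finset.erase_eq_of_notMem]
            intro h
            exact G.loopless.irrefl u (Finset.mem_filter.mp h).2
          have hb2 : ((S.erase u).filter (G.Adj u)).card % 2 = 1 := by rw [hbd2]; exact huodd
          -- invariants for S''
          have hInv1'' : ∀ x ∈ S'', x ∉ K → ((S'' ∩ K).filter (G.Adj x)).Nonempty := by
            intro x hxS'' hxK
            have hxS : x ∈ S := Finset.mem_of_mem_erase (Finset.mem_of_mem_erase hxS'')
            have e1 : (S'' ∩ K).filter (G.Adj x) = ((S ∩ K).filter (G.Adj x)).erase u := by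
              ext y
              simp only [Finset.mem_filter, Finset.mem_inter, Finset.mem_erase, hS'']
              constructor
              · rintro ⟨⟨⟨hyv, hyu, hyS⟩, hyK⟩, hadj⟩
                exact ⟨hyu, ⟨⟨hyS, hyK⟩, hadj⟩⟩
              · rintro ⟨hyu, ⟨⟨hyS, hyK⟩, hadj⟩⟩
                exact ⟨⟨⟨by rintro rfl; exact hvK hyK, hyu, hyS⟩, hyK⟩, hadj⟩
            have e2 : ((S ∩ K).filter (G.Adj x)).card = (S.filter (G.Adj x)).card := by
              rw [Ifilter G K hI x hxK S]
            have e3 : (S.filter (G.Adj x)).card % 2 = 0 := by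
              have := hC1 x hxS hxK
              omega
            have e4 : 1 ≤ ((S ∩ K).filter (G.Adj x)).card :=
              Finset.card_pos.mpr (hInv1 x hxS hxK)
            rw [e1]
            apply Finset.card_pos.mp
            have := Finset.card_erase_of_mem (s := (S ∩ K).filter (G.Adj x)) (a := u)
            by_cases hu : u ∈ (S ∩ K).filter (G.Adj x)
            · rw [Finset.card_erase_of_mem hu]
              omega
            · rw [Finset.erase_eq_of_notMem hu]
              omega
          have hInv2'' : (S'' ∩ K).Nonempty := by
            have h1 : 1 ≤ (((S ∩ K).filter (G.Adj v)).erase u).card := by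
              rw [Finset.card_erase_of_mem (by rw [← htvK]; exact hufilt)]
              rw [← htvK]
              omega
            obtain ⟨y, hy⟩ := Finset.card_pos.mp (by omega : 0 < (((S ∩ K).filter (G.Adj v)).erase u).card)
            have hyu : y ≠ u := (Finset.mem_erase.mp hy).1
            have hy2 := Finset.mem_filter.mp (Finset.mem_of_mem_erase hy)
            have hyK : y ∈ K := (Finset.mem_inter.mp hy2.1).2
            have hyS : y ∈ S := (Finset.mem_inter.mp hy2.1).1
            refine ⟨y, Finset.mem_inter.mpr ⟨?_, hyK⟩⟩
            rw [hS'']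
            exact Finset.mem_erase.mpr ⟨by rintro rfl; exact hvK hyK,
              Finset.mem_erase.mpr ⟨hyu, hyS⟩⟩
          obtain ⟨f0, hIH⟩ := IH S'' (by omega) hInv1'' (Or.inl hInv2'')
          obtain ⟨g1, hg1, hstep1⟩ := exists_step G sign hsym f0 S'' v hvS''
          rw [hins1] at hstep1
          obtain ⟨g2, hg2, hstep2⟩ := exists_step G sign hsym g1 (S.erase u) u huSe
          rw [hins2] at hstep2
          -- ES
          have hES1 : ES G (S.erase u) = ES G S'' + 2 * (S''.filter (G.Adj v)).card := by
            rw [← hins1]; exact ES_insert G S'' v hvS''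
          have hES2 : ES G S = ES G (S.erase u) + 2 * ((S.erase u).filter (G.Adj u)).card := by
            conv_lhs => rw [← hins2]
            exact ES_insert G (S.erase u) u huSe
          -- XP
          have hXP : XP G K d S ≤ XP G K d S'' + 1 := by
            apply XP_step
            have hsub : KD G K S ⊆ KD G K S'' ∪ insert u ((S ∩ K).filter (G.Adj v)) := by
              intro u' hu'
              rw [mem_KD] at hu'
              obtain ⟨hu'SK, y, hy⟩ := hu'
              rw [Finset.mem_filter, Finset.mem_sdiff] at hy
              rw [Finset.mem_union, Finset.mem_insert]
              by_cases hu'u : u' = u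
              · exact Or.inr (Or.inl hu'u)
              by_cases hyv : y = v
              · exact Or.inr (Or.inr (Finset.mem_filter.mpr
                  ⟨hu'SK, ((hyv ▸ hy.2 : G.Adj u' v)).symm⟩))
              · left
                rw [mem_KD]
                have hu'K : u' ∈ K := (Finset.mem_inter.mp hu'SK).2
                have hu'v : u' ≠ v := by rintro rfl; exact hvK hu'K
                have hyu : y ≠ u := by rintro rfl; exact hy.1.2 huK
                refine ⟨?_, ⟨y, ?_⟩⟩
                · rw [Finset.mem_inter, hS'']
                  exact ⟨Finset.mem_erase.mpr ⟨hu'v, Finset.mem_erase.mpr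
                    ⟨hu'u, (Finset.mem_inter.mp hu'SK).1⟩⟩, hu'K⟩
                · rw [Finset.mem_filter, Finset.mem_sdiff, hS'']
                  exact ⟨⟨Finset.mem_erase.mpr ⟨hyv, Finset.mem_erase.mpr ⟨hyu, hy.1.1⟩⟩,
                    hy.1.2⟩, hy.2⟩
            have hBnd : ((S ∩ K).filter (G.Adj v)).card ≤ d := by
              refine le_trans (Finset.card_le_card ?_) (hIdeg v hvK)
              intro y hy
              rw [Finset.mem_filter] at hy ⊢
              exact ⟨Finset.mem_univ y, hy.2⟩
            calc (KD G K S).card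
                ≤ (KD G K S'' ∪ insert u ((S ∩ K).filter (G.Adj v))).card :=
                  Finset.card_le_card hsub
              _ ≤ (KD G K S'').card + (insert u ((S ∩ K).filter (G.Adj v))).card :=
                  Finset.card_union_le _ _
              _ ≤ (KD G K S'').card + (d+1) := by
                  have := Finset.card_insert_le u ((S ∩ K).filter (G.Adj v))
                  omega
          exact ⟨g2, by omega⟩
        · -- CASE 2b: u ∈ K odd degree, no I-neighbor in S; remove {u}
          have huS : u ∈ S := (Finset.mem_inter.mp huSK).1
          have huK : u ∈ K := (Finset.mem_inter.mp huSK).2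
          have hcI0 : ∀ y, y ∈ S → y ∉ K → ¬ G.Adj u y := by
            intro y hyS hyK hadj
            exact hc ⟨y, Finset.mem_filter.mpr ⟨Finset.mem_sdiff.mpr ⟨hyS, hyK⟩, hadj⟩⟩
          set S' := S.erase u with hS'
          have huS' : u ∉ S' := Finset.notMem_erase _ _
          have hins : insert u S' = S := Finset.insert_erase huS
          have hcard' : S'.card + 1 = S.card := by
            rw [hS', Finset.card_erase_of_mem huS]; omega
          have hbd : S'.filter (G.Adj u) = S.filter (G.Adj u) := by
            rw [hS', Finset.filter_erase, Finset.erase_eq_of_notMem]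
            intro h
            exact G.loopless.irrefl u (Finset.mem_filter.mp h).2
          have hb1 : (S'.filter (G.Adj u)).card % 2 = 1 := by rw [hbd]; exact huodd
          have hInv1' : ∀ x ∈ S', x ∉ K → ((S' ∩ K).filter (G.Adj x)).Nonempty := by
            intro x hxS' hxK
            have hxS : x ∈ S := Finset.mem_of_mem_erase hxS'
            obtain ⟨y, hy⟩ := hInv1 x hxS hxK
            rw [Finset.mem_filter, Finset.mem_inter] at hy
            have hyu : y ≠ u := by
              rintro rfl
              exact hcI0 x hxS hxK hy.2.symm
            refine ⟨y, ?_⟩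
            rw [Finset.mem_filter, Finset.mem_inter, hS']
            exact ⟨⟨Finset.mem_erase.mpr ⟨hyu, hy.1.1⟩, hy.1.2⟩, hy.2⟩
          have hInv2' : (S' ∩ K).Nonempty := by
            by_cases hIS : (S \ K).Nonempty
            · obtain ⟨x, hx⟩ := hIS
              rw [Finset.mem_sdiff] at hx
              obtain ⟨y, hy⟩ := hInv1 x hx.1 hx.2
              rw [Finset.mem_filter, Finset.mem_inter] at hy
              have hyu : y ≠ u := by
                rintro rfl
                exact hcI0 x hx.1 hx.2 hy.2.symm
              exact ⟨y, Finset.mem_inter.mpr ⟨Finset.mem_erase.mpr ⟨hyu, hy.1.1⟩, hy.1.2⟩⟩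
            · have hsub : S ⊆ K := by
                intro x hx
                by_contra hxK
                exact hIS ⟨x, Finset.mem_sdiff.mpr ⟨hx, hxK⟩⟩
              obtain ⟨y, hyS, hyu⟩ := Finset.exists_mem_ne (s := S) (by omega) u
              exact ⟨y, Finset.mem_inter.mpr ⟨Finset.mem_erase.mpr ⟨hyu, hyS⟩, hsub hyS⟩⟩
          obtain ⟨f0, hIH⟩ := IH S' (by omega) hInv1' (Or.inl hInv2')
          obtain ⟨g, hg, hstep⟩ := exists_step G sign hsym f0 S' u huS'
          rw [hins] at hstep
          have hES : ES G S = ES G S' + 2 * (S'.filter (G.Adj u)).card := by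
            rw [← hins]; exact ES_insert G S' u huS'
          have hXP : XP G K d S ≤ XP G K d S' := by
            apply XP_mono
            apply Finset.card_le_card
            intro u' hu'
            rw [mem_KD] at hu' ⊢
            obtain ⟨hu'SK, y, hy⟩ := hu'
            rw [Finset.mem_filter, Finset.mem_sdiff] at hy
            have hu'u : u' ≠ u := by
              rintro rfl
              exact hcI0 y hy.1.1 hy.1.2 hy.2
            have hyu : y ≠ u := by rintro rfl; exact hy.1.2 huK
            refine ⟨?_, ⟨y, ?_⟩⟩
            · rw [Finset.mem_inter, hS']
              exact ⟨Finset.mem_erase.mpr ⟨hu'u, (Finset.mem_inter.mp hu'SK).1⟩,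
                (Finset.mem_inter.mp hu'SK).2⟩
            · rw [Finset.mem_filter, Finset.mem_sdiff, hS']
              exact ⟨⟨Finset.mem_erase.mpr ⟨hyu, hy.1.1⟩, hy.1.2⟩, hy.2⟩
          exact ⟨g, by omega⟩
      · push_neg at hC2
        by_cases hC3 : S \ K = ∅
        · -- CASE 3: S ⊆ K, pure clique, all degrees even
          have hsubK : ∀ x ∈ S, x ∈ K := by
            intro x hx
            by_contra hxK
            rw [Finset.eq_empty_iff_forall_notMem] at hC3
            exact hC3 x (Finset.mem_sdiff.mpr ⟨hx, hxK⟩)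
          have hclq : ∀ x ∈ S, S.filter (G.Adj x) = S.erase x := by
            intro x hx
            ext y
            rw [Finset.mem_filter, Finset.mem_erase]
            constructor
            · rintro ⟨hyS, hadj⟩
              refine ⟨?_, hyS⟩
              intro h
              subst h
              exact G.loopless.irrefl _ hadj
            · rintro ⟨hyx, hyS⟩
              exact ⟨hyS, hK x (hsubK x hx) y (hsubK y hyS) (Ne.symm hyx)⟩
          obtain ⟨u, huS⟩ := hSK
          have huS' : u ∈ S := (Finset.mem_inter.mp huS).1
          have hodds : S.card % 2 = 1 := by
            have h1 := hC2 u huS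
            have h2 : (S.filter (G.Adj u)).card = S.card - 1 := by
              rw [hclq u huS', Finset.card_erase_of_mem huS']
            omega
          obtain ⟨u', hu'S, hu'u⟩ := Finset.exists_mem_ne (s := S) (by omega) u
          -- remove u then u' ; S'' = S minus both; order: add u first, then u'
          set S'' := (S.erase u').erase u with hS''
          have huSe : u ∈ S.erase u' := Finset.mem_erase.mpr ⟨Ne.symm hu'u, huS'⟩
          have hins1 : insert u S'' = S.erase u' := Finset.insert_erase huSe
          have hins2 : insert u' (S.erase u') = S := Finset.insert_erase hu'S
          have huS'' : u ∉ S'' := Finset.notMem_erase _ _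
          have hu'Se : u' ∉ S.erase u' := Finset.notMem_erase _ _
          have hcard'' : S''.card + 2 = S.card := by
            rw [hS'', Finset.card_erase_of_mem huSe, Finset.card_erase_of_mem hu'S]
            have : 1 ≤ (S.erase u').card := Finset.card_pos.mpr ⟨u, huSe⟩
            have : (S.erase u').card = S.card - 1 := Finset.card_erase_of_mem hu'S
            omega
          have hbd1 : (S''.filter (G.Adj u)).card + 2 = S.card := by
            have e1 : S''.filter (G.Adj u) = ((S.filter (G.Adj u)).erase u').erase u := by
              rw [hS'', Finset.filter_erase, Finset.filter_erase]
            have e2 : ((S.filter (G.Adj u)).erase u').erase u = (S.filter (G.Adj u)).erase u' := by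
              apply Finset.erase_eq_of_notMem
              intro h
              exact G.loopless.irrefl u (Finset.mem_filter.mp (Finset.mem_of_mem_erase h)).2
            have hu'mem : u' ∈ S.filter (G.Adj u) := by
              rw [hclq u huS']
              exact Finset.mem_erase.mpr ⟨fun h => hu'u h, hu'S⟩
            rw [e1, e2, Finset.card_erase_of_mem hu'mem, hclq u huS',
              Finset.card_erase_of_mem huS']
            have : 1 ≤ S.card := by omega
            have h2 : 1 ≤ S.card - 1 := by omega
            omega
          have hb1 : (S''.filter (G.Adj u)).card % 2 = 1 := by omega
          have hbd2 : ((S.erase u').filter (G.Adj u')).card + 1 = S.card := by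
            have e1 : (S.erase u').filter (G.Adj u') = (S.filter (G.Adj u')).erase u' := by
              rw [Finset.filter_erase]
            have e2 : (S.filter (G.Adj u')).erase u' = S.filter (G.Adj u') := by
              apply Finset.erase_eq_of_notMem
              intro h
              exact G.loopless.irrefl u' (Finset.mem_filter.mp h).2
            rw [e1, e2, hclq u' hu'S, Finset.card_erase_of_mem hu'S]
            omega
          have hInv1'' : ∀ x ∈ S'', x ∉ K → ((S'' ∩ K).filter (G.Adj x)).Nonempty := by
            intro x hxS'' hxK
            exact absurd (hsubK x (Finset.mem_of_mem_erase (Finset.mem_of_mem_erase hxS''))) hxK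
          have hInv2'' : (S'' ∩ K).Nonempty ∨ S''.card ≤ 1 := by
            rcases Finset.eq_empty_or_nonempty S'' with h | ⟨y, hy⟩
            · right; rw [h]; simp
            · left
              exact ⟨y, Finset.mem_inter.mpr ⟨hy, hsubK y
                (Finset.mem_of_mem_erase (Finset.mem_of_mem_erase hy))⟩⟩
          obtain ⟨f0, hIH⟩ := IH S'' (by omega) hInv1'' hInv2''
          obtain ⟨g1, hg1, hstep1⟩ := exists_step G sign hsym f0 S'' u huS''
          rw [hins1] at hstep1
          obtain ⟨g2, hg2, hstep2⟩ := exists_step G sign hsym g1 (S.erase u') u' hu'Se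
          rw [hins2] at hstep2
          have hES1 : ES G (S.erase u') = ES G S'' + 2 * (S''.filter (G.Adj u)).card := by
            rw [← hins1]; exact ES_insert G S'' u huS''
          have hES2 : ES G S = ES G (S.erase u') + 2 * ((S.erase u').filter (G.Adj u')).card := by
            conv_lhs => rw [← hins2]
            exact ES_insert G (S.erase u') u' hu'Se
          have hXP : XP G K d S = 0 := by
            apply XP_zero
            have : KD G K S = ∅ := by
              rw [Finset.eq_empty_iff_forall_notMem]
              intro y hy
              rw [mem_KD] at hy
              obtain ⟨_, z, hz⟩ := hy
              rw [Finset.mem_filter, Finset.mem_sdiff] at hz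
              exact hz.1.2 (hsubK z hz.1.1)
            rw [this]
            simp
          exact ⟨g2, by omega⟩
        · have hIS : (S \ K).Nonempty := Finset.nonempty_iff_ne_empty.mpr hC3
          by_cases hpar : (S ∩ K).card % 2 = 1
          · -- CASE 4a: all degrees even, kS odd; remove v0, v2 (I-nbrs of u) and u
            obtain ⟨v0, hv0⟩ := hIS
            rw [Finset.mem_sdiff] at hv0
            obtain ⟨hv0S, hv0K⟩ := hv0
            obtain ⟨u, hu⟩ := hInv1 v0 hv0S hv0K
            rw [Finset.mem_filter] at hu
            obtain ⟨huSK, hadjv0u⟩ := hu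
            have huS : u ∈ S := (Finset.mem_inter.mp huSK).1
            have huK : u ∈ K := (Finset.mem_inter.mp huSK).2
            have hKdeg := Kdeg G K hK S u huSK
            have hdueven : (S.filter (G.Adj u)).card % 2 = 0 := by
              have := hC2 u huSK; omega
            have hcueven : ((S \ K).filter (G.Adj u)).card % 2 = 0 := by omega
            have hv0mem : v0 ∈ (S \ K).filter (G.Adj u) :=
              Finset.mem_filter.mpr ⟨Finset.mem_sdiff.mpr ⟨hv0S, hv0K⟩, hadjv0u.symm⟩
            have hcu2 : 1 < ((S \ K).filter (G.Adj u)).card := by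
              have : 1 ≤ ((S \ K).filter (G.Adj u)).card := Finset.card_pos.mpr ⟨v0, hv0mem⟩
              omega
            obtain ⟨v2, hv2mem, hv2v0⟩ :=
              Finset.exists_mem_ne (s := (S \ K).filter (G.Adj u)) hcu2 v0
            rw [Finset.mem_filter, Finset.mem_sdiff] at hv2mem
            obtain ⟨⟨hv2S, hv2K⟩, hadjuv2⟩ := hv2mem
            have hv0u : v0 ≠ u := by rintro rfl; exact hv0K huK
            have hv2u : v2 ≠ u := by rintro rfl; exact hv2K huK
            set S3 := ((S.erase u).erase v2).erase v0 with hS3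
            have hv2e : v2 ∈ S.erase u := Finset.mem_erase.mpr ⟨hv2u, hv2S⟩
            have hv0e : v0 ∈ (S.erase u).erase v2 :=
              Finset.mem_erase.mpr ⟨Ne.symm hv2v0, Finset.mem_erase.mpr ⟨hv0u, hv0S⟩⟩
            have hins1 : insert v0 S3 = (S.erase u).erase v2 := Finset.insert_erase hv0e
            have hins2 : insert v2 ((S.erase u).erase v2) = S.erase u := Finset.insert_erase hv2e
            have hins3 : insert u (S.erase u) = S := Finset.insert_erase huS
            have hv0S3 : v0 ∉ S3 := Finset.notMem_erase _ _
            have hv2ee : v2 ∉ (S.erase u).erase v2 := Finset.notMem_erase _ _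
            have hue : u ∉ S.erase u := Finset.notMem_erase _ _
            have hcard3 : S3.card + 3 = S.card := by
              rw [hS3, Finset.card_erase_of_mem hv0e, Finset.card_erase_of_mem hv2e,
                Finset.card_erase_of_mem huS]
              have h1 : 1 ≤ (S.erase u).card := Finset.card_pos.mpr ⟨v2, hv2e⟩
              have h2 : 1 ≤ ((S.erase u).erase v2).card := Finset.card_pos.mpr ⟨v0, hv0e⟩
              have h3 : (S.erase u).card = S.card - 1 := Finset.card_erase_of_mem huS
              have h4 : ((S.erase u).erase v2).card = (S.erase u).card - 1 :=
                Finset.card_erase_of_mem hv2e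
              omega
            have ht0even : (S.filter (G.Adj v0)).card % 2 = 0 := by
              have := hC1 v0 hv0S hv0K; omega
            have ht2even : (S.filter (G.Adj v2)).card % 2 = 0 := by
              have := hC1 v2 hv2S hv2K; omega
            have hnadj02 : ¬ G.Adj v0 v2 := hI v0 hv0K v2 hv2K
            have hbd1 : (S3.filter (G.Adj v0)).card + 1 = (S.filter (G.Adj v0)).card := by
              have e1 : S3.filter (G.Adj v0)
                  = (((S.filter (G.Adj v0)).erase u).erase v2).erase v0 := by
                rw [hS3, Finset.filter_erase, Finset.filter_erase, Finset.filter_erase]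
              have e2 : ((S.filter (G.Adj v0)).erase u).erase v2
                  = (S.filter (G.Adj v0)).erase u := by
                apply Finset.erase_eq_of_notMem
                intro h
                exact hnadj02 (Finset.mem_filter.mp (Finset.mem_of_mem_erase h)).2
              have e3 : ((S.filter (G.Adj v0)).erase u).erase v0
                  = (S.filter (G.Adj v0)).erase u := by
                apply Finset.erase_eq_of_notMem
                intro h
                exact G.loopless.irrefl v0 (Finset.mem_filter.mp (Finset.mem_of_mem_erase h)).2
              rw [e1, e2, e3, Finset.card_erase_of_mem
                (Finset.mem_filter.mpr ⟨huS, hadjv0u⟩)]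
              have : 1 ≤ (S.filter (G.Adj v0)).card :=
                Finset.card_pos.mpr ⟨u, Finset.mem_filter.mpr ⟨huS, hadjv0u⟩⟩
              omega
            have hb1 : (S3.filter (G.Adj v0)).card % 2 = 1 := by omega
            have hbd2 : (((S.erase u).erase v2).filter (G.Adj v2)).card + 1
                = (S.filter (G.Adj v2)).card := by
              have e1 : ((S.erase u).erase v2).filter (G.Adj v2)
                  = ((S.filter (G.Adj v2)).erase u).erase v2 := by
                rw [Finset.filter_erase, Finset.filter_erase]
              have e2 : ((S.filter (G.Adj v2)).erase u).erase v2
                  = (S.filter (G.Adj v2)).erase u := by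
                apply Finset.erase_eq_of_notMem
                intro h
                exact G.loopless.irrefl v2 (Finset.mem_filter.mp (Finset.mem_of_mem_erase h)).2
              rw [e1, e2, Finset.card_erase_of_mem
                (Finset.mem_filter.mpr ⟨huS, hadjuv2.symm⟩)]
              have : 1 ≤ (S.filter (G.Adj v2)).card :=
                Finset.card_pos.mpr ⟨u, Finset.mem_filter.mpr ⟨huS, hadjuv2.symm⟩⟩
              omega
            have hb2 : (((S.erase u).erase v2).filter (G.Adj v2)).card % 2 = 1 := by omega
            have hbd3 : (S.erase u).filter (G.Adj u) = S.filter (G.Adj u) := by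
              rw [Finset.filter_erase, Finset.erase_eq_of_notMem]
              intro h
              exact G.loopless.irrefl u (Finset.mem_filter.mp h).2
            have hS3K : S3 ∩ K = (S ∩ K).erase u := by
              ext y
              simp only [hS3, Finset.mem_inter, Finset.mem_erase]
              constructor
              · rintro ⟨⟨hy0, hy2, hyu, hyS⟩, hyK⟩
                exact ⟨hyu, ⟨hyS, hyK⟩⟩
              · rintro ⟨hyu, hyS, hyK⟩
                exact ⟨⟨by rintro rfl; exact hv0K hyK, by rintro rfl; exact hv2K hyK, hyu, hyS⟩, hyK⟩
            have hInv1c : ∀ x ∈ S3, x ∉ K → ((S3 ∩ K).filter (G.Adj x)).Nonempty := by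
              intro x hxS3 hxK
              have hxS : x ∈ S :=
                Finset.mem_of_mem_erase (Finset.mem_of_mem_erase (Finset.mem_of_mem_erase hxS3))
              have e1 : (S3 ∩ K).filter (G.Adj x) = ((S ∩ K).filter (G.Adj x)).erase u := by
                rw [hS3K, Finset.filter_erase]
              have e2 : ((S ∩ K).filter (G.Adj x)).card = (S.filter (G.Adj x)).card := by
                rw [Ifilter G K hI x hxK S]
              have e3 : (S.filter (G.Adj x)).card % 2 = 0 := by
                have := hC1 x hxS hxK; omega
              have e4 : 1 ≤ ((S ∩ K).filter (G.Adj x)).card :=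
                Finset.card_pos.mpr (hInv1 x hxS hxK)
              rw [e1]
              apply Finset.card_pos.mp
              by_cases hu : u ∈ (S ∩ K).filter (G.Adj x)
              · rw [Finset.card_erase_of_mem hu]; omega
              · rw [Finset.erase_eq_of_notMem hu]; omega
            have hInv2c : (S3 ∩ K).Nonempty := by
              have ht0K : (S.filter (G.Adj v0)) = (S ∩ K).filter (G.Adj v0) :=
                Ifilter G K hI v0 hv0K S
              have humem : u ∈ (S ∩ K).filter (G.Adj v0) := by
                rw [← ht0K]; exact Finset.mem_filter.mpr ⟨huS, hadjv0u⟩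
              have h1 : 1 ≤ (((S ∩ K).filter (G.Adj v0)).erase u).card := by
                rw [Finset.card_erase_of_mem humem, ← ht0K]
                omega
              obtain ⟨y, hy⟩ := Finset.card_pos.mp (by omega :
                0 < (((S ∩ K).filter (G.Adj v0)).erase u).card)
              have hyu : y ≠ u := (Finset.mem_erase.mp hy).1
              have hy2 := Finset.mem_filter.mp (Finset.mem_of_mem_erase hy)
              refine ⟨y, ?_⟩
              rw [hS3K]
              exact Finset.mem_erase.mpr ⟨hyu, hy2.1⟩
            obtain ⟨f0, hIH⟩ := IH S3 (by omega) hInv1c (Or.inl hInv2c)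
            obtain ⟨g1, hg1, hstep1⟩ := exists_step G sign hsym f0 S3 v0 hv0S3
            rw [hins1] at hstep1
            obtain ⟨g2, hg2, hstep2⟩ := exists_step G sign hsym g1 ((S.erase u).erase v2) v2 hv2ee
            rw [hins2] at hstep2
            obtain ⟨g3, hg3, hstep3⟩ := exists_step G sign hsym g2 (S.erase u) u hue
            rw [hins3] at hstep3
            have hES1 : ES G ((S.erase u).erase v2)
                = ES G S3 + 2 * (S3.filter (G.Adj v0)).card := by
              rw [← hins1]; exact ES_insert G S3 v0 hv0S3
            have hES2 : ES G (S.erase u)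
                = ES G ((S.erase u).erase v2)
                  + 2 * (((S.erase u).erase v2).filter (G.Adj v2)).card := by
              conv_lhs => rw [← hins2]
              exact ES_insert G ((S.erase u).erase v2) v2 hv2ee
            have hES3 : ES G S = ES G (S.erase u) + 2 * ((S.erase u).filter (G.Adj u)).card := by
              conv_lhs => rw [← hins3]
              exact ES_insert G (S.erase u) u hue
            have hXP : XP G K d S ≤ XP G K d S3 + 1 := by
              apply XP_step
              have hsub : KD G K S ⊆ KD G K S3 ∪ insert u ((S ∩ K).filter (G.Adj v0)) := by
                intro u' hu'
                rw [mem_KD] at hu'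
                obtain ⟨hu'SK, y, hy⟩ := hu'
                rw [Finset.mem_filter, Finset.mem_sdiff] at hy
                rw [Finset.mem_union, Finset.mem_insert]
                have hu'K : u' ∈ K := (Finset.mem_inter.mp hu'SK).2
                have hu'S : u' ∈ S := (Finset.mem_inter.mp hu'SK).1
                by_cases hu'u : u' = u
                · exact Or.inr (Or.inl hu'u)
                by_cases hwit : ((S3 \ K).filter (G.Adj u')).Nonempty
                · left
                  rw [mem_KD]
                  refine ⟨?_, hwit⟩
                  rw [hS3K]
                  exact Finset.mem_erase.mpr ⟨hu'u, hu'SK⟩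
                · right; right
                  have hFsub : (S \ K).filter (G.Adj u') ⊆ {v0, v2} := by
                    intro y' hy'
                    rw [Finset.mem_filter, Finset.mem_sdiff] at hy'
                    rw [Finset.mem_insert, Finset.mem_singleton]
                    by_contra hcon
                    push_neg at hcon
                    apply hwit
                    refine ⟨y', ?_⟩
                    rw [Finset.mem_filter, Finset.mem_sdiff, hS3]
                    have hy'u : y' ≠ u := by rintro rfl; exact hy'.1.2 huK
                    exact ⟨⟨Finset.mem_erase.mpr ⟨hcon.1, Finset.mem_erase.mpr
                      ⟨hcon.2, Finset.mem_erase.mpr ⟨hy'u, hy'.1.1⟩⟩⟩, hy'.1.2⟩, hy'.2⟩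
                  have hKdeg2 := Kdeg G K hK S u' hu'SK
                  have hdu2even : (S.filter (G.Adj u')).card % 2 = 0 := by
                    have := hC2 u' hu'SK; omega
                  have hcu2even : ((S \ K).filter (G.Adj u')).card % 2 = 0 := by omega
                  have hcu2pos : 1 ≤ ((S \ K).filter (G.Adj u')).card :=
                    Finset.card_pos.mpr ⟨y, Finset.mem_filter.mpr
                      ⟨Finset.mem_sdiff.mpr hy.1, hy.2⟩⟩
                  have hcardpair : ({v0, v2} : Finset V).card ≤ 2 :=
                    Finset.card_insert_le _ _ |>.trans (by simp)
                  have hFle : ((S \ K).filter (G.Adj u')).card ≤ 2 := by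
                    have := Finset.card_le_card hFsub
                    omega
                  have hFeq : (S \ K).filter (G.Adj u') = {v0, v2} := by
                    apply Finset.eq_of_subset_of_card_le hFsub
                    omega
                  have hv0F : v0 ∈ (S \ K).filter (G.Adj u') := by
                    rw [hFeq]; simp
                  rw [Finset.mem_filter]
                  exact ⟨hu'SK, (Finset.mem_filter.mp hv0F).2.symm⟩
              have hBnd : ((S ∩ K).filter (G.Adj v0)).card ≤ d := by
                refine le_trans (Finset.card_le_card ?_) (hIdeg v0 hv0K)
                intro y hy
                rw [Finset.mem_filter] at hy ⊢
                exact ⟨Finset.mem_univ y, hy.2⟩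
              calc (KD G K S).card
                  ≤ (KD G K S3 ∪ insert u ((S ∩ K).filter (G.Adj v0))).card :=
                    Finset.card_le_card hsub
                _ ≤ (KD G K S3).card + (insert u ((S ∩ K).filter (G.Adj v0))).card :=
                    Finset.card_union_le _ _
                _ ≤ (KD G K S3).card + (d+1) := by
                    have := Finset.card_insert_le u ((S ∩ K).filter (G.Adj v0))
                    omega
            exact ⟨g3, by omega⟩
          · by_cases hbi : ∃ w ∈ S ∩ K, ((S \ K).filter (G.Adj w)).card = 1
            · obtain ⟨w, hwSK, hw1⟩ := hbi
              obtain ⟨v, hveq⟩ := Finset.card_eq_one.mp hw1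
              by_cases hz : ∃ z ∈ S ∩ K, ¬ G.Adj v z
              · -- CASE 4b-i-z: w has unique I-nbr v; z ∈ K not adjacent to v; remove v,w,z
                obtain ⟨z, hzSK, hznadj⟩ := hz
                have hzS : z ∈ S := (Finset.mem_inter.mp hzSK).1
                have hzK : z ∈ K := (Finset.mem_inter.mp hzSK).2
                have hwS : w ∈ S := (Finset.mem_inter.mp hwSK).1
                have hwK : w ∈ K := (Finset.mem_inter.mp hwSK).2
                have hvmem : v ∈ (S \ K).filter (G.Adj w) := by rw [hveq]; simp
                rw [Finset.mem_filter, Finset.mem_sdiff] at hvmem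
                obtain ⟨⟨hvS, hvK⟩, hadjwv⟩ := hvmem
                have hvw : v ≠ w := by rintro rfl; exact hvK hwK
                have hvz : v ≠ z := by rintro rfl; exact hvK hzK
                have hwz : w ≠ z := by rintro rfl; exact hznadj hadjwv.symm
                have hadjwz : G.Adj w z := hK w hwK z hzK hwz
                -- unique-I-neighbor property of w
                have hwonly : ∀ x ∈ S, x ∉ K → G.Adj w x → x = v := by
                  intro x hxS hxK hadj
                  have : x ∈ (S \ K).filter (G.Adj w) :=
                    Finset.mem_filter.mpr ⟨Finset.mem_sdiff.mpr ⟨hxS, hxK⟩, hadj⟩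
                  rw [hveq, Finset.mem_singleton] at this
                  exact this
                set S3 := ((S.erase z).erase w).erase v with hS3
                have hwe : w ∈ S.erase z := Finset.mem_erase.mpr ⟨hwz, hwS⟩
                have hve : v ∈ (S.erase z).erase w :=
                  Finset.mem_erase.mpr ⟨hvw, Finset.mem_erase.mpr ⟨hvz, hvS⟩⟩
                have hins1 : insert v S3 = (S.erase z).erase w := Finset.insert_erase hve
                have hins2 : insert w ((S.erase z).erase w) = S.erase z := Finset.insert_erase hwe
                have hins3 : insert z (S.erase z) = S := Finset.insert_erase hzS
                have hvS3 : v ∉ S3 := Finset.notMem_erase _ _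
                have hwee : w ∉ (S.erase z).erase w := Finset.notMem_erase _ _
                have hze : z ∉ S.erase z := Finset.notMem_erase _ _
                have hcard3 : S3.card + 3 = S.card := by
                  rw [hS3, Finset.card_erase_of_mem hve, Finset.card_erase_of_mem hwe,
                    Finset.card_erase_of_mem hzS]
                  have h1 : 1 ≤ (S.erase z).card := Finset.card_pos.mpr ⟨w, hwe⟩
                  have h2 : 1 ≤ ((S.erase z).erase w).card := Finset.card_pos.mpr ⟨v, hve⟩
                  have h3 : (S.erase z).card = S.card - 1 := Finset.card_erase_of_mem hzS
                  have h4 : ((S.erase z).erase w).card = (S.erase z).card - 1 :=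
                    Finset.card_erase_of_mem hwe
                  omega
                have htveven : (S.filter (G.Adj v)).card % 2 = 0 := by
                  have := hC1 v hvS hvK; omega
                have hwmem : w ∈ S.filter (G.Adj v) := Finset.mem_filter.mpr ⟨hwS, hadjwv.symm⟩
                -- bd1 : nbrs of v in S3 = tv - 1
                have hbd1 : (S3.filter (G.Adj v)).card + 1 = (S.filter (G.Adj v)).card := by
                  have e1 : S3.filter (G.Adj v)
                      = (((S.filter (G.Adj v)).erase z).erase w).erase v := by
                    rw [hS3, Finset.filter_erase, Finset.filter_erase, Finset.filter_erase]
                  have e2 : (S.filter (G.Adj v)).erase z = S.filter (G.Adj v) := by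
                    apply Finset.erase_eq_of_notMem
                    intro h
                    exact hznadj (Finset.mem_filter.mp h).2
                  have e3 : ((S.filter (G.Adj v)).erase w).erase v
                      = (S.filter (G.Adj v)).erase w := by
                    apply Finset.erase_eq_of_notMem
                    intro h
                    exact G.loopless.irrefl v (Finset.mem_filter.mp (Finset.mem_of_mem_erase h)).2
                  rw [e1, e2, e3, Finset.card_erase_of_mem hwmem]
                  have : 1 ≤ (S.filter (G.Adj v)).card := Finset.card_pos.mpr ⟨w, hwmem⟩
                  omega
                have hb1 : (S3.filter (G.Adj v)).card % 2 = 1 := by omega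
                -- bd2 : nbrs of w in (S.erase z).erase w = deg w - 1
                have hdweven : (S.filter (G.Adj w)).card % 2 = 0 := by
                  have := hC2 w hwSK; omega
                have hzmem : z ∈ S.filter (G.Adj w) := Finset.mem_filter.mpr ⟨hzS, hadjwz⟩
                have hbd2 : (((S.erase z).erase w).filter (G.Adj w)).card + 1
                    = (S.filter (G.Adj w)).card := by
                  have e1 : ((S.erase z).erase w).filter (G.Adj w)
                      = ((S.filter (G.Adj w)).erase z).erase w := by
                    rw [Finset.filter_erase, Finset.filter_erase]
                  have e2 : ((S.filter (G.Adj w)).erase z).erase w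
                      = (S.filter (G.Adj w)).erase z := by
                    apply Finset.erase_eq_of_notMem
                    intro h
                    exact G.loopless.irrefl w (Finset.mem_filter.mp (Finset.mem_of_mem_erase h)).2
                  rw [e1, e2, Finset.card_erase_of_mem hzmem]
                  have : 1 ≤ (S.filter (G.Adj w)).card := Finset.card_pos.mpr ⟨z, hzmem⟩
                  omega
                have hb2 : (((S.erase z).erase w).filter (G.Adj w)).card % 2 = 1 := by omega
                -- invariants for S3
                have hS3K : S3 ∩ K = ((S ∩ K).erase z).erase w := by
                  ext y
                  simp only [hS3, Finset.mem_inter, Finset.mem_erase]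
                  constructor
                  · rintro ⟨⟨hyv, hyw, hyz, hyS⟩, hyK⟩
                    exact ⟨hyw, hyz, ⟨hyS, hyK⟩⟩
                  · rintro ⟨hyw, hyz, hyS, hyK⟩
                    exact ⟨⟨by rintro rfl; exact hvK hyK, hyw, hyz, hyS⟩, hyK⟩
                have hInv1c : ∀ x ∈ S3, x ∉ K → ((S3 ∩ K).filter (G.Adj x)).Nonempty := by
                  intro x hxS3 hxK
                  have hxS : x ∈ S := Finset.mem_of_mem_erase
                    (Finset.mem_of_mem_erase (Finset.mem_of_mem_erase hxS3))
                  have hxv : x ≠ v := (Finset.mem_erase.mp hxS3).1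
                  have hxnw : ¬ G.Adj x w := by
                    intro h
                    exact hxv (hwonly x hxS hxK h.symm)
                  have e1 : (S3 ∩ K).filter (G.Adj x)
                      = (((S ∩ K).filter (G.Adj x)).erase z).erase w := by
                    rw [hS3K, Finset.filter_erase, Finset.filter_erase]
                  have e2 : ((S ∩ K).filter (G.Adj x)).erase w = (S ∩ K).filter (G.Adj x) := by
                    apply Finset.erase_eq_of_notMem
                    intro h
                    exact hxnw (Finset.mem_filter.mp h).2
                  have e2b : (((S ∩ K).filter (G.Adj x)).erase z).erase w
                      = ((S ∩ K).filter (G.Adj x)).erase z := by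
                    apply Finset.erase_eq_of_notMem
                    intro h
                    exact hxnw (Finset.mem_filter.mp (Finset.mem_of_mem_erase h)).2
                  have e3 : ((S ∩ K).filter (G.Adj x)).card = (S.filter (G.Adj x)).card := by
                    rw [Ifilter G K hI x hxK S]
                  have e4 : (S.filter (G.Adj x)).card % 2 = 0 := by
                    have := hC1 x hxS hxK; omega
                  have e5 : 1 ≤ ((S ∩ K).filter (G.Adj x)).card :=
                    Finset.card_pos.mpr (hInv1 x hxS hxK)
                  rw [e1, e2b]
                  apply Finset.card_pos.mp
                  by_cases hu : z ∈ (S ∩ K).filter (G.Adj x)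
                  · rw [Finset.card_erase_of_mem hu]; omega
                  · rw [Finset.erase_eq_of_notMem hu]; omega
                have hInv2c : (S3 ∩ K).Nonempty := by
                  have htvK : (S.filter (G.Adj v)) = (S ∩ K).filter (G.Adj v) :=
                    Ifilter G K hI v hvK S
                  have hwmem2 : w ∈ (S ∩ K).filter (G.Adj v) := by rw [← htvK]; exact hwmem
                  have h1 : 1 ≤ (((S ∩ K).filter (G.Adj v)).erase w).card := by
                    rw [Finset.card_erase_of_mem hwmem2, ← htvK]
                    omega
                  obtain ⟨y, hy⟩ := Finset.card_pos.mp (by omega :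
                    0 < (((S ∩ K).filter (G.Adj v)).erase w).card)
                  have hyw : y ≠ w := (Finset.mem_erase.mp hy).1
                  have hy2 := Finset.mem_filter.mp (Finset.mem_of_mem_erase hy)
                  have hyz : y ≠ z := by
                    rintro rfl
                    exact hznadj hy2.2
                  refine ⟨y, ?_⟩
                  rw [hS3K]
                  exact Finset.mem_erase.mpr ⟨hyw, Finset.mem_erase.mpr ⟨hyz, hy2.1⟩⟩
                obtain ⟨f0, hIH⟩ := IH S3 (by omega) hInv1c (Or.inl hInv2c)
                obtain ⟨g1, hg1, hstep1⟩ := exists_step G sign hsym f0 S3 v hvS3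
                rw [hins1] at hstep1
                obtain ⟨g2, hg2, hstep2⟩ :=
                  exists_step G sign hsym g1 ((S.erase z).erase w) w hwee
                rw [hins2] at hstep2
                obtain ⟨g3, hg3, hstep3⟩ := exists_step G sign hsym g2 (S.erase z) z hze
                rw [hins3] at hstep3
                have hES1 : ES G ((S.erase z).erase w)
                    = ES G S3 + 2 * (S3.filter (G.Adj v)).card := by
                  rw [← hins1]; exact ES_insert G S3 v hvS3
                have hES2 : ES G (S.erase z)
                    = ES G ((S.erase z).erase w)
                      + 2 * (((S.erase z).erase w).filter (G.Adj w)).card := by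
                  conv_lhs => rw [← hins2]
                  exact ES_insert G ((S.erase z).erase w) w hwee
                have hES3 : ES G S = ES G (S.erase z)
                    + 2 * ((S.erase z).filter (G.Adj z)).card := by
                  conv_lhs => rw [← hins3]
                  exact ES_insert G (S.erase z) z hze
                have hXP : XP G K d S ≤ XP G K d S3 + 1 := by
                  apply XP_step
                  have hsub : KD G K S ⊆ KD G K S3 ∪ insert z ((S ∩ K).filter (G.Adj v)) := by
                    intro u' hu'
                    rw [mem_KD] at hu'
                    obtain ⟨hu'SK, y, hy⟩ := hu'
                    rw [Finset.mem_filter, Finset.mem_sdiff] at hy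
                    rw [Finset.mem_union, Finset.mem_insert]
                    have hu'K : u' ∈ K := (Finset.mem_inter.mp hu'SK).2
                    have hu'S : u' ∈ S := (Finset.mem_inter.mp hu'SK).1
                    by_cases hu'z : u' = z
                    · exact Or.inr (Or.inl hu'z)
                    by_cases hu'w : u' = w
                    · subst hu'w
                      exact Or.inr (Or.inr (Finset.mem_filter.mpr ⟨hu'SK, hadjwv.symm⟩))
                    by_cases hwit : ((S3 \ K).filter (G.Adj u')).Nonempty
                    · left
                      rw [mem_KD]
                      refine ⟨?_, hwit⟩
                      rw [hS3K]
                      exact Finset.mem_erase.mpr ⟨hu'w, Finset.mem_erase.mpr ⟨hu'z, hu'SK⟩⟩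
                    · right; right
                      -- every I-neighbor of u' in S must be v
                      have hyv : y = v := by
                        by_contra hyv
                        apply hwit
                        refine ⟨y, ?_⟩
                        rw [Finset.mem_filter, Finset.mem_sdiff, hS3]
                        have hyz : y ≠ z := by rintro rfl; exact hy.1.2 hzK
                        have hyw : y ≠ w := by rintro rfl; exact hy.1.2 hwK
                        exact ⟨⟨Finset.mem_erase.mpr ⟨hyv, Finset.mem_erase.mpr
                          ⟨hyw, Finset.mem_erase.mpr ⟨hyz, hy.1.1⟩⟩⟩, hy.1.2⟩, hy.2⟩
                      subst hyv
                      exact Finset.mem_filter.mpr ⟨hu'SK, hy.2.symm⟩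
                  have hBnd : ((S ∩ K).filter (G.Adj v)).card ≤ d := by
                    refine le_trans (Finset.card_le_card ?_) (hIdeg v hvK)
                    intro y hy
                    rw [Finset.mem_filter] at hy ⊢
                    exact ⟨Finset.mem_univ y, hy.2⟩
                  calc (KD G K S).card
                      ≤ (KD G K S3 ∪ insert z ((S ∩ K).filter (G.Adj v))).card :=
                        Finset.card_le_card hsub
                    _ ≤ (KD G K S3).card + (insert z ((S ∩ K).filter (G.Adj v))).card :=
                        Finset.card_union_le _ _
                    _ ≤ (KD G K S3).card + (d+1) := by
                        have := Finset.card_insert_le z ((S ∩ K).filter (G.Adj v))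
                        omega
                exact ⟨g3, by omega⟩
              · -- CASE 4b-i-noz: K∩S ⊆ N(v); XP = 0; remove v,w
                push_neg at hz
                have hwS : w ∈ S := (Finset.mem_inter.mp hwSK).1
                have hwK : w ∈ K := (Finset.mem_inter.mp hwSK).2
                have hvmem : v ∈ (S \ K).filter (G.Adj w) := by rw [hveq]; simp
                rw [Finset.mem_filter, Finset.mem_sdiff] at hvmem
                obtain ⟨⟨hvS, hvK⟩, hadjwv⟩ := hvmem
                have hvw : v ≠ w := by rintro rfl; exact hvK hwK
                have hwonly : ∀ x ∈ S, x ∉ K → G.Adj w x → x = v := by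
                  intro x hxS hxK hadj
                  have : x ∈ (S \ K).filter (G.Adj w) :=
                    Finset.mem_filter.mpr ⟨Finset.mem_sdiff.mpr ⟨hxS, hxK⟩, hadj⟩
                  rw [hveq, Finset.mem_singleton] at this
                  exact this
                set S2 := (S.erase w).erase v with hS2
                have hve : v ∈ S.erase w := Finset.mem_erase.mpr ⟨hvw, hvS⟩
                have hins1 : insert v S2 = S.erase w := Finset.insert_erase hve
                have hins2 : insert w (S.erase w) = S := Finset.insert_erase hwS
                have hvS2 : v ∉ S2 := Finset.notMem_erase _ _
                have hwe : w ∉ S.erase w := Finset.notMem_erase _ _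
                have hcard2 : S2.card + 2 = S.card := by
                  rw [hS2, Finset.card_erase_of_mem hve, Finset.card_erase_of_mem hwS]
                  have h1 : 1 ≤ (S.erase w).card := Finset.card_pos.mpr ⟨v, hve⟩
                  have h3 : (S.erase w).card = S.card - 1 := Finset.card_erase_of_mem hwS
                  omega
                have htveven : (S.filter (G.Adj v)).card % 2 = 0 := by
                  have := hC1 v hvS hvK; omega
                have hwmem : w ∈ S.filter (G.Adj v) := Finset.mem_filter.mpr ⟨hwS, hadjwv.symm⟩
                have hbd1 : (S2.filter (G.Adj v)).card + 1 = (S.filter (G.Adj v)).card := by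
                  have e1 : S2.filter (G.Adj v) = ((S.filter (G.Adj v)).erase w).erase v := by
                    rw [hS2, Finset.filter_erase, Finset.filter_erase]
                  have e3 : ((S.filter (G.Adj v)).erase w).erase v
                      = (S.filter (G.Adj v)).erase w := by
                    apply Finset.erase_eq_of_notMem
                    intro h
                    exact G.loopless.irrefl v (Finset.mem_filter.mp (Finset.mem_of_mem_erase h)).2
                  rw [e1, e3, Finset.card_erase_of_mem hwmem]
                  have : 1 ≤ (S.filter (G.Adj v)).card := Finset.card_pos.mpr ⟨w, hwmem⟩
                  omega
                have hb1 : (S2.filter (G.Adj v)).card % 2 = 1 := by omega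
                have hInv1c : ∀ x ∈ S2, x ∉ K → ((S2 ∩ K).filter (G.Adj x)).Nonempty := by
                  intro x hxS2 hxK
                  have hxS : x ∈ S := Finset.mem_of_mem_erase (Finset.mem_of_mem_erase hxS2)
                  have hxv : x ≠ v := (Finset.mem_erase.mp hxS2).1
                  obtain ⟨y, hy⟩ := hInv1 x hxS hxK
                  rw [Finset.mem_filter, Finset.mem_inter] at hy
                  have hyw : y ≠ w := by
                    rintro rfl
                    exact hxv (hwonly x hxS hxK hy.2.symm)
                  refine ⟨y, ?_⟩
                  rw [Finset.mem_filter, Finset.mem_inter, hS2]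
                  exact ⟨⟨Finset.mem_erase.mpr ⟨by rintro rfl; exact hvK hy.1.2,
                    Finset.mem_erase.mpr ⟨hyw, hy.1.1⟩⟩, hy.1.2⟩, hy.2⟩
                have hInv2c : (S2 ∩ K).Nonempty := by
                  have htvK : (S.filter (G.Adj v)) = (S ∩ K).filter (G.Adj v) :=
                    Ifilter G K hI v hvK S
                  have hwmem2 : w ∈ (S ∩ K).filter (G.Adj v) := by rw [← htvK]; exact hwmem
                  have h1 : 1 ≤ (((S ∩ K).filter (G.Adj v)).erase w).card := by
                    rw [Finset.card_erase_of_mem hwmem2, ← htvK]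
                    omega
                  obtain ⟨y, hy⟩ := Finset.card_pos.mp (by omega :
                    0 < (((S ∩ K).filter (G.Adj v)).erase w).card)
                  have hyw : y ≠ w := (Finset.mem_erase.mp hy).1
                  have hy2 := Finset.mem_filter.mp (Finset.mem_of_mem_erase hy)
                  refine ⟨y, ?_⟩
                  rw [hS2]
                  refine Finset.mem_inter.mpr ⟨?_, (Finset.mem_inter.mp hy2.1).2⟩
                  exact Finset.mem_erase.mpr ⟨by rintro rfl; exact hvK (Finset.mem_inter.mp hy2.1).2,
                    Finset.mem_erase.mpr ⟨hyw, (Finset.mem_inter.mp hy2.1).1⟩⟩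
                obtain ⟨f0, hIH⟩ := IH S2 (by omega) hInv1c (Or.inl hInv2c)
                obtain ⟨g1, hg1, hstep1⟩ := exists_step G sign hsym f0 S2 v hvS2
                rw [hins1] at hstep1
                obtain ⟨g2, hg2, hstep2⟩ := exists_step G sign hsym g1 (S.erase w) w hwe
                rw [hins2] at hstep2
                have hES1 : ES G (S.erase w) = ES G S2 + 2 * (S2.filter (G.Adj v)).card := by
                  rw [← hins1]; exact ES_insert G S2 v hvS2
                have hES2 : ES G S = ES G (S.erase w)
                    + 2 * ((S.erase w).filter (G.Adj w)).card := by
                  conv_lhs => rw [← hins2]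
                  exact ES_insert G (S.erase w) w hwe
                have hXP : XP G K d S = 0 := by
                  apply XP_zero
                  have hsub : KD G K S ⊆ S.filter (G.Adj v) := by
                    intro u' hu'
                    rw [mem_KD] at hu'
                    obtain ⟨hu'SK, _⟩ := hu'
                    rw [Finset.mem_filter]
                    exact ⟨(Finset.mem_inter.mp hu'SK).1, hz u' hu'SK⟩
                  calc (KD G K S).card ≤ (S.filter (G.Adj v)).card := Finset.card_le_card hsub
                    _ ≤ ((Finset.univ : Finset V).filter (G.Adj v)).card :=
                        Finset.card_le_card (fun y hy => Finset.mem_filter.mpr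
                          ⟨Finset.mem_univ y, (Finset.mem_filter.mp hy).2⟩)
                    _ ≤ d := hIdeg v hvK
                exact ⟨g2, by omega⟩
            · -- CASE 4b-ii: no K-vertex has exactly one I-neighbor; c_u ≥ 3; remove v1,v2,v3,u
              push_neg at hbi
              obtain ⟨v1, hv1⟩ := hIS
              rw [Finset.mem_sdiff] at hv1
              obtain ⟨hv1S, hv1K⟩ := hv1
              obtain ⟨u, hu⟩ := hInv1 v1 hv1S hv1K
              rw [Finset.mem_filter] at hu
              obtain ⟨huSK, hadjv1u⟩ := hu
              have huS : u ∈ S := (Finset.mem_inter.mp huSK).1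
              have huK : u ∈ K := (Finset.mem_inter.mp huSK).2
              have hKdeg := Kdeg G K hK S u huSK
              have hdueven : (S.filter (G.Adj u)).card % 2 = 0 := by
                have := hC2 u huSK; omega
              have hcuodd : ((S \ K).filter (G.Adj u)).card % 2 = 1 := by omega
              have hcune1 : ((S \ K).filter (G.Adj u)).card ≠ 1 := hbi u huSK
              have hv1mem : v1 ∈ (S \ K).filter (G.Adj u) :=
                Finset.mem_filter.mpr ⟨Finset.mem_sdiff.mpr ⟨hv1S, hv1K⟩, hadjv1u.symm⟩
              have hcu3 : 3 ≤ ((S \ K).filter (G.Adj u)).card := by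
                have : 1 ≤ ((S \ K).filter (G.Adj u)).card := Finset.card_pos.mpr ⟨v1, hv1mem⟩
                omega
              obtain ⟨v2, hv2mem, hv2v1⟩ :=
                Finset.exists_mem_ne (s := (S \ K).filter (G.Adj u)) (by omega) v1
              have hv2e1 : v2 ∈ ((S \ K).filter (G.Adj u)).erase v1 :=
                Finset.mem_erase.mpr ⟨hv2v1, hv2mem⟩
              have hv3ex : 0 < ((((S \ K).filter (G.Adj u)).erase v1).erase v2).card := by
                have h1 : (((S \ K).filter (G.Adj u)).erase v1).card
                    = ((S \ K).filter (G.Adj u)).card - 1 :=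
                  Finset.card_erase_of_mem hv1mem
                have h2 : ((((S \ K).filter (G.Adj u)).erase v1).erase v2).card
                    = (((S \ K).filter (G.Adj u)).erase v1).card - 1 :=
                  Finset.card_erase_of_mem hv2e1
                omega
              obtain ⟨v3, hv3⟩ := Finset.card_pos.mp hv3ex
              have hv3v2 : v3 ≠ v2 := (Finset.mem_erase.mp hv3).1
              have hv3v1 : v3 ≠ v1 := (Finset.mem_erase.mp (Finset.mem_of_mem_erase hv3)).1
              have hv3mem : v3 ∈ (S \ K).filter (G.Adj u) :=
                Finset.mem_of_mem_erase (Finset.mem_of_mem_erase hv3)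
              rw [Finset.mem_filter, Finset.mem_sdiff] at hv2mem hv3mem
              obtain ⟨⟨hv2S, hv2K⟩, hadjuv2⟩ := hv2mem
              obtain ⟨⟨hv3S, hv3K⟩, hadjuv3⟩ := hv3mem
              have hv1u : v1 ≠ u := by rintro rfl; exact hv1K huK
              have hv2u : v2 ≠ u := by rintro rfl; exact hv2K huK
              have hv3u : v3 ≠ u := by rintro rfl; exact hv3K huK
              have hnadj12 : ¬ G.Adj v1 v2 := hI v1 hv1K v2 hv2K
              have hnadj13 : ¬ G.Adj v1 v3 := hI v1 hv1K v3 hv3K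
              have hnadj23 : ¬ G.Adj v2 v3 := hI v2 hv2K v3 hv3K
              set S4 := (((S.erase u).erase v3).erase v2).erase v1 with hS4
              have hv3e : v3 ∈ S.erase u := Finset.mem_erase.mpr ⟨hv3u, hv3S⟩
              have hv2e : v2 ∈ (S.erase u).erase v3 :=
                Finset.mem_erase.mpr ⟨Ne.symm hv3v2, Finset.mem_erase.mpr ⟨hv2u, hv2S⟩⟩
              have hv1e : v1 ∈ ((S.erase u).erase v3).erase v2 :=
                Finset.mem_erase.mpr ⟨Ne.symm hv2v1, Finset.mem_erase.mpr
                  ⟨Ne.symm hv3v1, Finset.mem_erase.mpr ⟨hv1u, hv1S⟩⟩⟩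
              have hins1 : insert v1 S4 = ((S.erase u).erase v3).erase v2 :=
                Finset.insert_erase hv1e
              have hins2 : insert v2 (((S.erase u).erase v3).erase v2) = (S.erase u).erase v3 :=
                Finset.insert_erase hv2e
              have hins3 : insert v3 ((S.erase u).erase v3) = S.erase u := Finset.insert_erase hv3e
              have hins4 : insert u (S.erase u) = S := Finset.insert_erase huS
              have hv1S4 : v1 ∉ S4 := Finset.notMem_erase _ _
              have hv2ee : v2 ∉ ((S.erase u).erase v3).erase v2 := Finset.notMem_erase _ _
              have hv3ee : v3 ∉ (S.erase u).erase v3 := Finset.notMem_erase _ _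
              have hue : u ∉ S.erase u := Finset.notMem_erase _ _
              have hcard4 : S4.card + 4 = S.card := by
                have h3 : (S.erase u).card = S.card - 1 := Finset.card_erase_of_mem huS
                have h4 : ((S.erase u).erase v3).card = (S.erase u).card - 1 :=
                  Finset.card_erase_of_mem hv3e
                have h5 : (((S.erase u).erase v3).erase v2).card
                    = ((S.erase u).erase v3).card - 1 := Finset.card_erase_of_mem hv2e
                have h6 : S4.card = (((S.erase u).erase v3).erase v2).card - 1 := by
                  rw [hS4]; exact Finset.card_erase_of_mem hv1e
                have p1 : 1 ≤ (S.erase u).card := Finset.card_pos.mpr ⟨v3, hv3e⟩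
                have p2 : 1 ≤ ((S.erase u).erase v3).card := Finset.card_pos.mpr ⟨v2, hv2e⟩
                have p3 : 1 ≤ (((S.erase u).erase v3).erase v2).card :=
                  Finset.card_pos.mpr ⟨v1, hv1e⟩
                omega
              have ht1even : (S.filter (G.Adj v1)).card % 2 = 0 := by
                have := hC1 v1 hv1S hv1K; omega
              have ht2even : (S.filter (G.Adj v2)).card % 2 = 0 := by
                have := hC1 v2 hv2S hv2K; omega
              have ht3even : (S.filter (G.Adj v3)).card % 2 = 0 := by
                have := hC1 v3 hv3S hv3K; omega
              -- bd for v1 over S4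
              have hbd1 : (S4.filter (G.Adj v1)).card + 1 = (S.filter (G.Adj v1)).card := by
                have e1 : S4.filter (G.Adj v1)
                    = ((((S.filter (G.Adj v1)).erase u).erase v3).erase v2).erase v1 := by
                  rw [hS4, Finset.filter_erase, Finset.filter_erase, Finset.filter_erase,
                    Finset.filter_erase]
                have e2 : ((S.filter (G.Adj v1)).erase u).erase v3
                    = (S.filter (G.Adj v1)).erase u := by
                  apply Finset.erase_eq_of_notMem
                  intro h
                  exact hnadj13 (Finset.mem_filter.mp (Finset.mem_of_mem_erase h)).2
                have e3 : ((S.filter (G.Adj v1)).erase u).erase v2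
                    = (S.filter (G.Adj v1)).erase u := by
                  apply Finset.erase_eq_of_notMem
                  intro h
                  exact hnadj12 (Finset.mem_filter.mp (Finset.mem_of_mem_erase h)).2
                have e4 : ((S.filter (G.Adj v1)).erase u).erase v1
                    = (S.filter (G.Adj v1)).erase u := by
                  apply Finset.erase_eq_of_notMem
                  intro h
                  exact G.loopless.irrefl v1 (Finset.mem_filter.mp (Finset.mem_of_mem_erase h)).2
                have humem : u ∈ S.filter (G.Adj v1) := Finset.mem_filter.mpr ⟨huS, hadjv1u⟩
                rw [e1, e2, e3, e4, Finset.card_erase_of_mem humem]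
                have : 1 ≤ (S.filter (G.Adj v1)).card := Finset.card_pos.mpr ⟨u, humem⟩
                omega
              have hb1 : (S4.filter (G.Adj v1)).card % 2 = 1 := by omega
              -- bd for v2 over T1
              have hbd2 : ((((S.erase u).erase v3).erase v2).filter (G.Adj v2)).card + 1
                  = (S.filter (G.Adj v2)).card := by
                have e1 : (((S.erase u).erase v3).erase v2).filter (G.Adj v2)
                    = (((S.filter (G.Adj v2)).erase u).erase v3).erase v2 := by
                  rw [Finset.filter_erase, Finset.filter_erase, Finset.filter_erase]
                have e2 : ((S.filter (G.Adj v2)).erase u).erase v3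
                    = (S.filter (G.Adj v2)).erase u := by
                  apply Finset.erase_eq_of_notMem
                  intro h
                  exact hnadj23 (Finset.mem_filter.mp (Finset.mem_of_mem_erase h)).2
                have e3 : ((S.filter (G.Adj v2)).erase u).erase v2
                    = (S.filter (G.Adj v2)).erase u := by
                  apply Finset.erase_eq_of_notMem
                  intro h
                  exact G.loopless.irrefl v2 (Finset.mem_filter.mp (Finset.mem_of_mem_erase h)).2
                have humem : u ∈ S.filter (G.Adj v2) :=
                  Finset.mem_filter.mpr ⟨huS, hadjuv2.symm⟩
                rw [e1, e2, e3, Finset.card_erase_of_mem humem]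
                have : 1 ≤ (S.filter (G.Adj v2)).card := Finset.card_pos.mpr ⟨u, humem⟩
                omega
              have hb2 : ((((S.erase u).erase v3).erase v2).filter (G.Adj v2)).card % 2 = 1 := by
                omega
              -- bd for v3 over (S.erase u).erase v3
              have hbd3 : (((S.erase u).erase v3).filter (G.Adj v3)).card + 1
                  = (S.filter (G.Adj v3)).card := by
                have e1 : ((S.erase u).erase v3).filter (G.Adj v3)
                    = ((S.filter (G.Adj v3)).erase u).erase v3 := by
                  rw [Finset.filter_erase, Finset.filter_erase]
                have e3 : ((S.filter (G.Adj v3)).erase u).erase v3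
                    = (S.filter (G.Adj v3)).erase u := by
                  apply Finset.erase_eq_of_notMem
                  intro h
                  exact G.loopless.irrefl v3 (Finset.mem_filter.mp (Finset.mem_of_mem_erase h)).2
                have humem : u ∈ S.filter (G.Adj v3) :=
                  Finset.mem_filter.mpr ⟨huS, hadjuv3.symm⟩
                rw [e1, e3, Finset.card_erase_of_mem humem]
                have : 1 ≤ (S.filter (G.Adj v3)).card := Finset.card_pos.mpr ⟨u, humem⟩
                omega
              have hb3 : (((S.erase u).erase v3).filter (G.Adj v3)).card % 2 = 1 := by omega
              have hS4K : S4 ∩ K = (S ∩ K).erase u := by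
                ext y
                simp only [hS4, Finset.mem_inter, Finset.mem_erase]
                constructor
                · rintro ⟨⟨hy1, hy2, hy3, hyu, hyS⟩, hyK⟩
                  exact ⟨hyu, ⟨hyS, hyK⟩⟩
                · rintro ⟨hyu, hyS, hyK⟩
                  exact ⟨⟨by rintro rfl; exact hv1K hyK, by rintro rfl; exact hv2K hyK,
                    by rintro rfl; exact hv3K hyK, hyu, hyS⟩, hyK⟩
              have hInv1c : ∀ x ∈ S4, x ∉ K → ((S4 ∩ K).filter (G.Adj x)).Nonempty := by
                intro x hxS4 hxK
                have hxS : x ∈ S := Finset.mem_of_mem_erase (Finset.mem_of_mem_erase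
                  (Finset.mem_of_mem_erase (Finset.mem_of_mem_erase hxS4)))
                have e1 : (S4 ∩ K).filter (G.Adj x) = ((S ∩ K).filter (G.Adj x)).erase u := by
                  rw [hS4K, Finset.filter_erase]
                have e2 : ((S ∩ K).filter (G.Adj x)).card = (S.filter (G.Adj x)).card := by
                  rw [Ifilter G K hI x hxK S]
                have e3 : (S.filter (G.Adj x)).card % 2 = 0 := by
                  have := hC1 x hxS hxK; omega
                have e4 : 1 ≤ ((S ∩ K).filter (G.Adj x)).card :=
                  Finset.card_pos.mpr (hInv1 x hxS hxK)
                rw [e1]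
                apply Finset.card_pos.mp
                by_cases hum : u ∈ (S ∩ K).filter (G.Adj x)
                · rw [Finset.card_erase_of_mem hum]; omega
                · rw [Finset.erase_eq_of_notMem hum]; omega
              have hInv2c : (S4 ∩ K).Nonempty := by
                have ht1K : (S.filter (G.Adj v1)) = (S ∩ K).filter (G.Adj v1) :=
                  Ifilter G K hI v1 hv1K S
                have humem : u ∈ (S ∩ K).filter (G.Adj v1) := by
                  rw [← ht1K]; exact Finset.mem_filter.mpr ⟨huS, hadjv1u⟩
                have h1 : 1 ≤ (((S ∩ K).filter (G.Adj v1)).erase u).card := by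
                  rw [Finset.card_erase_of_mem humem, ← ht1K]
                  omega
                obtain ⟨y, hy⟩ := Finset.card_pos.mp (by omega :
                  0 < (((S ∩ K).filter (G.Adj v1)).erase u).card)
                have hyu : y ≠ u := (Finset.mem_erase.mp hy).1
                have hy2 := Finset.mem_filter.mp (Finset.mem_of_mem_erase hy)
                refine ⟨y, ?_⟩
                rw [hS4K]
                exact Finset.mem_erase.mpr ⟨hyu, hy2.1⟩
              obtain ⟨f0, hIH⟩ := IH S4 (by omega) hInv1c (Or.inl hInv2c)
              obtain ⟨g1, hg1, hstep1⟩ := exists_step G sign hsym f0 S4 v1 hv1S4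
              rw [hins1] at hstep1
              obtain ⟨g2, hg2, hstep2⟩ :=
                exists_step G sign hsym g1 (((S.erase u).erase v3).erase v2) v2 hv2ee
              rw [hins2] at hstep2
              obtain ⟨g3, hg3, hstep3⟩ :=
                exists_step G sign hsym g2 ((S.erase u).erase v3) v3 hv3ee
              rw [hins3] at hstep3
              obtain ⟨g4, hg4, hstep4⟩ := exists_step G sign hsym g3 (S.erase u) u hue
              rw [hins4] at hstep4
              have hES1 : ES G (((S.erase u).erase v3).erase v2)
                  = ES G S4 + 2 * (S4.filter (G.Adj v1)).card := by
                rw [← hins1]; exact ES_insert G S4 v1 hv1S4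
              have hES2 : ES G ((S.erase u).erase v3)
                  = ES G (((S.erase u).erase v3).erase v2)
                    + 2 * ((((S.erase u).erase v3).erase v2).filter (G.Adj v2)).card := by
                conv_lhs => rw [← hins2]
                exact ES_insert G (((S.erase u).erase v3).erase v2) v2 hv2ee
              have hES3 : ES G (S.erase u)
                  = ES G ((S.erase u).erase v3)
                    + 2 * (((S.erase u).erase v3).filter (G.Adj v3)).card := by
                conv_lhs => rw [← hins3]
                exact ES_insert G ((S.erase u).erase v3) v3 hv3ee
              have hES4 : ES G S = ES G (S.erase u)
                  + 2 * ((S.erase u).filter (G.Adj u)).card := by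
                conv_lhs => rw [← hins4]
                exact ES_insert G (S.erase u) u hue
              have hXP : XP G K d S ≤ XP G K d S4 + 1 := by
                apply XP_step
                have hsub : KD G K S ⊆ KD G K S4 ∪ insert u ((S ∩ K).filter (G.Adj v1)) := by
                  intro u' hu'
                  rw [mem_KD] at hu'
                  obtain ⟨hu'SK, y, hy⟩ := hu'
                  rw [Finset.mem_filter, Finset.mem_sdiff] at hy
                  rw [Finset.mem_union, Finset.mem_insert]
                  have hu'K : u' ∈ K := (Finset.mem_inter.mp hu'SK).2
                  by_cases hu'u : u' = u
                  · exact Or.inr (Or.inl hu'u)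
                  by_cases hwit : ((S4 \ K).filter (G.Adj u')).Nonempty
                  · left
                    rw [mem_KD]
                    refine ⟨?_, hwit⟩
                    rw [hS4K]
                    exact Finset.mem_erase.mpr ⟨hu'u, hu'SK⟩
                  · right; right
                    have hFsub : (S \ K).filter (G.Adj u') ⊆ {v1, v2, v3} := by
                      intro y' hy'
                      rw [Finset.mem_filter, Finset.mem_sdiff] at hy'
                      simp only [Finset.mem_insert, Finset.mem_singleton]
                      by_contra hcon
                      push_neg at hcon
                      apply hwit
                      refine ⟨y', ?_⟩
                      rw [Finset.mem_filter, Finset.mem_sdiff, hS4]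
                      have hy'u : y' ≠ u := by rintro rfl; exact hy'.1.2 huK
                      exact ⟨⟨Finset.mem_erase.mpr ⟨hcon.1, Finset.mem_erase.mpr ⟨hcon.2.1,
                        Finset.mem_erase.mpr ⟨hcon.2.2, Finset.mem_erase.mpr
                          ⟨hy'u, hy'.1.1⟩⟩⟩⟩, hy'.1.2⟩, hy'.2⟩
                    have hKdeg2 := Kdeg G K hK S u' hu'SK
                    have hdu2even : (S.filter (G.Adj u')).card % 2 = 0 := by
                      have := hC2 u' hu'SK; omega
                    have hcu2odd : ((S \ K).filter (G.Adj u')).card % 2 = 1 := by omega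
                    have hcu2ne1 : ((S \ K).filter (G.Adj u')).card ≠ 1 := hbi u' hu'SK
                    have hcu2pos : 1 ≤ ((S \ K).filter (G.Adj u')).card :=
                      Finset.card_pos.mpr ⟨y, Finset.mem_filter.mpr
                        ⟨Finset.mem_sdiff.mpr hy.1, hy.2⟩⟩
                    have hcardtrip : ({v1, v2, v3} : Finset V).card ≤ 3 := by
                      apply le_trans (Finset.card_insert_le _ _)
                      have := Finset.card_insert_le v2 ({v3} : Finset V)
                      simp at this ⊢
                      omega
                    have hFle : ((S \ K).filter (G.Adj u')).card ≤ 3 := by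
                      have := Finset.card_le_card hFsub
                      omega
                    have hFeq : (S \ K).filter (G.Adj u') = {v1, v2, v3} := by
                      apply Finset.eq_of_subset_of_card_le hFsub
                      omega
                    have hv1F : v1 ∈ (S \ K).filter (G.Adj u') := by
                      rw [hFeq]; simp
                    rw [Finset.mem_filter]
                    exact ⟨hu'SK, (Finset.mem_filter.mp hv1F).2.symm⟩
                have hBnd : ((S ∩ K).filter (G.Adj v1)).card ≤ d := by
                  refine le_trans (Finset.card_le_card ?_) (hIdeg v1 hv1K)
                  intro y hy
                  rw [Finset.mem_filter] at hy ⊢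
                  exact ⟨Finset.mem_univ y, hy.2⟩
                calc (KD G K S).card
                    ≤ (KD G K S4 ∪ insert u ((S ∩ K).filter (G.Adj v1))).card :=
                      Finset.card_le_card hsub
                  _ ≤ (KD G K S4).card + (insert u ((S ∩ K).filter (G.Adj v1))).card :=
                      Finset.card_union_le _ _
                  _ ≤ (KD G K S4).card + (d+1) := by
                      have := Finset.card_insert_le u ((S ∩ K).filter (G.Adj v1))
                      omega
              exact ⟨g4, by omega⟩

end Infra

open SimpleGraph

/-- If `G` is a connected signed `d*`-split graph with witnessing partition
`(K, I)` and `|K| ≥ (d+1)k`, then `G` has a balanced subgraph with at least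
`m/2 + (n-1)/4 + k/4` edges. -/
theorem stmt1 {V : Type*} [Fintype V] (G : SimpleGraph V) (sign : V → V → Bool)
    (hsym : ∀ u v, sign u v = sign v u)
    (d k : ℕ) (hd : 1 ≤ d) (hk : 1 ≤ k)
    (hconn : G.Connected)
    (K I : Set V) (hcover : K ∪ I = Set.univ) (hdisj : Disjoint K I)
    (hK : G.IsClique K)
    (hI : ∀ u ∈ I, ∀ v ∈ I, ¬ G.Adj u v)
    (hKnbr : ∀ v ∈ K, ∃ u ∈ I, G.Adj v u)
    (hIdeg : ∀ v ∈ I, (G.neighborSet v).ncard ≤ d)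
    (hKcard : (d + 1) * k ≤ K.ncard) :
    (G.edgeSet.ncard : ℚ) / 2 + ((Fintype.card V : ℚ) - 1) / 4 + (k : ℚ) / 4
      ≤ (beta G sign : ℚ) := by
  classical
  -- Finset versions
  set Kf : Finset V := Finset.univ.filter (· ∈ K) with hKf
  have hKfmem : ∀ x, x ∈ Kf ↔ x ∈ K := by
    intro x; rw [hKf, Finset.mem_filter]; simp
  have hmemI : ∀ x, x ∉ K → x ∈ I := by
    intro x hx
    have : x ∈ K ∪ I := by rw [hcover]; trivial
    rcases this with h | h
    · exact absurd h hx
    · exact h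
  have hInK : ∀ x, x ∈ I → x ∉ K := by
    intro x hx hxK
    exact Set.disjoint_left.mp hdisj hxK hx
  have hKcard' : (d + 1) * k ≤ Kf.card := by
    have : (↑Kf : Set V) = K := by
      ext x; rw [Finset.coe_filter]; simp
    rw [← this, Set.ncard_coe_finset] at hKcard
    exact hKcard
  -- hypotheses for main_ind
  have hK' : ∀ u ∈ Kf, ∀ w ∈ Kf, u ≠ w → G.Adj u w := by
    intro u hu w hw hne
    exact hK ((hKfmem u).mp hu) ((hKfmem w).mp hw) hne
  have hI' : ∀ x, x ∉ Kf → ∀ y, y ∉ Kf → ¬ G.Adj x y := by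
    intro x hx y hy
    exact hI x (hmemI x (fun h => hx ((hKfmem x).mpr h)))
      y (hmemI y (fun h => hy ((hKfmem y).mpr h)))
  have hIdeg' : ∀ x, x ∉ Kf → ((Finset.univ : Finset V).filter (G.Adj x)).card ≤ d := by
    intro x hx
    have hxI : x ∈ I := hmemI x (fun h => hx ((hKfmem x).mpr h))
    have hns : G.neighborSet x = ↑((Finset.univ : Finset V).filter (G.Adj x)) := by
      ext y; simp [SimpleGraph.mem_neighborSet]
    have := hIdeg x hxI
    rw [hns, Set.ncard_coe_finset] at this
    exact this
  -- cardinality of V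
  have hV2 : 2 ≤ Fintype.card V := by
    have h1 : Kf.card ≤ Fintype.card V := by
      rw [← Finset.card_univ]
      exact Finset.card_le_card (Finset.subset_univ _)
    have : 2 ≤ (d+1)*k := by nlinarith
    omega
  -- invariants at univ
  have hInv1 : ∀ x ∈ (Finset.univ : Finset V), x ∉ Kf →
      (((Finset.univ : Finset V) ∩ Kf).filter (G.Adj x)).Nonempty := by
    intro x _ hx
    obtain ⟨y, hyne⟩ := Fintype.exists_ne_of_one_lt_card (by omega) x
    obtain ⟨p⟩ := hconn.preconnected x y
    cases p with
    | nil => exact absurd rfl hyne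
    | @cons _ z _ hadj p' =>
      have hzK : z ∈ Kf := by
        by_contra hzKf
        exact hI' x hx z hzKf hadj
      exact ⟨z, Finset.mem_filter.mpr ⟨Finset.mem_inter.mpr ⟨Finset.mem_univ _, hzK⟩, hadj⟩⟩
  have hInv2 : ((Finset.univ : Finset V) ∩ Kf).Nonempty ∨ (Finset.univ : Finset V).card ≤ 1 := by
    left
    have : Kf.Nonempty := Finset.card_pos.mp (by nlinarith)
    obtain ⟨u, hu⟩ := this
    exact ⟨u, Finset.mem_inter.mpr ⟨Finset.mem_univ _, hu⟩⟩
  obtain ⟨f, hf⟩ := main_ind G sign Kf d hsym hd hK' hI' hIdeg'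
    (Finset.univ : Finset V).card Finset.univ le_rfl hInv1 hInv2
  -- XP at univ is ≥ k
  have hXPk : k ≤ XP G Kf d Finset.univ := by
    have hsub : Kf ⊆ KD G Kf Finset.univ := by
      intro u hu
      rw [mem_KD]
      refine ⟨Finset.mem_inter.mpr ⟨Finset.mem_univ _, hu⟩, ?_⟩
      obtain ⟨v, hvI, hadj⟩ := hKnbr u ((hKfmem u).mp hu)
      refine ⟨v, Finset.mem_filter.mpr ⟨Finset.mem_sdiff.mpr ⟨Finset.mem_univ _, ?_⟩, hadj⟩⟩
      intro hvKf
      exact hInK v hvI ((hKfmem v).mp hvKf)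
    have h1 : (d+1)*k ≤ (KD G Kf Finset.univ).card :=
      le_trans hKcard' (Finset.card_le_card hsub)
    rw [XP, Nat.le_div_iff_mul_le (by omega : 0 < d + 1), Nat.mul_comm k (d+1)]
    exact h1
  -- the balanced subgraph H
  set H : SimpleGraph V :=
    { Adj := satp G sign f,
      symm := ⟨fun a b h => satp_symm G sign hsym f a b h⟩,
      loopless := ⟨fun v h => G.loopless.irrefl v h.1⟩ } with hH
  have hHle : H ≤ G := fun _ _ h => h.1
  have hHbal : IsBalancedSigned H sign := ⟨f, fun u v h => h.2⟩
  have hHDec : DecidableRel H.Adj := fun a b => inferInstanceAs (Decidable (satp G sign f a b))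
  -- edge counts
  have hPS : 2 * H.edgeFinset.card = PS G sign f Finset.univ := by
    rw [SimpleGraph.two_mul_card_edgeFinset, PS, cpairs_univ_eq]
    congr 1
    ext q
    simp only [Finset.mem_filter]
    exact Iff.rfl
  have hES : 2 * G.edgeFinset.card = ES G Finset.univ := by
    rw [SimpleGraph.two_mul_card_edgeFinset, ES, cpairs_univ_eq]
  have hma : G.edgeSet.ncard = G.edgeFinset.card := by
    rw [SimpleGraph.edgeFinset, Set.ncard_eq_toFinset_card']
  have hHcard : H.edgeSet.ncard = H.edgeFinset.card := by
    rw [SimpleGraph.edgeFinset, Set.ncard_eq_toFinset_card']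
  -- beta bound
  have hbeta : H.edgeFinset.card ≤ beta G sign := by
    apply le_csSup
    · refine ⟨G.edgeSet.ncard, ?_⟩
      rintro m ⟨H', hle, _, rfl⟩
      exact Set.ncard_le_ncard (SimpleGraph.edgeSet_mono hle) (Set.toFinite _)
    · exact ⟨H, hHle, hHbal, hHcard⟩
  -- final arithmetic
  have hcardV : (Finset.univ : Finset V).card = Fintype.card V := Finset.card_univ
  have hfinal : 2 * G.edgeFinset.card + Fintype.card V + k
      ≤ 4 * H.edgeFinset.card + 1 := by
    have h1 := hf
    rw [← hPS] at h1
    rw [← hES] at h1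
    omega
  have hQ : (2 * G.edgeFinset.card + Fintype.card V + k : ℚ)
      ≤ 4 * (beta G sign : ℚ) + 1 := by
    have h2 : 2 * G.edgeFinset.card + Fintype.card V + k ≤ 4 * beta G sign + 1 := by omega
    exact_mod_cast h2
  rw [hma]
  have hV1 : (1 : ℚ) ≤ (Fintype.card V : ℚ) := by
    have : (1:ℕ) ≤ Fintype.card V := by omega
    exact_mod_cast this
  push_cast at hQ ⊢
  linarith
end

section
/- Let d ≥ 1 and k ≥ 1 be integers, and let G be a connected signed d*-split graph with n vertices and m edges, with a partition of V(G) into a clique K and an independent set I witnessing the d*-split property. Let K_h be the set of vertices of K having at least two neighbors in I, and let I_h be the set of vertices of I having a neighbor in K_h. If |I_h| ≥ 2dk, then G contains a balanced subgraph with at least m/2 + (n−1)/4 + k/4 edges. -/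
open SimpleGraph

/- auxiliary machinery -/
open Finset in
section
set_option linter.unusedSectionVars false

namespace Stmt2Aux

variable {V : Type*} [Fintype V] [DecidableEq V]

/-- generic pair count -/
def pCnt (w : V → V → ℕ) (A B : Finset V) : ℕ := ∑ a ∈ A, ∑ b ∈ B, w a b

lemma pCnt_union_left (w : V → V → ℕ) {A A' : Finset V} (B : Finset V)
    (h : Disjoint A A') : pCnt w (A ∪ A') B = pCnt w A B + pCnt w A' B := by
  unfold pCnt; rw [Finset.sum_union h]

lemma pCnt_comm (w : V → V → ℕ) (hw : ∀ a b, w a b = w b a) (A B : Finset V) :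
    pCnt w A B = pCnt w B A := by
  unfold pCnt; rw [Finset.sum_comm]
  exact Finset.sum_congr rfl fun b _ => Finset.sum_congr rfl fun a _ => hw a b

lemma pCnt_union_right (w : V → V → ℕ) (A : Finset V) {B B' : Finset V}
    (h : Disjoint B B') : pCnt w A (B ∪ B') = pCnt w A B + pCnt w A B' := by
  unfold pCnt
  rw [← Finset.sum_add_distrib]
  exact Finset.sum_congr rfl fun a _ => Finset.sum_union h

lemma pCnt_singleton (w : V → V → ℕ) (a : V) (B : Finset V) :
    pCnt w {a} B = ∑ b ∈ B, w a b := by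
  unfold pCnt; rw [Finset.sum_singleton]

lemma pCnt_split (w : V → V → ℕ) (hw : ∀ a b, w a b = w b a) {P B : Finset V}
    (h : Disjoint P B) :
    pCnt w (P ∪ B) (P ∪ B) = pCnt w P P + pCnt w B B + 2 * pCnt w B P := by
  rw [pCnt_union_left w _ h, pCnt_union_right w _ h, pCnt_union_right w _ h,
    pCnt_comm w hw P B]
  ring

variable (G : SimpleGraph V) [DecidableRel G.Adj] (sign : V → V → Bool)

/-- satisfied-pair weight -/
def sw (f : V → Bool) (a b : V) : ℕ :=
  if G.Adj a b ∧ sign a b = (f a == f b) then 1 else 0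

/-- adjacency weight -/
def aw (a b : V) : ℕ := if G.Adj a b then 1 else 0

def sCnt (f : V → Bool) (A B : Finset V) : ℕ := pCnt (sw G sign f) A B
def aCnt (A B : Finset V) : ℕ := pCnt (aw G) A B

lemma sw_symm (hsym : ∀ u v, sign u v = sign v u) (f : V → Bool) (a b : V) : sw G sign f a b = sw G sign f b a := by
  unfold sw
  congr 1
  rw [eq_iff_iff]
  constructor
  · rintro ⟨h1, h2⟩; exact ⟨h1.symm, by rw [← hsym, h2, Bool.beq_comm]⟩
  · rintro ⟨h1, h2⟩; exact ⟨h1.symm, by rw [hsym, h2, Bool.beq_comm]⟩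

lemma aw_symm (a b : V) : aw G a b = aw G b a := by
  unfold aw; congr 1; rw [eq_iff_iff]; exact ⟨fun h => h.symm, fun h => h.symm⟩

lemma sw_le_aw (f : V → Bool) (a b : V) : sw G sign f a b ≤ aw G a b := by
  unfold sw aw; split
  · next h => simp [h.1]
  · omega

lemma sCnt_congr (f f' : V → Bool) {A B : Finset V}
    (hA : ∀ x ∈ A, f x = f' x) (hB : ∀ x ∈ B, f x = f' x) :
    sCnt G sign f A B = sCnt G sign f' A B := by
  unfold sCnt pCnt
  refine Finset.sum_congr rfl fun a ha => Finset.sum_congr rfl fun b hb => ?_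
  unfold sw
  rw [hA a ha, hB b hb]

def rowS (f₀ : V → Bool) (P : Finset V) (v : V) (b : Bool) : ℕ :=
  ∑ q ∈ P, if G.Adj v q ∧ sign v q = (b == f₀ q) then 1 else 0

def rowA (P : Finset V) (v : V) : ℕ :=
  ∑ q ∈ P, if G.Adj v q then 1 else 0

lemma rowS_add (f₀ : V → Bool) (P : Finset V) (v : V) :
    rowS G sign f₀ P v true + rowS G sign f₀ P v false = rowA G P v := by
  unfold rowS rowA
  rw [← Finset.sum_add_distrib]
  refine Finset.sum_congr rfl fun q _ => ?_
  by_cases h : G.Adj v q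
  · simp only [h, true_and, if_true]
    cases hb : f₀ q <;> cases hs : sign v q <;> simp
  · simp [h]

def tv (f₀ : V → Bool) (P : Finset V) (u : V) (c : Bool) (v : V) (b : Bool) : ℕ :=
  rowS G sign f₀ P v b + (if sign v u = (b == c) then 1 else 0)

def best (f₀ : V → Bool) (P : Finset V) (u : V) (c : Bool) (v : V) : Bool :=
  if tv G sign f₀ P u c v false ≤ tv G sign f₀ P u c v true then true else false

lemma tv_best (f₀ : V → Bool) (P : Finset V) (u : V) (c : Bool) (v : V) :
    tv G sign f₀ P u c v (best G sign f₀ P u c v)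
      = max (tv G sign f₀ P u c v true) (tv G sign f₀ P u c v false) := by
  unfold best
  split
  · next h => rw [max_eq_left h]
  · next h => rw [max_eq_right (le_of_not_ge h)]

lemma max_ineq (x y : ℕ) : x + y + 2 ≤ max (x+1) y + max x (y+1) := by
  simp only [Nat.max_def]; split <;> split <;> omega

lemma tv_sum (f₀ : V → Bool) (P : Finset V) (u : V) (v : V) :
    rowA G P v + 2 ≤
      tv G sign f₀ P u true v (best G sign f₀ P u true v)
      + tv G sign f₀ P u false v (best G sign f₀ P u false v) := by
  have hAB : rowS G sign f₀ P v true + rowS G sign f₀ P v false = rowA G P v :=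
    rowS_add G sign f₀ P v
  rw [tv_best, tv_best]
  unfold tv
  cases hs : sign v u <;> simp [hs] <;>
    (simp only [Nat.max_def]; split <;> split <;> omega)

def fc (f₀ : V → Bool) (P : Finset V) (u : V) (S : Finset V) (c : Bool) : V → Bool :=
  fun x => if x ∈ S then best G sign f₀ P u c x else if x = u then c else f₀ x

lemma fc_out (f₀ : V → Bool) (P : Finset V) (u : V) (S : Finset V) (c : Bool)
    (x : V) (hx : x ∉ insert u S) : fc G sign f₀ P u S c x = f₀ x := by
  unfold fc
  rw [if_neg (fun h => hx (Finset.mem_insert_of_mem h))]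
  rw [if_neg (fun h : x = u => hx (by rw [h]; exact Finset.mem_insert_self u S))]


lemma block_step (hsym : ∀ u v, sign u v = sign v u) (f₀ : V → Bool) (P S : Finset V) (u : V)
    (hu : u ∉ P) (hSP : Disjoint S P) (huS : u ∉ S)
    (hadj : ∀ v ∈ S, G.Adj u v) (hind : ∀ v ∈ S, ∀ w ∈ S, ¬ G.Adj v w) :
    ∃ f₁ : V → Bool, (∀ x, x ∉ insert u S → f₁ x = f₀ x) ∧
      2 * sCnt G sign f₀ P P + aCnt G (P ∪ insert u S) (P ∪ insert u S) + 2 * S.card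
        ≤ 2 * sCnt G sign f₁ (P ∪ insert u S) (P ∪ insert u S) + aCnt G P P := by
  set B := insert u S with hB
  have hPB : Disjoint P B := by
    rw [hB, Finset.disjoint_insert_right]
    exact ⟨hu, hSP.symm⟩
  have huB : Disjoint ({u} : Finset V) S := Finset.disjoint_singleton_left.mpr huS
  have hBsplit : B = {u} ∪ S := by rw [hB, Finset.insert_eq]
  -- satisfied-count identity for each choice c
  have hid : ∀ c : Bool,
      sCnt G sign (fc G sign f₀ P u S c) (P ∪ B) (P ∪ B)
        = sCnt G sign f₀ P P + 2 * rowS G sign f₀ P u c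
          + 2 * ∑ v ∈ S, tv G sign f₀ P u c v (best G sign f₀ P u c v) := by
    intro c
    set f := fc G sign f₀ P u S c with hf
    have hfP : ∀ x ∈ P, f x = f₀ x := by
      intro x hx
      exact fc_out G sign f₀ P u S c x (fun hmem => (Finset.disjoint_left.mp hPB) hx hmem)
    have hfu : f u = c := by
      rw [hf]; unfold fc
      rw [if_neg huS, if_pos rfl]
    have hfS : ∀ v ∈ S, f v = best G sign f₀ P u c v := by
      intro v hv; rw [hf]; unfold fc; rw [if_pos hv]
    rw [sCnt, pCnt_split _ (sw_symm G sign hsym f) hPB]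
    have e1 : pCnt (sw G sign f) P P = sCnt G sign f₀ P P :=
      sCnt_congr G sign f f₀ hfP hfP
    have e2 : pCnt (sw G sign f) B P
        = rowS G sign f₀ P u c + ∑ v ∈ S, rowS G sign f₀ P v (best G sign f₀ P u c v) := by
      rw [hBsplit, pCnt_union_left _ _ huB, pCnt_singleton]
      congr 1
      · unfold rowS
        refine Finset.sum_congr rfl fun q hq => ?_
        unfold sw
        rw [hfu, hfP q hq]
      · unfold pCnt
        refine Finset.sum_congr rfl fun v hv => ?_
        unfold rowS
        refine Finset.sum_congr rfl fun q hq => ?_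
        unfold sw
        rw [hfS v hv, hfP q hq]
    have e3 : pCnt (sw G sign f) B B
        = 2 * ∑ v ∈ S, (if sign v u = (best G sign f₀ P u c v == c) then 1 else 0) := by
      rw [hBsplit, pCnt_union_left _ _ huB, pCnt_union_right _ _ huB,
        pCnt_union_right _ _ huB]
      have z1 : pCnt (sw G sign f) {u} {u} = 0 := by
        rw [pCnt_singleton, Finset.sum_singleton]
        unfold sw
        rw [if_neg (by simp [G.irrefl])]
      have z2 : pCnt (sw G sign f) S S = 0 := by
        unfold pCnt
        refine Finset.sum_eq_zero fun v hv => Finset.sum_eq_zero fun w hw => ?_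
        unfold sw
        rw [if_neg (by exact fun h => hind v hv w hw h.1)]
      have z3 : pCnt (sw G sign f) S {u}
          = ∑ v ∈ S, (if sign v u = (best G sign f₀ P u c v == c) then 1 else 0) := by
        unfold pCnt
        refine Finset.sum_congr rfl fun v hv => ?_
        rw [Finset.sum_singleton]
        unfold sw
        rw [hfS v hv, hfu]
        have hA : G.Adj v u := (hadj v hv).symm
        simp [hA]
      have z4 : pCnt (sw G sign f) {u} S = pCnt (sw G sign f) S {u} := by
        rw [pCnt_comm _ (sw_symm G sign hsym f)]
      rw [z1, z2, z3, z4, z3]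
      ring
    rw [e1, e2, e3]
    have hsplit : ∑ v ∈ S, tv G sign f₀ P u c v (best G sign f₀ P u c v)
        = (∑ v ∈ S, rowS G sign f₀ P v (best G sign f₀ P u c v))
          + ∑ v ∈ S, (if sign v u = (best G sign f₀ P u c v == c) then 1 else 0) := by
      rw [← Finset.sum_add_distrib]
      rfl
    rw [hsplit]
    ring
  have haid : aCnt G (P ∪ B) (P ∪ B)
      = aCnt G P P + 2 * S.card + 2 * (rowA G P u + ∑ v ∈ S, rowA G P v) := by
    rw [aCnt, pCnt_split _ (aw_symm G) hPB]
    have e2 : pCnt (aw G) B P = rowA G P u + ∑ v ∈ S, rowA G P v := by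
      rw [hBsplit, pCnt_union_left _ _ huB, pCnt_singleton]
      rfl
    have e3 : pCnt (aw G) B B = 2 * S.card := by
      rw [hBsplit, pCnt_union_left _ _ huB, pCnt_union_right _ _ huB,
        pCnt_union_right _ _ huB]
      have z1 : pCnt (aw G) {u} {u} = 0 := by
        rw [pCnt_singleton, Finset.sum_singleton]
        unfold aw
        simp [G.irrefl]
      have z2 : pCnt (aw G) S S = 0 := by
        unfold pCnt
        refine Finset.sum_eq_zero fun v hv => Finset.sum_eq_zero fun w hw => ?_
        unfold aw
        rw [if_neg (hind v hv w hw)]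
      have z3 : pCnt (aw G) {u} S = S.card := by
        rw [pCnt_singleton]
        rw [Finset.sum_congr rfl (fun v hv => by unfold aw; rw [if_pos (hadj v hv)])]
        simp
      have z4 : pCnt (aw G) S {u} = S.card := by
        rw [pCnt_comm _ (aw_symm G), z3]
      rw [z1, z2, z3, z4]
      ring
    rw [e2, e3]
    unfold aCnt
    ring
  have hrow : rowS G sign f₀ P u true + rowS G sign f₀ P u false = rowA G P u :=
    rowS_add G sign f₀ P u
  have hvsum : (∑ v ∈ S, rowA G P v) + 2 * S.card ≤
      (∑ v ∈ S, tv G sign f₀ P u true v (best G sign f₀ P u true v))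
      + (∑ v ∈ S, tv G sign f₀ P u false v (best G sign f₀ P u false v)) := by
    have h := Finset.sum_le_sum (s := S) (fun v _ => tv_sum G sign f₀ P u v)
    rw [Finset.sum_add_distrib, Finset.sum_const, smul_eq_mul] at h
    rw [Finset.sum_add_distrib] at h
    omega
  have hfout : ∀ c x, x ∉ insert u S → fc G sign f₀ P u S c x = f₀ x :=
    fun c => fc_out G sign f₀ P u S c
  have ht := hid true
  have hf := hid false
  rcases le_total (sCnt G sign (fc G sign f₀ P u S true) (P ∪ B) (P ∪ B))
      (sCnt G sign (fc G sign f₀ P u S false) (P ∪ B) (P ∪ B)) with hc | hc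
  · exact ⟨fc G sign f₀ P u S false, hfout false, by omega⟩
  · exact ⟨fc G sign f₀ P u S true, hfout true, by omega⟩


def bset (b : V × Finset V) : Finset V := insert b.1 b.2

lemma engine (hsym : ∀ u v, sign u v = sign v u) (bs : List (V × Finset V)) :
    ∀ (P : Finset V) (f₀ : V → Bool),
    (∀ x : V, x ∈ P ∨ ∃ b ∈ bs, x ∈ bset b) →
    (bs.Pairwise (fun b b' => Disjoint (bset b) (bset b'))) →
    (∀ b ∈ bs, Disjoint P (bset b)) →
    (∀ b ∈ bs, (∀ v ∈ b.2, G.Adj b.1 v) ∧ b.1 ∉ b.2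
        ∧ (∀ v ∈ b.2, ∀ w ∈ b.2, ¬ G.Adj v w)) →
    ∃ f : V → Bool, (∀ x ∈ P, f x = f₀ x) ∧
      2 * sCnt G sign f₀ P P + aCnt G Finset.univ Finset.univ
          + (bs.map (fun b => 2 * b.2.card)).sum
        ≤ 2 * sCnt G sign f Finset.univ Finset.univ + aCnt G P P := by
  induction bs with
  | nil =>
    intro P f₀ hcov _ _ _
    have hP : P = Finset.univ := Finset.eq_univ_iff_forall.mpr (fun x => by
      rcases hcov x with h | ⟨b, hb, _⟩
      · exact h
      · simp at hb)
    subst hP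
    exact ⟨f₀, fun _ _ => rfl, by simp⟩
  | cons b rest ih =>
    intro P f₀ hcov hpair hPdis hblk
    have hPd : Disjoint P (bset b) := hPdis b ((List.mem_cons_self (a := b) (l := rest)))
    have hu : b.1 ∉ P := fun h =>
      (Finset.disjoint_left.mp hPd) h (Finset.mem_insert_self _ _)
    have hSP : Disjoint b.2 P := by
      refine Finset.disjoint_left.mpr fun v hv hvP => ?_
      exact (Finset.disjoint_left.mp hPd) hvP (Finset.mem_insert_of_mem hv)
    obtain ⟨hadj, huS, hind⟩ := hblk b ((List.mem_cons_self (a := b) (l := rest)))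
    obtain ⟨f₁, hf₁out, hf₁ineq⟩ :=
      block_step G sign hsym f₀ P b.2 b.1 hu hSP huS hadj hind
    have hheads := (List.pairwise_cons.mp hpair).1
    have hcov' : ∀ x : V, x ∈ P ∪ bset b ∨ ∃ b' ∈ rest, x ∈ bset b' := by
      intro x
      rcases hcov x with h | ⟨b', hb', hx⟩
      · exact Or.inl (Finset.mem_union_left _ h)
      · rcases List.mem_cons.mp hb' with rfl | hb'
        · exact Or.inl (Finset.mem_union_right _ hx)
        · exact Or.inr ⟨b', hb', hx⟩
    have hPdis' : ∀ b' ∈ rest, Disjoint (P ∪ bset b) (bset b') := by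
      intro b' hb'
      rw [Finset.disjoint_union_left]
      exact ⟨hPdis b' (List.mem_cons_of_mem b hb'), hheads b' hb'⟩
    obtain ⟨f, hfP', hfineq⟩ := ih (P ∪ bset b) f₁ hcov'
      (List.Pairwise.of_cons hpair) hPdis'
      (fun b' hb' => hblk b' (List.mem_cons_of_mem b hb'))
    refine ⟨f, ?_, ?_⟩
    · intro x hx
      rw [hfP' x (Finset.mem_union_left _ hx), hf₁out x
        (fun hmem => (Finset.disjoint_left.mp hPd) hx hmem)]
    · have hbs : bset b = insert b.1 b.2 := rfl
      rw [List.map_cons, List.sum_cons]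
      rw [hbs] at hfineq hPdis' hfP'
      omega


def Hg (hsym : ∀ u v, sign u v = sign v u) (f : V → Bool) : SimpleGraph V where
  Adj a b := G.Adj a b ∧ sign a b = (f a == f b)
  symm := by
    constructor
    rintro a b ⟨h1, h2⟩
    exact ⟨h1.symm, by rw [hsym b a, h2, Bool.beq_comm]⟩
  loopless := ⟨fun a h => G.irrefl h.1⟩

lemma degree_row (H : SimpleGraph V) [DecidableRel H.Adj] (a : V) :
    H.degree a = ∑ b : V, if H.Adj a b then 1 else 0 := by
  rw [← Finset.card_filter]
  rw [SimpleGraph.degree, SimpleGraph.neighborFinset]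
  congr 1
  ext b
  simp [Set.mem_toFinset]

lemma ncard_edges (H : SimpleGraph V) [DecidableRel H.Adj] :
    2 * H.edgeSet.ncard = ∑ a : V, ∑ b : V, if H.Adj a b then 1 else 0 := by
  have h1 : H.edgeSet.ncard = H.edgeFinset.card := by
    rw [← SimpleGraph.coe_edgeFinset, Set.ncard_coe_finset]
  rw [h1, ← SimpleGraph.sum_degrees_eq_twice_card_edges]
  exact Finset.sum_congr rfl fun a _ => degree_row H a

lemma sCnt_eq_twice (hsym : ∀ u v, sign u v = sign v u) (f : V → Bool) :
    sCnt G sign f Finset.univ Finset.univ = 2 * (Hg G sign hsym f).edgeSet.ncard := by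
  haveI : DecidableRel (Hg G sign hsym f).Adj := fun a b => instDecidableAnd
  rw [ncard_edges (Hg G sign hsym f)]
  unfold sCnt pCnt sw
  refine Finset.sum_congr rfl fun a _ => Finset.sum_congr rfl fun b _ => ?_
  by_cases h : (Hg G sign hsym f).Adj a b
  · rw [if_pos h]; exact if_pos h
  · rw [if_neg h]; exact if_neg h

lemma aCnt_eq_twice : aCnt G Finset.univ Finset.univ = 2 * G.edgeSet.ncard := by
  rw [ncard_edges G]
  rfl


lemma beta_ge (hsym : ∀ u v, sign u v = sign v u) (f : V → Bool) :
    (Hg G sign hsym f).edgeSet.ncard ≤ beta G sign := by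
  have hmem : (Hg G sign hsym f).edgeSet.ncard ∈
      {m | ∃ H : SimpleGraph V, H ≤ G ∧ IsBalancedSigned H sign ∧ H.edgeSet.ncard = m} :=
    ⟨Hg G sign hsym f, fun a b h => h.1, ⟨f, fun u v h => h.2⟩, rfl⟩
  have hbdd : BddAbove {m | ∃ H : SimpleGraph V, H ≤ G ∧ IsBalancedSigned H sign
      ∧ H.edgeSet.ncard = m} := by
    refine ⟨G.edgeSet.ncard, fun m hm => ?_⟩
    obtain ⟨H, hle, _, rfl⟩ := hm
    exact Set.ncard_le_ncard (SimpleGraph.edgeSet_mono hle) G.edgeSet.toFinite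
  exact le_csSup hbdd hmem

/-- Greedy covering by hubs. -/
lemma cover_aux (Khf Ihf : Finset V) :
    ∀ (n : ℕ) (U : Finset V), U.card ≤ n → U ⊆ Ihf →
    ∃ (L : List (V × Finset V)) (R : Finset V),
      (∀ b ∈ L, b.1 ∈ Khf) ∧
      (∀ b ∈ L, b.2 ⊆ U) ∧
      (∀ b ∈ L, ∀ v ∈ b.2, G.Adj b.1 v) ∧
      (∀ b ∈ L, 2 ≤ b.2.card) ∧
      L.Pairwise (fun b b' => Disjoint b.2 b'.2) ∧
      (∀ b ∈ L, Disjoint b.2 R) ∧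
      (L.map Prod.fst).Nodup ∧
      R ⊆ U ∧
      U.card = R.card + (L.map (fun b => b.2.card)).sum ∧
      (∀ h ∈ Khf, (R.filter (fun v => G.Adj h v)).card ≤ 1) ∧
      (∀ b ∈ L, ∀ x ∈ R, ¬ G.Adj b.1 x) ∧
      (∀ x ∈ U, x ∈ R ∨ ∃ b ∈ L, x ∈ b.2) := by
  intro n
  induction n with
  | zero =>
    intro U hUn hUI
    have hU : U = ∅ := Finset.card_eq_zero.mp (Nat.le_zero.mp hUn)
    subst hU
    refine ⟨[], ∅, ?_, ?_, ?_, ?_, ?_, ?_, ?_, ?_, ?_, ?_, ?_, ?_⟩ <;> simp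
  | succ n ih =>
    intro U hUn hUI
    by_cases hex : ∃ h ∈ Khf, 2 ≤ (U.filter (fun v => G.Adj h v)).card
    · obtain ⟨h, hh, hcard⟩ := hex
      set C := U.filter (fun v => G.Adj h v) with hC
      have hCU : C ⊆ U := Finset.filter_subset _ _
      have hUC : (U \ C).card ≤ n := by
        rw [Finset.card_sdiff_of_subset hCU]
        omega
      obtain ⟨L, R, i1, i2, i3, i4, i5, i6, i7, i8, i9, i10, i11, i12⟩ :=
        ih (U \ C) hUC (fun x hx => hUI (Finset.mem_sdiff.mp hx).1)
      have hdisC : ∀ (T : Finset V), T ⊆ U \ C → Disjoint C T := by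
        intro T hT
        refine Finset.disjoint_left.mpr fun x hxC hxT => ?_
        exact (Finset.mem_sdiff.mp (hT hxT)).2 hxC
      refine ⟨(h, C) :: L, R, ?_, ?_, ?_, ?_, ?_, ?_, ?_, ?_, ?_, ?_, ?_, ?_⟩
      · rintro b hb
        rcases List.mem_cons.mp hb with rfl | hb
        · exact hh
        · exact i1 b hb
      · rintro b hb
        rcases List.mem_cons.mp hb with rfl | hb
        · exact hCU
        · exact fun x hx => (Finset.mem_sdiff.mp (i2 b hb hx)).1
      · rintro b hb
        rcases List.mem_cons.mp hb with rfl | hb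
        · exact fun v hv => (Finset.mem_filter.mp hv).2
        · exact i3 b hb
      · rintro b hb
        rcases List.mem_cons.mp hb with rfl | hb
        · exact hcard
        · exact i4 b hb
      · exact List.pairwise_cons.mpr ⟨fun b hb => hdisC b.2 (i2 b hb), i5⟩
      · rintro b hb
        rcases List.mem_cons.mp hb with rfl | hb
        · exact hdisC R i8
        · exact i6 b hb
      · rw [List.map_cons]
        show (h :: List.map Prod.fst L).Nodup
        refine List.nodup_cons.mpr ⟨?_, i7⟩
        intro hmem
        obtain ⟨b, hb, hb1⟩ := List.mem_map.mp hmem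
        obtain ⟨x, hx⟩ := Finset.card_pos.mp (lt_of_lt_of_le Nat.zero_lt_two (i4 b hb))
        have hxUC := i2 b hb hx
        have hxadj : G.Adj h x := by rw [← hb1]; exact i3 b hb x hx
        have : x ∈ C := Finset.mem_filter.mpr ⟨(Finset.mem_sdiff.mp hxUC).1, hxadj⟩
        exact (Finset.mem_sdiff.mp hxUC).2 this
      · exact fun x hx => (Finset.mem_sdiff.mp (i8 hx)).1
      · have h1 : C.card ≤ U.card := Finset.card_le_card hCU
        rw [List.map_cons, List.sum_cons]
        rw [Finset.card_sdiff_of_subset hCU] at i9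
        have h2 : 2 ≤ C.card := hcard
        show U.card = R.card + (C.card + (List.map (fun b => b.2.card) L).sum)
        omega
      · exact i10
      · rintro b hb x hx
        rcases List.mem_cons.mp hb with rfl | hb
        · intro hadj
          have : x ∈ C := Finset.mem_filter.mpr ⟨(Finset.mem_sdiff.mp (i8 hx)).1, hadj⟩
          exact (Finset.mem_sdiff.mp (i8 hx)).2 this
        · exact i11 b hb x hx
      · intro x hx
        by_cases hxC : x ∈ C
        · exact Or.inr ⟨(h, C), List.mem_cons_self, hxC⟩
        · rcases i12 x (Finset.mem_sdiff.mpr ⟨hx, hxC⟩) with h' | ⟨b, hb, hb2⟩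
          · exact Or.inl h'
          · exact Or.inr ⟨b, List.mem_cons_of_mem _ hb, hb2⟩
    · push_neg at hex
      refine ⟨[], U, by simp, by simp, by simp, by simp, List.Pairwise.nil, by simp,
        by simp, Finset.Subset.refl U, by simp, ?_, by simp, fun x hx => Or.inl hx⟩
      intro h hh
      have := hex h hh
      omega


lemma foldr_union_mem {α : Type*} (f : α → Finset V) :
    ∀ (L : List α), ∀ b ∈ L, ∀ x ∈ f b,
      x ∈ L.foldr (fun b acc => f b ∪ acc) ∅ := by
  intro L
  induction L with
  | nil => simp
  | cons a L ih =>
    intro b hb x hx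
    rcases List.mem_cons.mp hb with rfl | hb
    · exact Finset.mem_union_left _ hx
    · exact Finset.mem_union_right _ (ih b hb x hx)

lemma foldr_union_card {α : Type*} (f : α → Finset V) (g : α → ℕ) :
    ∀ (L : List α), (∀ b ∈ L, (f b).card ≤ g b) →
      (L.foldr (fun b acc => f b ∪ acc) ∅).card ≤ (L.map g).sum := by
  intro L
  induction L with
  | nil => simp
  | cons a L ih =>
    intro hb
    calc ((f a) ∪ L.foldr (fun b acc => f b ∪ acc) ∅).card
        ≤ (f a).card + (L.foldr (fun b acc => f b ∪ acc) ∅).card :=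
          Finset.card_union_le _ _
      _ ≤ g a + (L.map g).sum := by
          have := ih (fun b hbm => hb b (List.mem_cons_of_mem a hbm))
          have := hb a (List.mem_cons_self)
          omega
      _ = ((a :: L).map g).sum := by rw [List.map_cons, List.sum_cons]

lemma sum_map_mul {α : Type*} (g : α → ℕ) (m : ℕ) :
    ∀ (L : List α), (L.map (fun b => g b * m)).sum = (L.map g).sum * m := by
  intro L
  induction L with
  | nil => simp
  | cons a L ih => simp [ih, Nat.add_mul]

lemma sum_ge_two :
    ∀ (L : List (V × Finset V)), (∀ b ∈ L, 2 ≤ b.2.card) →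
      (L.map (fun b => b.2.card)).sum ≤ 2 * (L.map (fun b => b.2.card - 1)).sum := by
  intro L
  induction L with
  | nil => simp
  | cons a L ih =>
    intro hb
    have h1 := hb a (List.mem_cons_self)
    have h2 := ih (fun b hbm => hb b (List.mem_cons_of_mem a hbm))
    simp only [List.map_cons, List.sum_cons]
    omega

lemma cover (Khf Ihf : Finset V) (d k : ℕ) (hd : 1 ≤ d)
    (hIK : ∀ v ∈ Ihf, ∃ h ∈ Khf, G.Adj h v)
    (hK2 : ∀ h ∈ Khf, 2 ≤ (Ihf.filter (fun v => G.Adj h v)).card)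
    (hdeg : ∀ v ∈ Ihf, (Finset.univ.filter (fun x => G.Adj v x)).card ≤ d)
    (hcard : 2 * d * k ≤ Ihf.card) :
    ∃ L : List (V × Finset V),
      (∀ b ∈ L, b.1 ∈ Khf) ∧ (∀ b ∈ L, b.2 ⊆ Ihf) ∧
      (∀ b ∈ L, ∀ v ∈ b.2, G.Adj b.1 v) ∧ (∀ b ∈ L, 2 ≤ b.2.card) ∧
      L.Pairwise (fun b b' => Disjoint b.2 b'.2) ∧ (L.map Prod.fst).Nodup ∧
      k ≤ (L.map (fun b => b.2.card - 1)).sum := by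
  obtain ⟨L, R, i1, i2, i3, i4, i5, i6, i7, i8, i9, i10, i11, i12⟩ :=
    cover_aux G Khf Ihf Ihf.card Ihf le_rfl (Finset.Subset.refl _)
  refine ⟨L, i1, i2, i3, i4, i5, i7, ?_⟩
  set c := (L.map (fun b => b.2.card)).sum with hc
  -- the choice function
  have hchoice : ∀ v ∈ R, ∃ h, h ∈ Khf ∧ G.Adj h v := by
    intro v hv
    obtain ⟨h, hh, hadj⟩ := hIK v (i8 hv)
    exact ⟨h, hh, hadj⟩
  classical
  let φ : V → V := fun v => if hv : ∃ h, h ∈ Khf ∧ G.Adj h v then hv.choose else v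
  have hφ : ∀ v ∈ R, φ v ∈ Khf ∧ G.Adj (φ v) v := by
    intro v hv
    have hex := hchoice v hv
    simp only [φ, dif_pos hex]
    exact hex.choose_spec
  set bigU := L.foldr (fun b acc =>
    (b.2.biUnion (fun w => (Finset.univ.filter (fun x => G.Adj w x)).erase b.1)) ∪ acc) ∅
    with hbigU
  have hinj : Set.InjOn φ R := by
    intro v hv v' hv' heq
    by_contra hne
    have h1 := i10 (φ v) (hφ v hv).1
    have hlt : 1 < (R.filter (fun x => G.Adj (φ v) x)).card := by
      refine Finset.one_lt_card.mpr ⟨v, ?_, v', ?_, hne⟩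
      · exact Finset.mem_filter.mpr ⟨hv, (hφ v hv).2⟩
      · exact Finset.mem_filter.mpr ⟨hv', heq ▸ (hφ v' hv').2⟩
    omega
  have himg : ∀ v ∈ R, φ v ∈ bigU := by
    intro v hv
    obtain ⟨hφK, hφadj⟩ := hφ v hv
    have h2 := hK2 (φ v) hφK
    have h1 := i10 (φ v) hφK
    have hexw : ∃ w ∈ Ihf.filter (fun x => G.Adj (φ v) x), w ∉ R := by
      by_contra hall
      push_neg at hall
      have hsub : Ihf.filter (fun x => G.Adj (φ v) x)
          ⊆ R.filter (fun x => G.Adj (φ v) x) := by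
        intro w hw
        exact Finset.mem_filter.mpr ⟨hall w hw, (Finset.mem_filter.mp hw).2⟩
      have := Finset.card_le_card hsub
      omega
    obtain ⟨w, hw, hwR⟩ := hexw
    obtain ⟨hwI, hwadj⟩ := Finset.mem_filter.mp hw
    rcases i12 w hwI with hwR' | ⟨b, hb, hwb⟩
    · exact absurd hwR' hwR
    · have hne : φ v ≠ b.1 := by
        intro heq
        exact i11 b hb v hv (heq ▸ hφadj)
      have : φ v ∈ (Finset.univ.filter (fun x => G.Adj w x)).erase b.1 :=
        Finset.mem_erase.mpr ⟨hne, Finset.mem_filter.mpr ⟨Finset.mem_univ _, hwadj.symm⟩⟩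
      exact foldr_union_mem _ L b hb (φ v) (Finset.mem_biUnion.mpr ⟨w, hwb, this⟩)
  have hRbigU : R.card ≤ bigU.card := by
    have : R.card = (R.image φ).card := (Finset.card_image_of_injOn hinj).symm
    rw [this]
    refine Finset.card_le_card fun x hx => ?_
    obtain ⟨v, hv, rfl⟩ := Finset.mem_image.mp hx
    exact himg v hv
  have hbigUcard : bigU.card ≤ (L.map (fun b => b.2.card * (d - 1))).sum := by
    refine foldr_union_card _ _ L fun b hb => ?_
    calc (b.2.biUnion (fun w => (Finset.univ.filter (fun x => G.Adj w x)).erase b.1)).card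
        ≤ ∑ w ∈ b.2, ((Finset.univ.filter (fun x => G.Adj w x)).erase b.1).card :=
          Finset.card_biUnion_le
      _ ≤ ∑ w ∈ b.2, (d - 1) := by
          refine Finset.sum_le_sum fun w hw => ?_
          have hwI : w ∈ Ihf := i2 b hb hw
          have hdw := hdeg w hwI
          have hb1 : b.1 ∈ Finset.univ.filter (fun x => G.Adj w x) :=
            Finset.mem_filter.mpr ⟨Finset.mem_univ _, (i3 b hb w hw).symm⟩
          rw [Finset.card_erase_of_mem hb1]
          omega
      _ = b.2.card * (d - 1) := by rw [Finset.sum_const, smul_eq_mul]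
  have hdc : Ihf.card ≤ d * c := by
    have hmul : (L.map (fun b => b.2.card * (d - 1))).sum = c * (d - 1) :=
      sum_map_mul _ _ L
    have h9 : Ihf.card = R.card + c := i9
    have hle : R.card ≤ c * (d - 1) := le_trans hRbigU (hmul ▸ hbigUcard)
    have heq : d * c = c * (d - 1) + c := by
      have hd' : d = (d - 1) + 1 := by omega
      calc d * c = ((d - 1) + 1) * c := by rw [← hd']
        _ = c * (d - 1) + c := by ring
    omega
  have h2kc : 2 * k ≤ c := by
    have : d * (2 * k) ≤ d * c := by
      calc d * (2 * k) = 2 * d * k := by ring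
        _ ≤ Ihf.card := hcard
        _ ≤ d * c := hdc
    exact Nat.le_of_mul_le_mul_left this hd
  have hfinal := sum_ge_two L i4
  omega


def pairup : List V → List (V × Finset V)
  | a :: b :: rest => (a, {b}) :: pairup rest
  | [a] => [(a, (∅ : Finset V))]
  | [] => []

lemma pairup_cover : ∀ (l : List V), ∀ x ∈ l, ∃ b ∈ pairup l, x ∈ insert b.1 b.2 := by
  intro l
  induction l using pairup.induct with
  | case1 a b rest ih =>
    intro x hx
    rw [pairup]
    rcases List.mem_cons.mp hx with rfl | hx
    · exact ⟨(x, {b}), List.mem_cons_self, Finset.mem_insert_self _ _⟩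
    · rcases List.mem_cons.mp hx with rfl | hx
      · exact ⟨(a, {x}), List.mem_cons_self,
          Finset.mem_insert_of_mem (Finset.mem_singleton_self x)⟩
      · obtain ⟨c, hc, hxc⟩ := ih x hx
        exact ⟨c, List.mem_cons_of_mem _ hc, hxc⟩
  | case2 a =>
    intro x hx
    rw [pairup]
    rcases List.mem_singleton.mp hx with rfl
    exact ⟨(x, ∅), List.mem_singleton_self _, Finset.mem_insert_self _ _⟩
  | case3 => intro x hx; simp at hx

lemma pairup_sub : ∀ (l : List V), ∀ b ∈ pairup l, ∀ x ∈ insert b.1 b.2, x ∈ l := by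
  intro l
  induction l using pairup.induct with
  | case1 a b rest ih =>
    intro c hc x hx
    rw [pairup] at hc
    rcases List.mem_cons.mp hc with rfl | hc
    · rcases Finset.mem_insert.mp hx with rfl | hx
      · exact List.mem_cons_self
      · rcases Finset.mem_singleton.mp hx with rfl
        exact List.mem_cons_of_mem _ (List.mem_cons_self)
    · exact List.mem_cons_of_mem _ (List.mem_cons_of_mem _ (ih c hc x hx))
  | case2 a =>
    intro c hc x hx
    rw [pairup] at hc
    rcases List.mem_singleton.mp hc with rfl
    rcases Finset.mem_insert.mp hx with rfl | hx
    · exact List.mem_singleton_self _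
    · simp at hx
  | case3 => intro c hc; rw [pairup] at hc; simp at hc

lemma pairup_pairwise : ∀ (l : List V), l.Nodup →
    (pairup l).Pairwise (fun b b' => Disjoint (insert b.1 b.2) (insert b'.1 b'.2)) := by
  intro l
  induction l using pairup.induct with
  | case1 a b rest ih =>
    intro hnd
    rw [pairup]
    refine List.pairwise_cons.mpr ⟨?_, ih (hnd.of_cons.of_cons)⟩
    intro c hc
    refine Finset.disjoint_left.mpr fun x hx hx' => ?_
    have hxrest : x ∈ rest := pairup_sub rest c hc x hx'
    rcases Finset.mem_insert.mp hx with rfl | hx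
    · exact (List.nodup_cons.mp hnd).1 (List.mem_cons_of_mem _ hxrest)
    · rcases Finset.mem_singleton.mp hx with rfl
      exact (List.nodup_cons.mp hnd.of_cons).1 hxrest
  | case2 a => intro _; rw [pairup]; exact List.pairwise_singleton _ _
  | case3 => intro _; rw [pairup]; exact List.Pairwise.nil

lemma pairup_sum : ∀ (l : List V),
    l.length ≤ 2 * ((pairup l).map (fun b => b.2.card)).sum + 1 := by
  intro l
  induction l using pairup.induct with
  | case1 a b rest ih =>
    rw [pairup]
    simp only [List.map_cons, List.sum_cons, List.length_cons]
    rw [Finset.card_singleton]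
    omega
  | case2 a => simp [pairup]
  | case3 => simp [pairup]

lemma pairup_blocks (Kf : Finset V) (hcl : ∀ x ∈ Kf, ∀ y ∈ Kf, x ≠ y → G.Adj x y) :
    ∀ (l : List V), l.Nodup → (∀ x ∈ l, x ∈ Kf) →
    ∀ b ∈ pairup l, (∀ v ∈ b.2, G.Adj b.1 v) ∧ b.1 ∉ b.2
      ∧ (∀ v ∈ b.2, ∀ w ∈ b.2, ¬ G.Adj v w) := by
  intro l
  induction l using pairup.induct with
  | case1 a b rest ih =>
    intro hnd hmem c hc
    rw [pairup] at hc
    rcases List.mem_cons.mp hc with rfl | hc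
    · have hab : a ≠ b := by
        intro h
        exact (List.nodup_cons.mp hnd).1 (h ▸ (List.mem_cons_self (a := b) (l := rest)))
      refine ⟨?_, ?_, ?_⟩
      · intro v hv
        rcases Finset.mem_singleton.mp hv with rfl
        exact hcl a (hmem a (List.mem_cons_self))
          v (hmem v (List.mem_cons_of_mem _ (List.mem_cons_self))) hab
      · intro h
        exact hab (Finset.mem_singleton.mp h)
      · intro v hv w hw
        rcases Finset.mem_singleton.mp hv with rfl
        rcases Finset.mem_singleton.mp hw with rfl
        exact G.irrefl
    · exact ih hnd.of_cons.of_cons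
        (fun x hx => hmem x (List.mem_cons_of_mem _ (List.mem_cons_of_mem _ hx))) c hc
  | case2 a =>
    intro _ _ c hc
    rw [pairup] at hc
    rcases List.mem_singleton.mp hc with rfl
    exact ⟨fun v hv => by simp at hv, by simp, fun v hv => by simp at hv⟩
  | case3 => intro _ _ c hc; rw [pairup] at hc; simp at hc

lemma list_sum_le_finset_sum (g : V → ℕ) (w : (V × Finset V) → ℕ) :
    ∀ (L : List (V × Finset V)) (T : Finset V), (L.map Prod.fst).Nodup →
      (∀ b ∈ L, b.1 ∈ T) → (∀ b ∈ L, w b ≤ g b.1) →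
      (L.map w).sum ≤ ∑ u ∈ T, g u := by
  intro L
  induction L with
  | nil => intro T _ _ _; simp
  | cons b L ih =>
    intro T hnd hmem hle
    have hb1 : b.1 ∈ T := hmem b (List.mem_cons_self)
    have hsum : g b.1 + ∑ u ∈ T.erase b.1, g u = ∑ u ∈ T, g u :=
      Finset.add_sum_erase T g hb1
    have hih := ih (T.erase b.1)
      (by rw [List.map_cons] at hnd; exact hnd.of_cons)
      (fun c hc => Finset.mem_erase.mpr ⟨by
          intro h
          rw [List.map_cons] at hnd
          exact (List.nodup_cons.mp hnd).1 (h ▸ List.mem_map_of_mem (f := Prod.fst) hc), 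
        hmem c (List.mem_cons_of_mem _ hc)⟩)
      (fun c hc => hle c (List.mem_cons_of_mem _ hc))
    have hbw := hle b (List.mem_cons_self)
    rw [List.map_cons, List.sum_cons]
    omega


lemma sum_map_two {α : Type*} (f : α → ℕ) :
    ∀ (L : List α), (L.map (fun b => 2 * f b)).sum = 2 * (L.map f).sum := by
  intro L
  induction L with
  | nil => simp
  | cons a L ih => simp [ih]; ring


end Stmt2Aux
end

/- STATEMENT 2 -/
open Stmt2Aux in
/-- Let `G` be a connected signed `d*`-split graph with witnessing partition
`(K, I)`. Let `K_h` be the vertices of `K` with at least two neighbors in `I`, and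
`I_h` the vertices of `I` with a neighbor in `K_h`. If `|I_h| ≥ 2dk`, then `G` has a
balanced subgraph with at least `m/2 + (n-1)/4 + k/4` edges. -/
theorem stmt2 {V : Type*} [Fintype V] (G : SimpleGraph V) (sign : V → V → Bool)
    (hsym : ∀ u v, sign u v = sign v u)
    (d k : ℕ) (hd : 1 ≤ d) (hk : 1 ≤ k)
    (hconn : G.Connected)
    (K I : Set V) (hcover : K ∪ I = Set.univ) (hdisj : Disjoint K I)
    (hK : G.IsClique K)
    (hI : ∀ u ∈ I, ∀ v ∈ I, ¬ G.Adj u v)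
    (hKnbr : ∀ v ∈ K, ∃ u ∈ I, G.Adj v u)
    (hIdeg : ∀ v ∈ I, (G.neighborSet v).ncard ≤ d)
    (Kh Ih : Set V)
    (hKh : Kh = {v ∈ K | 2 ≤ (G.neighborSet v ∩ I).ncard})
    (hIh : Ih = {v ∈ I | ∃ u ∈ Kh, G.Adj v u})
    (hIhcard : 2 * d * k ≤ Ih.ncard) :
    (G.edgeSet.ncard : ℚ) / 2 + ((Fintype.card V : ℚ) - 1) / 4 + (k : ℚ) / 4
      ≤ (beta G sign : ℚ) := by
  classical
  have hIhI : Ih ⊆ I := by rw [hIh]; intro v hv; exact hv.1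
  have hKhK : Kh ⊆ K := by rw [hKh]; intro v hv; exact hv.1
  set Kf : Finset V := (Set.toFinite K).toFinset with hKf
  set If : Finset V := (Set.toFinite I).toFinset with hIf
  set Khf : Finset V := (Set.toFinite Kh).toFinset with hKhf
  set Ihf : Finset V := (Set.toFinite Ih).toFinset with hIhf
  have hmKf : ∀ x, x ∈ Kf ↔ x ∈ K := fun x => Set.Finite.mem_toFinset _
  have hmIf : ∀ x, x ∈ If ↔ x ∈ I := fun x => Set.Finite.mem_toFinset _
  have hmKhf : ∀ x, x ∈ Khf ↔ x ∈ Kh := fun x => Set.Finite.mem_toFinset _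
  have hmIhf : ∀ x, x ∈ Ihf ↔ x ∈ Ih := fun x => Set.Finite.mem_toFinset _
  have hKIf : ∀ y, y ∈ Kf → y ∈ If → False := fun y hy hy' =>
    Set.disjoint_left.mp hdisj ((hmKf y).mp hy) ((hmIf y).mp hy')
  have hIhfcard : Ihf.card = Ih.ncard := (Set.ncard_eq_toFinset_card Ih (Set.toFinite Ih)).symm
  have hIh2 : 2 ≤ Ihf.card := by
    rw [hIhfcard]
    calc 2 = 2 * 1 * 1 := by ring
      _ ≤ 2 * d * k := by
          exact Nat.mul_le_mul (Nat.mul_le_mul_left 2 hd) hk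
      _ ≤ Ih.ncard := hIhcard
  -- two distinct vertices
  obtain ⟨x₀, hx₀, y₀, hy₀, hxy₀⟩ := Finset.one_lt_card.mp (by omega : 1 < Ihf.card)
  -- every vertex of If has a neighbor in Kf
  have hIK : ∀ v ∈ If, ∃ u ∈ Kf, G.Adj u v := by
    intro v hv
    have hvI : v ∈ I := (hmIf v).mp hv
    obtain ⟨w, hw⟩ : ∃ w, G.Adj v w := by
      have hu : ∃ u, u ≠ v := by
        by_cases h : x₀ = v
        · exact ⟨y₀, by rw [← h]; exact fun hc => hxy₀ hc.symm⟩
        · exact ⟨x₀, h⟩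
      obtain ⟨u, hu⟩ := hu
      obtain ⟨p⟩ := hconn.preconnected v u
      cases p with
      | nil => exact absurd rfl hu.symm
      | cons h _ => exact ⟨_, h⟩
    have hwK : w ∈ K := by
      have : w ∈ K ∪ I := by rw [hcover]; exact Set.mem_univ w
      rcases this with h | h
      · exact h
      · exact absurd hw (hI v hvI w h)
    exact ⟨w, (hmKf w).mpr hwK, hw.symm⟩
  -- cover hypotheses
  have hIKh : ∀ v ∈ Ihf, ∃ h ∈ Khf, G.Adj h v := by
    intro v hv
    have : v ∈ Ih := (hmIhf v).mp hv
    rw [hIh] at this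
    obtain ⟨_, u, hu, hadj⟩ := this
    exact ⟨u, (hmKhf u).mpr hu, hadj.symm⟩
  have hK2 : ∀ h ∈ Khf, 2 ≤ (Ihf.filter (fun v => G.Adj h v)).card := by
    intro h hh
    have hhKh : h ∈ Kh := (hmKhf h).mp hh
    have h2 : 2 ≤ (G.neighborSet h ∩ I).ncard := by
      rw [hKh] at hhKh; exact hhKh.2
    have hsub : G.neighborSet h ∩ I ⊆ ↑(Ihf.filter (fun v => G.Adj h v)) := by
      intro x hx
      obtain ⟨hx1, hx2⟩ := hx
      have hxIh : x ∈ Ih := by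
        rw [hIh]
        exact ⟨hx2, h, hhKh, hx1.symm⟩
      simp only [Finset.coe_filter, Set.mem_setOf_eq]
      exact ⟨(hmIhf x).mpr hxIh, hx1⟩
    calc 2 ≤ (G.neighborSet h ∩ I).ncard := h2
      _ ≤ (↑(Ihf.filter (fun v => G.Adj h v)) : Set V).ncard :=
          Set.ncard_le_ncard hsub (Finset.finite_toSet _)
      _ = (Ihf.filter (fun v => G.Adj h v)).card := Set.ncard_coe_finset _
  have hdegf : ∀ v ∈ Ihf, (Finset.univ.filter (fun x => G.Adj v x)).card ≤ d := by
    intro v hv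
    have hvI : v ∈ I := hIhI ((hmIhf v).mp hv)
    have := hIdeg v hvI
    have heq : G.neighborSet v = ↑(Finset.univ.filter (fun x => G.Adj v x)) := by
      ext y; simp [SimpleGraph.neighborSet]
    rw [heq, Set.ncard_coe_finset] at this
    exact this
  have hIhfc : 2 * d * k ≤ Ihf.card := by rw [hIhfcard]; exact hIhcard
  obtain ⟨L, c1, c2, c3, c4, c5, c6, c7⟩ :=
    cover G Khf Ihf d k hd hIKh hK2 hdegf hIhfc
  -- the chosen function
  set nbrK : V → V := fun v => if hv : ∃ u, u ∈ Kf ∧ G.Adj u v then hv.choose else v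
    with hnbrKdef
  have hnbrK : ∀ v ∈ If, nbrK v ∈ Kf ∧ G.Adj (nbrK v) v := by
    intro v hv
    obtain ⟨u, hu, ha⟩ := hIK v hv
    have hex : ∃ u, u ∈ Kf ∧ G.Adj u v := ⟨u, hu, ha⟩
    rw [hnbrKdef]
    simp only [dif_pos hex]
    exact hex.choose_spec
  set pmem : V → (V × Finset V) → Bool := fun v b => decide (v ∈ b.2) with hpmem
  have hpmem' : ∀ v b, pmem v b = true ↔ v ∈ b.2 := by
    intro v b
    rw [hpmem]
    simp
  set chosen : V → V := fun v =>
    ((L.find? (pmem v)).map Prod.fst).getD (nbrK v) with hchosendef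
  have hch2 : ∀ b ∈ L, ∀ v ∈ b.2, chosen v = b.1 := by
    intro b hb v hv
    rw [hchosendef]
    simp only []
    cases hfind : L.find? (pmem v) with
    | none =>
      exfalso
      have := List.find?_eq_none.mp hfind b hb
      rw [hpmem' v b] at this
      exact this hv
    | some b' =>
      simp only [Option.map_some, Option.getD_some]
      have hb'L : b' ∈ L := List.mem_of_find?_eq_some hfind
      have hvb' : v ∈ b'.2 := by
        have := List.find?_some hfind
        rwa [hpmem' v b'] at this
      by_cases heq : b = b'
      · rw [heq]
      · exfalso
        have hdisj' : Disjoint b.2 b'.2 :=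
          haveI : Std.Symm (fun b b' : V × Finset V => Disjoint b.2 b'.2) := ⟨fun p q h => h.symm⟩
          List.Pairwise.forall c5 hb hb'L heq
        exact Finset.disjoint_left.mp hdisj' hv hvb'
  have hKhfKf : ∀ x, x ∈ Khf → x ∈ Kf :=
    fun x hx => (hmKf x).mpr (hKhK ((hmKhf x).mp hx))
  have hIhfIf : ∀ x, x ∈ Ihf → x ∈ If :=
    fun x hx => (hmIf x).mpr (hIhI ((hmIhf x).mp hx))
  have hch1 : ∀ v ∈ If, chosen v ∈ Kf ∧ G.Adj (chosen v) v := by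
    intro v hv
    rw [hchosendef]
    simp only []
    cases hfind : L.find? (pmem v) with
    | none =>
      simp only [Option.map_none, Option.getD_none]
      exact hnbrK v hv
    | some b' =>
      simp only [Option.map_some, Option.getD_some]
      have hb'L : b' ∈ L := List.mem_of_find?_eq_some hfind
      have hvb' : v ∈ b'.2 := by
        have := List.find?_some hfind
        rwa [hpmem' v b'] at this
      exact ⟨hKhfKf b'.1 (c1 b' hb'L), c3 b' hb'L v hvb'⟩
  -- blocks
  set S : V → Finset V := fun u => If.filter (fun v => chosen v = u) with hSdef
  set T : Finset V := Kf.filter (fun u => (S u).Nonempty) with hTdef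
  set Emp : Finset V := Kf \ T with hEmpdef
  set bsA : List (V × Finset V) := T.toList.map (fun u => (u, S u)) with hbsAdef
  set bsB : List (V × Finset V) := pairup Emp.toList with hbsBdef
  set bs : List (V × Finset V) := bsA ++ bsB with hbsdef
  have hSIf : ∀ u, S u ⊆ If := fun u => Finset.filter_subset _ _
  have hTKf : T ⊆ Kf := Finset.filter_subset _ _
  have hEmpKf : ∀ x ∈ Emp, x ∈ Kf := fun x hx => (Finset.mem_sdiff.mp hx).1
  have hmemchosen : ∀ v ∈ If, v ∈ S (chosen v) := by
    intro v hv
    rw [hSdef]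
    exact Finset.mem_filter.mpr ⟨hv, rfl⟩
  have hchT : ∀ v ∈ If, chosen v ∈ T := by
    intro v hv
    rw [hTdef]
    exact Finset.mem_filter.mpr ⟨(hch1 v hv).1, ⟨v, hmemchosen v hv⟩⟩
  -- engine hypotheses
  have hcovEng : ∀ x : V, x ∈ (∅ : Finset V) ∨ ∃ b ∈ bs, x ∈ bset b := by
    intro x
    right
    have hx : x ∈ K ∪ I := by rw [hcover]; exact Set.mem_univ x
    rcases hx with hxK | hxI
    · have hxKf : x ∈ Kf := (hmKf x).mpr hxK
      by_cases hxT : x ∈ T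
      · refine ⟨(x, S x), ?_, Finset.mem_insert_self _ _⟩
        rw [hbsdef]
        exact List.mem_append_left _ (List.mem_map_of_mem (Finset.mem_toList.mpr hxT))
      · have hxE : x ∈ Emp := Finset.mem_sdiff.mpr ⟨hxKf, hxT⟩
        obtain ⟨b, hb, hxb⟩ := pairup_cover Emp.toList x (Finset.mem_toList.mpr hxE)
        exact ⟨b, by rw [hbsdef]; exact List.mem_append_right _ hb, hxb⟩
    · have hxIf : x ∈ If := (hmIf x).mpr hxI
      refine ⟨(chosen x, S (chosen x)), ?_, Finset.mem_insert_of_mem (hmemchosen x hxIf)⟩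
      rw [hbsdef]
      exact List.mem_append_left _
        (List.mem_map_of_mem (Finset.mem_toList.mpr (hchT x hxIf)))
  have hbsetA : ∀ u, bset (u, S u) = insert u (S u) := fun u => rfl
  have hdisjblocks : ∀ u u', u ≠ u' → u ∈ Kf → u' ∈ Kf →
      Disjoint (insert u (S u)) (insert u' (S u')) := by
    intro u u' hne hu hu'
    refine Finset.disjoint_left.mpr fun z hz hz' => ?_
    rcases Finset.mem_insert.mp hz with rfl | hzS
    · rcases Finset.mem_insert.mp hz' with heq | hzS'
      · exact hne heq
      · exact hKIf z hu (hSIf u' hzS')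
    · rcases Finset.mem_insert.mp hz' with rfl | hzS'
      · exact hKIf z hu' (hSIf u hzS)
      · have h1 : chosen z = u := (Finset.mem_filter.mp hzS).2
        have h2 : chosen z = u' := (Finset.mem_filter.mp hzS').2
        exact hne (h1 ▸ h2 ▸ rfl)
  have hpairEng : bs.Pairwise (fun b b' => Disjoint (bset b) (bset b')) := by
    rw [hbsdef, List.pairwise_append]
    refine ⟨?_, ?_, ?_⟩
    · rw [hbsAdef, List.pairwise_map]
      have hnd : T.toList.Pairwise (· ≠ ·) := T.nodup_toList
      refine List.Pairwise.imp_of_mem ?_ hnd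
      intro u u' hu hu' hne
      show Disjoint (bset (u, S u)) (bset (u', S u'))
      simp only [bset]
      exact hdisjblocks u u' hne (hTKf (Finset.mem_toList.mp hu))
        (hTKf (Finset.mem_toList.mp hu'))
    · rw [hbsBdef]
      have := pairup_pairwise Emp.toList (Finset.nodup_toList _)
      refine this.imp ?_
      intro b b' h
      simpa only [bset] using h
    · intro a ha b hb
      rw [hbsAdef] at ha
      obtain ⟨u, hu, rfl⟩ := List.mem_map.mp ha
      have huT : u ∈ T := Finset.mem_toList.mp hu
      rw [hbsBdef] at hb
      refine Finset.disjoint_left.mpr fun z hz hz' => ?_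
      simp only [bset] at hz hz'
      have hzE : z ∈ Emp := Finset.mem_toList.mp (pairup_sub Emp.toList b hb z hz')
      obtain ⟨hzKf, hzT⟩ := Finset.mem_sdiff.mp hzE
      rcases Finset.mem_insert.mp hz with rfl | hzS
      · exact hzT huT
      · exact hKIf z hzKf (hSIf u hzS)
  have hPdisEng : ∀ b ∈ bs, Disjoint (∅ : Finset V) (bset b) :=
    fun b _ => Finset.disjoint_empty_left _
  have hblkEng : ∀ b ∈ bs, (∀ v ∈ b.2, G.Adj b.1 v) ∧ b.1 ∉ b.2
      ∧ (∀ v ∈ b.2, ∀ w ∈ b.2, ¬ G.Adj v w) := by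
    intro b hb
    rw [hbsdef] at hb
    rcases List.mem_append.mp hb with hbA | hbB
    · rw [hbsAdef] at hbA
      obtain ⟨u, hu, rfl⟩ := List.mem_map.mp hbA
      have huT : u ∈ T := Finset.mem_toList.mp hu
      refine ⟨?_, ?_, ?_⟩
      · intro v hv
        have hvIf : v ∈ If := hSIf u hv
        have := (hch1 v hvIf).2
        rwa [(Finset.mem_filter.mp hv).2] at this
      · intro h
        exact hKIf u (hTKf huT) (hSIf u h)
      · intro v hv w hw
        exact hI v ((hmIf v).mp (hSIf u hv)) w ((hmIf w).mp (hSIf u hw))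
    · rw [hbsBdef] at hbB
      refine pairup_blocks G Kf ?_ Emp.toList (Finset.nodup_toList _)
        (fun x hx => hEmpKf x (Finset.mem_toList.mp hx)) b hbB
      intro x hx y hy hne
      exact hK ((hmKf x).mp hx) ((hmKf y).mp hy) hne
  -- run the engine
  obtain ⟨f, _, hineq⟩ := engine G sign hsym bs ∅ (fun _ => true)
    hcovEng hpairEng hPdisEng hblkEng
  have hempty0 : sCnt G sign (fun _ => true) (∅ : Finset V) ∅ = 0 := by
    simp [sCnt, pCnt]
  have hempty1 : aCnt G (∅ : Finset V) ∅ = 0 := by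
    simp [aCnt, pCnt]
  -- counting the block sum
  have hSdisj : ∀ u ∈ T, ∀ u' ∈ T, u ≠ u' → Disjoint (S u) (S u') := by
    intro u _ u' _ hne
    refine Finset.disjoint_left.mpr fun z hz hz' => ?_
    exact hne ((Finset.mem_filter.mp hz).2 ▸ (Finset.mem_filter.mp hz').2 ▸ rfl)
  have hbiU : T.biUnion S = If := by
    ext v
    constructor
    · intro hv
      obtain ⟨u, _, hvu⟩ := Finset.mem_biUnion.mp hv
      exact hSIf u hvu
    · intro hv
      exact Finset.mem_biUnion.mpr ⟨chosen v, hchT v hv, hmemchosen v hv⟩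
  have hsumS : ∑ u ∈ T, (S u).card = If.card := by
    rw [← hbiU, Finset.card_biUnion hSdisj]
  have hsumA : (bsA.map (fun b => 2 * b.2.card)).sum = 2 * If.card := by
    rw [hbsAdef, List.map_map]
    have : ((fun b : V × Finset V => 2 * b.2.card) ∘ (fun u => (u, S u)))
        = fun u => 2 * (S u).card := rfl
    rw [this, Finset.sum_map_toList T (fun u => 2 * (S u).card), ← Finset.mul_sum, hsumS]
  have hsumB : Emp.card ≤ 2 * ((bsB.map (fun b => b.2.card)).sum) + 1 := by
    have := pairup_sum Emp.toList
    rwa [Finset.length_toList] at this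
  have hsumB2 : (bsB.map (fun b => 2 * b.2.card)).sum
      = 2 * ((bsB.map (fun b => b.2.card)).sum) := sum_map_two _ _
  -- If.card ≥ T.card + k
  have hIfT : T.card + k ≤ If.card := by
    have hS1 : ∀ u ∈ T, 1 ≤ (S u).card := by
      intro u hu
      obtain ⟨v, hv⟩ := (Finset.mem_filter.mp hu).2
      exact Finset.card_pos.mpr ⟨v, hv⟩
    have hsplit : ∑ u ∈ T, (S u).card = T.card + ∑ u ∈ T, ((S u).card - 1) := by
      rw [Finset.card_eq_sum_ones T, ← Finset.sum_add_distrib]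
      refine Finset.sum_congr rfl fun u hu => ?_
      have := hS1 u hu
      omega
    have hLk : (L.map (fun b => b.2.card - 1)).sum ≤ ∑ u ∈ T, ((S u).card - 1) := by
      refine list_sum_le_finset_sum (fun u => (S u).card - 1) (fun b => b.2.card - 1)
        L T c6 ?_ ?_
      · intro b hb
        obtain ⟨v, hv⟩ := Finset.card_pos.mp (lt_of_lt_of_le Nat.zero_lt_two (c4 b hb))
        have hvIf : v ∈ If := hIhfIf v (c2 b hb hv)
        have hvS : v ∈ S b.1 := by
          rw [hSdef]
          exact Finset.mem_filter.mpr ⟨hvIf, hch2 b hb v hv⟩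
        rw [hTdef]
        exact Finset.mem_filter.mpr ⟨hKhfKf b.1 (c1 b hb), ⟨v, hvS⟩⟩
      · intro b hb
        have hsub : b.2 ⊆ S b.1 := by
          intro v hv
          rw [hSdef]
          exact Finset.mem_filter.mpr ⟨hIhfIf v (c2 b hb hv), hch2 b hb v hv⟩
        have := Finset.card_le_card hsub
        show b.2.card - 1 ≤ (S b.1).card - 1
        omega
    omega
  have hcardV : Fintype.card V = Kf.card + If.card := by
    have huniv : Kf ∪ If = Finset.univ := by
      ext z
      simp only [Finset.mem_union, Finset.mem_univ, iff_true]
      have : z ∈ K ∪ I := by rw [hcover]; exact Set.mem_univ z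
      rcases this with h | h
      · exact Or.inl ((hmKf z).mpr h)
      · exact Or.inr ((hmIf z).mpr h)
    have hdisjf : Disjoint Kf If := Finset.disjoint_left.mpr fun z hz hz' => hKIf z hz hz'
    rw [← Finset.card_univ, ← huniv, Finset.card_union_of_disjoint hdisjf]
  have hKfsplit : Kf.card = T.card + Emp.card := by
    rw [hEmpdef, Finset.card_sdiff_of_subset hTKf]
    have := Finset.card_le_card hTKf
    omega
  have hbssum : (bs.map (fun b => 2 * b.2.card)).sum
      = (bsA.map (fun b => 2 * b.2.card)).sum + (bsB.map (fun b => 2 * b.2.card)).sum := by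
    rw [hbsdef, List.map_append, List.sum_append]
  have hkey : Fintype.card V + k ≤ (bs.map (fun b => 2 * b.2.card)).sum + 1 := by
    rw [hbssum, hsumA, hsumB2]
    omega
  -- final glue
  rw [hempty0, hempty1] at hineq
  have hm : aCnt G (Finset.univ : Finset V) Finset.univ = 2 * G.edgeSet.ncard :=
    aCnt_eq_twice G
  have hs : sCnt G sign f Finset.univ Finset.univ
      = 2 * (Hg G sign hsym f).edgeSet.ncard := sCnt_eq_twice G sign hsym f
  have hbeta : (Hg G sign hsym f).edgeSet.ncard ≤ beta G sign := beta_ge G sign hsym f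
  have hfinal : 2 * G.edgeSet.ncard + Fintype.card V + k ≤ 4 * beta G sign + 1 := by
    rw [hm, hs] at hineq
    omega
  have hn1 : 1 ≤ Fintype.card V := Fintype.card_pos_iff.mpr ⟨x₀⟩
  have hQ : (2 * G.edgeSet.ncard + Fintype.card V + k : ℚ) ≤ 4 * beta G sign + 1 := by
    exact_mod_cast hfinal
  have hQ' : (1 : ℚ) ≤ (Fintype.card V : ℚ) := by exact_mod_cast hn1
  linarith
end
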